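/- arXiv:1706.06405 — 7 statements merged into one kernel-verified Lean document; each statement's English description precedes it below -/
import Mathlib

section
/- For every integer n ≥ 1 and every u ∈ (−1,1), the function f_n is differentiable at u and satisfies the ordinary differential equation (1 − u²)·f_n′(u) − (n+1)·u·f_n(u) = (−1)^n. -/
open Real

/-- For an integer `n ≥ 1`, the function
`f_n(u) = (−1)^n (1−u²)^{−(n+1)/2} ∫_{−1}^{u} (1−s²)^{(n−1)/2} ds`. -/
noncomputable def solidAngleF (n : ℕ) (u : ℝ) : ℝ :=
  (-1) ^ n * (1 - u ^ 2) ^ (-(((n : ℝ) + 1) / 2)) *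
    ∫ s in (-1 : ℝ)..u, (1 - s ^ 2) ^ (((n : ℝ) - 1) / 2)

/-- For every integer `n ≥ 1` and every `u ∈ (−1,1)`, the function `f_n` is differentiable
at `u` and satisfies `(1 − u²)·f_n′(u) − (n+1)·u·f_n(u) = (−1)^n`. -/
theorem solidAngleF_hasDerivAt_and_ode (n : ℕ) (hn : 1 ≤ n) (u : ℝ)
    (hu : u ∈ Set.Ioo (-1 : ℝ) 1) :
    ∃ d : ℝ, HasDerivAt (solidAngleF n) d u ∧
      (1 - u ^ 2) * d - ((n : ℝ) + 1) * u * solidAngleF n u = (-1) ^ n := by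
  obtain ⟨hu1, hu2⟩ := hu
  set p : ℝ := -(((n : ℝ) + 1) / 2) with hp
  set e : ℝ := ((n : ℝ) - 1) / 2 with he
  have he0 : 0 ≤ e := by
    have : (1 : ℝ) ≤ (n : ℝ) := by exact_mod_cast hn
    simp only [he]; linarith
  have hx : 0 < 1 - u ^ 2 := by nlinarith
  set x : ℝ := 1 - u ^ 2 with hxdef
  -- continuity of the integrand
  have hφ : Continuous fun s : ℝ => (1 - s ^ 2) ^ e := by
    apply Continuous.rpow_const (by continuity)
    intro s; right; exact he0
  -- derivative of the integral
  set φ : ℝ → ℝ := fun s : ℝ => (1 - s ^ 2) ^ e with hφdef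
  set I : ℝ := ∫ s in (-1 : ℝ)..u, φ s with hI
  have hIder : HasDerivAt (fun v : ℝ => ∫ s in (-1 : ℝ)..v, φ s) (φ u) u :=
    intervalIntegral.integral_hasDerivAt_right (hφ.intervalIntegrable _ _)
      (hφ.stronglyMeasurableAtFilter _ _) hφ.continuousAt
  -- derivative of the prefactor
  have hinner : HasDerivAt (fun v : ℝ => 1 - v ^ 2) (-(2 * u)) u := by
    have := ((hasDerivAt_pow 2 u).const_sub 1)
    simpa using this
  have hg : HasDerivAt (fun v : ℝ => (1 - v ^ 2) ^ p) ((p * x ^ (p - 1)) * (-(2 * u))) u := by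
    exact (Real.hasDerivAt_rpow_const (Or.inl hx.ne')).comp u hinner
  have hG : HasDerivAt (fun v : ℝ => (-1 : ℝ) ^ n * (1 - v ^ 2) ^ p)
      ((-1 : ℝ) ^ n * ((p * x ^ (p - 1)) * (-(2 * u)))) u := hg.const_mul _
  have hF : HasDerivAt (solidAngleF n)
      ((-1 : ℝ) ^ n * ((p * x ^ (p - 1)) * (-(2 * u))) * I
        + ((-1 : ℝ) ^ n * x ^ p) * φ u) u := by
    have := hG.mul hIder
    exact this.congr_of_eventuallyEq (Filter.Eventually.of_forall fun v => rfl)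
  refine ⟨_, hF, ?_⟩
  have h1 : x * x ^ (p - 1) = x ^ p := by
    rw [mul_comm, ← Real.rpow_add_one hx.ne' (p - 1), sub_add_cancel]
  have h2 : x * (x ^ p * x ^ e) = 1 := by
    rw [← Real.rpow_add hx, mul_comm, ← Real.rpow_add_one hx.ne']
    have : p + e + 1 = 0 := by simp [hp, he]; ring
    rw [this, Real.rpow_zero]
  have hφu : φ u = x ^ e := by simp [hφdef, hxdef]
  have hf : solidAngleF n u = (-1 : ℝ) ^ n * x ^ p * I := by
    simp [solidAngleF, hxdef, hI, hφdef, hp, he]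
  rw [hf, hφu]
  linear_combination ((-1 : ℝ) ^ n * p * (-(2 * u)) * I) * h1 + ((-1 : ℝ) ^ n) * h2
end

section
/- For every real r ≥ 0 the function t ↦ (r cos t − 1)/(1 + r² − 2r cos t) is integrable on [−π, π] (for r = 1 it is defined and equal to −1/2 for all t ≠ 0), and ∫_{−π}^{π} (r cos t − 1)/(1 + r² − 2r cos t) dt equals 0 if r > 1, equals −π if r = 1, and equals −2π if 0 ≤ r < 1. -/
open Real MeasureTheory

/-- For every real `r ≥ 0` the function `t ↦ (r cos t − 1)/(1 + r² − 2r cos t)` is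
integrable on `[−π, π]`, and its integral equals `0` if `r > 1`, `−π` if `r = 1`,
and `−2π` if `0 ≤ r < 1`. -/
theorem integral_circle_kernel (r : ℝ) (hr : 0 ≤ r) :
    IntervalIntegrable (fun t : ℝ => (r * Real.cos t - 1) / (1 + r ^ 2 - 2 * r * Real.cos t))
      volume (-π) π ∧
    (∫ t in (-π)..π, (r * Real.cos t - 1) / (1 + r ^ 2 - 2 * r * Real.cos t)) =
      if 1 < r then 0 else if r = 1 then -π else -2 * π := by
  by_cases hr1 : r = 1
  · -- r = 1 : the integrand equals -1/2 a.e.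
    subst hr1
    have hzero : volume {t : ℝ | Real.cos t = 1} = 0 := by
      have hsub : {t : ℝ | Real.cos t = 1} ⊆ Set.range (fun n : ℤ => (n : ℝ) * (2 * π)) := by
        intro t ht
        rcases (Real.cos_eq_one_iff t).1 ht with ⟨n, hn⟩
        exact ⟨n, hn⟩
      exact measure_mono_null hsub ((Set.countable_range _).measure_zero _)
    have hae : ∀ᵐ t : ℝ, (fun t : ℝ => (-1/2 : ℝ)) t
        = (1 * Real.cos t - 1) / (1 + 1 ^ 2 - 2 * 1 * Real.cos t) := by
      filter_upwards [measure_eq_zero_iff_ae_notMem.mp hzero] with t ht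
      have h1 : Real.cos t ≠ 1 := ht
      have h2 : (1 : ℝ) + 1 ^ 2 - 2 * 1 * Real.cos t ≠ 0 := by
        intro h; apply h1; nlinarith
      rw [eq_div_iff h2]; ring
    have hint : IntervalIntegrable
        (fun t : ℝ => (1 * Real.cos t - 1) / (1 + 1 ^ 2 - 2 * 1 * Real.cos t))
        volume (-π) π :=
      (intervalIntegrable_const (c := (-1/2 : ℝ))).congr_ae (ae_restrict_of_ae hae)
    refine ⟨hint, ?_⟩
    have : (∫ t in (-π)..π, (1 * Real.cos t - 1) / (1 + 1 ^ 2 - 2 * 1 * Real.cos t))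
        = ∫ t in (-π)..π, (-1/2 : ℝ) := by
      refine intervalIntegral.integral_congr_ae ?_
      filter_upwards [hae] with t ht _
      exact ht.symm
    rw [this, intervalIntegral.integral_const]
    have h1 : ¬ (1 : ℝ) < 1 := lt_irrefl 1
    simp only [h1, if_false, if_pos rfl]
    simp
    ring
  · -- r ≠ 1 : denominator is positive everywhere
    have hD : ∀ t : ℝ, 0 < 1 + r ^ 2 - 2 * r * Real.cos t := by
      intro t
      have h1 : Real.cos t ≤ 1 := Real.cos_le_one t
      have h2 : (0:ℝ) < (1 - r) ^ 2 := by
        have : (1:ℝ) - r ≠ 0 := sub_ne_zero.mpr (Ne.symm hr1)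
        positivity
      nlinarith
    have hcont : Continuous
        (fun t : ℝ => (r * Real.cos t - 1) / (1 + r ^ 2 - 2 * r * Real.cos t)) := by
      exact Continuous.div (by continuity) (by continuity) (fun t => (hD t).ne')
    have hint : IntervalIntegrable
        (fun t : ℝ => (r * Real.cos t - 1) / (1 + r ^ 2 - 2 * r * Real.cos t))
        volume (-π) π := hcont.intervalIntegrable _ _
    refine ⟨hint, ?_⟩
    rcases lt_or_gt_of_ne hr1 with hlt | hgt
    · -- r < 1 : antiderivative F t = -t - arctan (r sin t / (1 - r cos t))
      have hpos : ∀ t : ℝ, (0:ℝ) < 1 - r * Real.cos t := by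
        intro t
        have h1 : Real.cos t ≤ 1 := Real.cos_le_one t
        nlinarith
      have hderiv : ∀ t ∈ Set.uIcc (-π) π,
          HasDerivAt (fun t : ℝ => -t - Real.arctan (r * Real.sin t / (1 - r * Real.cos t)))
            ((r * Real.cos t - 1) / (1 + r ^ 2 - 2 * r * Real.cos t)) t := by
        intro t _
        have hne : (1 : ℝ) - r * Real.cos t ≠ 0 := (hpos t).ne'
        have h1 : HasDerivAt (fun t : ℝ => r * Real.sin t / (1 - r * Real.cos t))
            ((r * Real.cos t * (1 - r * Real.cos t) -
              r * Real.sin t * (-(r * -Real.sin t))) / (1 - r * Real.cos t) ^ 2) t := by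
          exact HasDerivAt.div ((Real.hasDerivAt_sin t).const_mul r)
            (((Real.hasDerivAt_cos t).const_mul r).const_sub 1) hne
        have h2 := h1.arctan
        have h3 : HasDerivAt (fun x : ℝ => -x - Real.arctan (r * Real.sin x / (1 - r * Real.cos x))) _ t := (hasDerivAt_id t).neg.sub h2
        convert h3 using 1
        have hs := Real.sin_sq_add_cos_sq t
        have hdne := (hD t).ne'
        have hs2 : Real.sin t ^ 2 = 1 - Real.cos t ^ 2 := by nlinarith [hs]
        have hq : (1 - r * Real.cos t) ^ 2 + (r * Real.sin t) ^ 2 = 1 + r ^ 2 - 2 * r * Real.cos t := by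
          rw [mul_pow, hs2]; ring
        rw [div_pow, one_add_div (pow_ne_zero 2 hne), hq]
        field_simp
        have hd2 : 1 + r ^ 2 - r * Real.cos t * 2 ≠ 0 := by intro h; apply hdne; linarith
        rw [div_eq_iff hd2, sub_mul, div_mul_cancel₀ _ hd2, hs2]; ring
      have := intervalIntegral.integral_eq_sub_of_hasDerivAt hderiv hint
      rw [this]
      have h1 : ¬ (1:ℝ) < r := not_lt.mpr hlt.le
      simp only [h1, if_false, hr1, if_false]
      simp [Real.sin_pi, Real.cos_pi]
      ring
    · -- r > 1 : antiderivative F t = arctan (sin t / (r - cos t))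
      have hpos : ∀ t : ℝ, (0:ℝ) < r - Real.cos t := by
        intro t
        have h1 : Real.cos t ≤ 1 := Real.cos_le_one t
        nlinarith
      have hderiv : ∀ t ∈ Set.uIcc (-π) π,
          HasDerivAt (fun t : ℝ => Real.arctan (Real.sin t / (r - Real.cos t)))
            ((r * Real.cos t - 1) / (1 + r ^ 2 - 2 * r * Real.cos t)) t := by
        intro t _
        have hne : r - Real.cos t ≠ 0 := (hpos t).ne'
        have h1 : HasDerivAt (fun t : ℝ => Real.sin t / (r - Real.cos t))
            ((Real.cos t * (r - Real.cos t) - Real.sin t * (- -Real.sin t))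
              / (r - Real.cos t) ^ 2) t :=
          HasDerivAt.div (Real.hasDerivAt_sin t) ((Real.hasDerivAt_cos t).const_sub r) hne
        have h2 := h1.arctan
        convert h2 using 1
        have hs := Real.sin_sq_add_cos_sq t
        have hdne := (hD t).ne'
        have hs2 : Real.sin t ^ 2 = 1 - Real.cos t ^ 2 := by nlinarith [hs]
        have hq : (r - Real.cos t) ^ 2 + Real.sin t ^ 2 = 1 + r ^ 2 - 2 * r * Real.cos t := by
          rw [hs2]; ring
        rw [div_pow, one_add_div (pow_ne_zero 2 hne), hq]
        field_simp
        rw [hs2]; ring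
      have := intervalIntegral.integral_eq_sub_of_hasDerivAt hderiv hint
      rw [this]
      simp [hgt, Real.sin_pi, Real.cos_pi]
end

section
/- (Separation Theorem) There exists a constant D < 1 such that for every x ∈ ℝ^{n+2} \ M there exist an open neighborhood U ⊆ ℝ^{n+2} of x and a point z ∈ S^{n+1} such that for every x′ ∈ U and every y ∈ M with y ≠ x′ one has ⟨Sec_{x′}(y), z⟩ < D. -/
open Metric

/-- `M ⊆ ℝ^{n+2}` is a smooth embedded `n`-dimensional submanifold (without boundary):
every point of `M` has an open neighborhood `V` and a `C^∞` diffeomorphism of `V` onto an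
open subset of `ℝ^{n+2}` carrying `M ∩ V` onto the intersection of the image with
`ℝⁿ × {0}`. -/
def IsSmoothSubmanifold (n : ℕ) (M : Set (EuclideanSpace ℝ (Fin (n + 2)))) : Prop :=
  ∀ x ∈ M, ∃ (V : Set (EuclideanSpace ℝ (Fin (n + 2))))
    (f g : EuclideanSpace ℝ (Fin (n + 2)) → EuclideanSpace ℝ (Fin (n + 2))),
      IsOpen V ∧ x ∈ V ∧ IsOpen (f '' V) ∧
      ContDiffOn ℝ (⊤ : ℕ∞) f V ∧ ContDiffOn ℝ (⊤ : ℕ∞) g (f '' V) ∧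
      (∀ y ∈ V, g (f y) = y) ∧ (∀ y ∈ f '' V, f (g y) = y) ∧
      f '' (M ∩ V) = (f '' V) ∩ {y | ∀ i : Fin (n + 2), n ≤ (i : ℕ) → y i = 0}

noncomputable section

namespace SepThm

open Set Module
open scoped ENNReal NNReal

/-! ### Elementary facts about normalized vectors -/

variable {E : Type*} [NormedAddCommGroup E] [InnerProductSpace ℝ E]

def sdir (v : E) : E := ‖v‖⁻¹ • v

lemma norm_sdir {v : E} (hv : v ≠ 0) : ‖sdir v‖ = 1 := by
  rw [sdir, norm_smul, norm_inv, norm_norm, inv_mul_cancel₀ (norm_ne_zero_iff.2 hv)]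

lemma sdir_sub_sdir {a b : E} (ha : a ≠ 0) (hb : b ≠ 0) :
    ‖sdir a - sdir b‖ ≤ 2 * ‖a - b‖ / ‖a‖ := by
  have hna : (0:ℝ) < ‖a‖ := norm_pos_iff.2 ha
  have hnb : (0:ℝ) < ‖b‖ := norm_pos_iff.2 hb
  have key : sdir a - sdir b = ‖a‖⁻¹ • (a - b) + (‖a‖⁻¹ - ‖b‖⁻¹) • b := by
    rw [sdir, sdir]; module
  rw [key]
  calc ‖‖a‖⁻¹ • (a - b) + (‖a‖⁻¹ - ‖b‖⁻¹) • b‖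
      ≤ ‖‖a‖⁻¹ • (a - b)‖ + ‖(‖a‖⁻¹ - ‖b‖⁻¹) • b‖ := norm_add_le _ _
    _ = ‖a - b‖ / ‖a‖ + |‖a‖⁻¹ - ‖b‖⁻¹| * ‖b‖ := by
        rw [norm_smul, norm_smul, norm_inv, norm_norm, Real.norm_eq_abs]
        ring
    _ ≤ ‖a - b‖ / ‖a‖ + ‖a - b‖ / ‖a‖ := by
        gcongr
        have this' : ‖a‖⁻¹ - ‖b‖⁻¹ = (‖b‖ - ‖a‖) / (‖a‖ * ‖b‖) := by field_simp
        have h1 : |‖b‖ - ‖a‖| ≤ ‖a - b‖ := by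
          have := abs_norm_sub_norm_le b a
          rwa [norm_sub_rev b a] at this
        have e : |‖a‖⁻¹ - ‖b‖⁻¹| * ‖b‖ = |‖b‖ - ‖a‖| / ‖a‖ := by
          rw [this', abs_div, abs_mul, abs_of_pos hna, abs_of_pos hnb]
          field_simp
        rw [e]
        gcongr
    _ = 2 * ‖a - b‖ / ‖a‖ := by ring

lemma inner_eq_one_sub {w z : E} (hw : ‖w‖ = 1) (hz : ‖z‖ = 1) :
    (inner ℝ w z : ℝ) = 1 - ‖w - z‖ ^ 2 / 2 := by
  have := norm_sub_sq_real w z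
  rw [hw, hz] at this
  nlinarith [this]

lemma inner_le_of_dist_ge {w z : E} (hw : ‖w‖ = 1) (hz : ‖z‖ = 1) {s : ℝ}
    (h : s ≤ ‖w - z‖) (hs : 0 ≤ s) : (inner ℝ w z : ℝ) ≤ 1 - s ^ 2 / 2 := by
  rw [inner_eq_one_sub hw hz]
  nlinarith

/-! ### The cap lemma -/

variable [FiniteDimensional ℝ E]

/-- In a finite-dimensional real inner product space, any set of sufficiently small Hausdorff
dimension misses a unit vector in any spherical cap. -/
lemma exists_unit_near_notMem {S : Set E} {d : ℝ≥0∞} (hSd : dimH S ≤ d)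
    (hd : d + 1 < (finrank ℝ E : ℝ≥0∞)) (w₀ : E) (hw₀ : ‖w₀‖ = 1)
    {ε : ℝ} (hε : 0 < ε) : ∃ w : E, ‖w‖ = 1 ∧ ‖w - w₀‖ < ε ∧ w ∉ S := by
  by_contra hcon
  push_neg at hcon
  have hw₀0 : w₀ ≠ 0 := by intro h; rw [h, norm_zero] at hw₀; norm_num at hw₀
  set W : Submodule ℝ E := (ℝ ∙ w₀)ᗮ with hW
  set δ : ℝ := min (ε/3) (1/2) with hδdef
  have hδ : 0 < δ := lt_min (by positivity) (by norm_num)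
  set φ : W → E := fun v => Real.sqrt (1 - ‖v‖^2) • w₀ + (v : E) with hφ
  have hinner : ∀ v : W, (inner ℝ w₀ (v : E) : ℝ) = 0 := by
    intro v
    have := v.2
    rw [Submodule.mem_orthogonal] at this
    exact this w₀ (Submodule.mem_span_singleton_self w₀)
  have hsq : ∀ v : W, ‖v‖ ≤ 1 → Real.sqrt (1 - ‖v‖^2) ^ 2 = 1 - ‖v‖^2 := by
    intro v hv
    exact Real.sq_sqrt (by nlinarith [norm_nonneg v])
  have hnorm : ∀ v : W, ‖v‖ ≤ 1 → ‖φ v‖ = 1 := by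
    intro v hv
    have h1 : ‖φ v‖^2 = 1 := by
      rw [hφ]
      have := norm_add_sq_real (Real.sqrt (1 - ‖v‖^2) • w₀) (v : E)
      simp only [this, norm_smul, inner_smul_left, hinner, RCLike.conj_to_real]
      rw [Real.norm_eq_abs, abs_of_nonneg (Real.sqrt_nonneg _)]
      have h2 := hsq v hv
      have h3 : ‖(v : E)‖ = ‖v‖ := rfl
      rw [hw₀, h3]
      nlinarith [h2]
    nlinarith [norm_nonneg (φ v)]
  have hclose : ∀ v : W, ‖v‖ ≤ δ → ‖φ v - w₀‖ < ε := by
    intro v hv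
    have hv1 : ‖v‖ ≤ 1/2 := le_trans hv (min_le_right _ _)
    have hv1' : ‖v‖ ≤ 1 := by linarith
    have key : φ v - w₀ = (Real.sqrt (1 - ‖v‖^2) - 1) • w₀ + (v : E) := by
      rw [hφ]; simp; module
    have hs : |Real.sqrt (1 - ‖v‖^2) - 1| ≤ ‖v‖^2 := by
      have h0 : (0:ℝ) ≤ 1 - ‖v‖^2 := by nlinarith [norm_nonneg v]
      have a0 := Real.sqrt_nonneg (1 - ‖v‖^2)
      have a2 := Real.sq_sqrt h0
      have a1 : Real.sqrt (1 - ‖v‖^2) ≤ 1 := by nlinarith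
      rw [abs_of_nonpos (by nlinarith)]
      nlinarith
    calc ‖φ v - w₀‖ = ‖(Real.sqrt (1 - ‖v‖^2) - 1) • w₀ + (v : E)‖ := by rw [key]
      _ ≤ ‖(Real.sqrt (1 - ‖v‖^2) - 1) • w₀‖ + ‖(v : E)‖ := norm_add_le _ _
      _ ≤ ‖v‖^2 + ‖v‖ := by
          rw [norm_smul, hw₀, Real.norm_eq_abs, mul_one]
          exact add_le_add hs le_rfl
      _ ≤ δ + δ := by nlinarith [norm_nonneg v, hv, hδ]
      _ < ε := by
          have h' : δ ≤ ε/3 := min_le_left _ _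
          linarith
  have himg : φ '' closedBall (0 : W) δ ⊆ S := by
    rintro _ ⟨v, hv, rfl⟩
    rw [mem_closedBall, dist_zero_right] at hv
    exact hcon (φ v) (hnorm v (le_trans hv (le_trans (min_le_right _ _) (by norm_num))))
      (hclose v hv)
  set pr := W.orthogonalProjectionOnto with hpr
  have hproj : ∀ v : W, pr (φ v) = v := by
    intro v
    rw [hφ]
    simp only [map_add, map_smul]
    rw [Submodule.orthogonalProjectionOnto_orthogonalComplement_singleton_eq_zero,
      Submodule.orthogonalProjectionOnto_mem_subspace_eq_self]
    simp
  have hball : closedBall (0 : W) δ ⊆ pr '' (φ '' closedBall (0 : W) δ) := by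
    intro v hv
    exact ⟨φ v, mem_image_of_mem φ hv, hproj v⟩
  have hdim1 : dimH (closedBall (0 : W) δ) = (finrank ℝ W : ℝ≥0∞) :=
    Real.dimH_of_mem_nhds (closedBall_mem_nhds 0 hδ)
  have hlip : LipschitzWith ‖pr‖₊ (pr : E → W) := pr.lipschitz
  have hchain : (finrank ℝ W : ℝ≥0∞) ≤ d := by
    calc (finrank ℝ W : ℝ≥0∞) = dimH (closedBall (0 : W) δ) := hdim1.symm
      _ ≤ dimH (pr '' (φ '' closedBall (0 : W) δ)) := dimH_mono hball
      _ ≤ dimH (φ '' closedBall (0 : W) δ) := hlip.dimH_image_le _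
      _ ≤ dimH S := dimH_mono himg
      _ ≤ d := hSd
  have hrank : finrank ℝ (ℝ ∙ w₀) + finrank ℝ W = finrank ℝ E :=
    Submodule.finrank_add_finrank_orthogonal _
  rw [finrank_span_singleton hw₀0] at hrank
  have : (finrank ℝ E : ℝ≥0∞) ≤ d + 1 := by
    rw [← hrank]
    push_cast
    calc (1 : ℝ≥0∞) + finrank ℝ W ≤ 1 + d := by gcongr
      _ = d + 1 := by ring
  exact absurd (lt_of_lt_of_le hd this) (lt_irrefl _)

/-! ### The coordinate plane and its dimension -/

variable {n : ℕ}

abbrev Eu (n : ℕ) := EuclideanSpace ℝ (Fin (n + 2))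

def i₀ (n : ℕ) : Fin (n + 2) := ⟨n, by omega⟩
def i₁ (n : ℕ) : Fin (n + 2) := ⟨n + 1, by omega⟩

def Qsub (n : ℕ) : Submodule ℝ (Eu n) :=
  Submodule.span ℝ {EuclideanSpace.single (i₀ n) (1:ℝ), EuclideanSpace.single (i₁ n) (1:ℝ)}

def Psub (n : ℕ) : Submodule ℝ (Eu n) := (Qsub n)ᗮ

lemma mem_Psub_iff {y : Eu n} :
    y ∈ Psub n ↔ ∀ i : Fin (n + 2), n ≤ (i : ℕ) → y i = 0 := by
  constructor
  · intro hy i hi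
    have h0 := (Submodule.mem_orthogonal _ _).1 hy
    have : (i = i₀ n) ∨ (i = i₁ n) := by
      rcases Nat.lt_or_ge (i : ℕ) (n+1) with h | h
      · left; apply Fin.ext; show (i : ℕ) = n; omega
      · right; apply Fin.ext; show (i : ℕ) = n + 1; have := i.isLt; omega
    rcases this with rfl | rfl
    · have := h0 _ (Submodule.subset_span (Set.mem_insert _ _))
      rwa [EuclideanSpace.inner_single_left, map_one, one_mul] at this
    · have := h0 _ (Submodule.subset_span (Set.mem_insert_of_mem _ rfl))
      rwa [EuclideanSpace.inner_single_left, map_one, one_mul] at this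
  · intro hy
    rw [Psub, Submodule.mem_orthogonal]
    intro u hu
    induction hu using Submodule.span_induction with
    | mem u hu =>
        rcases hu with rfl | rfl
        · rw [EuclideanSpace.inner_single_left, map_one, one_mul]
          exact hy _ (by simp [i₀])
        · rw [EuclideanSpace.inner_single_left, map_one, one_mul]
          exact hy _ (by simp [i₁])
    | zero => simp
    | add u v _ _ h1 h2 => rw [inner_add_left, h1, h2, add_zero]
    | smul c u _ h1 => rw [inner_smul_left, h1, mul_zero]

lemma orthonormal_pair :
    Orthonormal ℝ (![EuclideanSpace.single (i₀ n) (1:ℝ), EuclideanSpace.single (i₁ n) (1:ℝ)]) := by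
  rw [orthonormal_iff_ite]
  intro i j
  have hne : i₀ n ≠ i₁ n := by
    intro h
    have := congrArg Fin.val h
    simp [i₀, i₁] at this
  fin_cases i <;> fin_cases j <;>
    simp [EuclideanSpace.inner_single_left, EuclideanSpace.single_apply, hne, hne.symm,
      Ne.symm hne]

lemma finrank_Qsub : finrank ℝ (Qsub n) = 2 := by
  have hli := (orthonormal_pair (n := n)).linearIndependent
  have hr : Set.range (![EuclideanSpace.single (i₀ n) (1:ℝ),
      EuclideanSpace.single (i₁ n) (1:ℝ)]) =
      {EuclideanSpace.single (i₀ n) (1:ℝ), EuclideanSpace.single (i₁ n) (1:ℝ)} := by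
    simp [Matrix.range_cons, Matrix.range_empty]
    exact Set.pair_comm _ _
  rw [Qsub, ← hr, finrank_span_eq_card hli]
  simp

lemma finrank_Psub : finrank ℝ (Psub n) = n := by
  have h := Submodule.finrank_add_finrank_orthogonal (K := Qsub n)
  rw [finrank_Qsub, finrank_euclideanSpace_fin] at h
  have h2 : finrank ℝ ((Qsub n)ᗮ) = n := by omega
  rw [Psub]
  exact h2

lemma dimH_Psub_le {s : Set (Eu n)} (hs : s ⊆ (Psub n : Set (Eu n))) :
    dimH s ≤ (n : ℝ≥0∞) := by
  have h1 : (Psub n : Set (Eu n)) = Subtype.val '' (univ : Set (Psub n)) := by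
    simp
  calc dimH s ≤ dimH (Psub n : Set (Eu n)) := dimH_mono hs
    _ = dimH (univ : Set (Psub n)) := by
        rw [h1, (isometry_subtype_coe).dimH_image]
    _ = (finrank ℝ (Psub n) : ℝ≥0∞) := Real.dimH_univ_eq_finrank _
    _ = (n : ℝ≥0∞) := by rw [finrank_Psub]

lemma dimH_image_le_contDiffOn {E' F : Type*} [NormedAddCommGroup E'] [NormedSpace ℝ E']
    [NormedAddCommGroup F] [NormedSpace ℝ F] [SecondCountableTopology E']
    {g : E' → F} {U s : Set E'} (hg : ContDiffOn ℝ (⊤ : ℕ∞) g U) (hU : IsOpen U) (hs : s ⊆ U) :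
    dimH (g '' s) ≤ dimH s := by
  apply dimH_image_le_of_locally_lipschitzOn
  intro x hx
  have hca : ContDiffAt ℝ 1 g x :=
    (hg.contDiffAt (hU.mem_nhds (hs hx))).of_le (by exact_mod_cast (le_top : (1:ℕ∞) ≤ ⊤))
  obtain ⟨C, t, ht, hlip⟩ := hca.exists_lipschitzOnWith
  exact ⟨C, t, nhdsWithin_le_nhds ht, hlip⟩

/-! ### Dimension of the manifold -/

variable {M : Set (Eu n)}

lemma dimH_M_le (hcpt : IsCompact M) (hman : IsSmoothSubmanifold n M) :
    dimH M ≤ (n : ℝ≥0∞) := by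
  have hcover : ∀ x ∈ M, ∃ V : Set (Eu n), IsOpen V ∧ x ∈ V ∧
      dimH (M ∩ V) ≤ (n : ℝ≥0∞) := by
    intro x hx
    obtain ⟨V, f, g, hV, hxV, hfV, hf, hg, hgf, hfg, himg⟩ := hman x hx
    refine ⟨V, hV, hxV, ?_⟩
    have hMV : M ∩ V = g '' (f '' V ∩ {y | ∀ i : Fin (n+2), n ≤ (i:ℕ) → y i = 0}) := by
      rw [← himg]
      ext y
      constructor
      · intro hy
        exact ⟨f y, Set.mem_image_of_mem f hy, hgf y hy.2⟩
      · rintro ⟨w, hw, rfl⟩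
        obtain ⟨m, hm, rfl⟩ := hw
        rwa [hgf m hm.2]
    rw [hMV]
    calc dimH (g '' (f '' V ∩ {y | ∀ i : Fin (n+2), n ≤ (i:ℕ) → y i = 0}))
        ≤ dimH (f '' V ∩ {y | ∀ i : Fin (n+2), n ≤ (i:ℕ) → y i = 0}) :=
          dimH_image_le_contDiffOn hg hfV inter_subset_left
      _ ≤ (n : ℝ≥0∞) := dimH_Psub_le (by
          intro y hy
          rw [SetLike.mem_coe, mem_Psub_iff]
          exact hy.2)
  choose! V hVopen hxV hdim using hcover
  obtain ⟨T, hTM, hTfin, hcov⟩ := hcpt.elim_finite_subcover_image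
    (fun x hx => hVopen x hx) (fun x hx => Set.mem_biUnion hx (hxV x hx))
  have hMsub : M ⊆ ⋃ x ∈ T, (M ∩ V x) := by
    intro y hy
    obtain ⟨x, hx, hyx⟩ := Set.mem_iUnion₂.1 (hcov hy)
    exact Set.mem_biUnion hx ⟨hy, hyx⟩
  calc dimH M ≤ dimH (⋃ x ∈ T, (M ∩ V x)) := dimH_mono hMsub
    _ = ⨆ x ∈ T, dimH (M ∩ V x) := dimH_bUnion hTfin.countable _
    _ ≤ (n : ℝ≥0∞) := by
        apply iSup₂_le
        intro x hx
        exact hdim x (hTM hx)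

/-! ### Secant sets -/

lemma dimH_secant_le {A : Set (Eu n)} {q : Eu n} {d : ℝ} (hd : 0 < d)
    (hA : ∀ a ∈ A, d ≤ ‖a - q‖) :
    dimH ((fun y => sdir (y - q)) '' A) ≤ dimH A := by
  have hlip : LipschitzOnWith (2 / d).toNNReal (fun y => sdir (y - q)) A := by
    apply LipschitzOnWith.of_dist_le_mul
    intro a ha b hb
    have had : (0:ℝ) < ‖a - q‖ := lt_of_lt_of_le hd (hA a ha)
    have hbd : (0:ℝ) < ‖b - q‖ := lt_of_lt_of_le hd (hA b hb)
    have h1 := sdir_sub_sdir (a := a - q) (b := b - q)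
      (by intro h; rw [h, norm_zero] at had; linarith)
      (by intro h; rw [h, norm_zero] at hbd; linarith)
    have h2 : (a - q) - (b - q) = a - b := by abel
    rw [h2] at h1
    rw [dist_eq_norm, dist_eq_norm]
    calc ‖sdir (a - q) - sdir (b - q)‖ ≤ 2 * ‖a - b‖ / ‖a - q‖ := h1
      _ ≤ 2 * ‖a - b‖ / d := by gcongr; exact hA a ha
      _ = (2 / d) * ‖a - b‖ := by ring
      _ = ((2 / d).toNNReal : ℝ) * ‖a - b‖ := by
          rw [Real.coe_toNNReal _ (by positivity)]
  exact hlip.dimH_image_le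

lemma cast_lt_rank : ((n : ℝ≥0∞) + 1 : ℝ≥0∞) < (finrank ℝ (Eu n) : ℝ≥0∞) := by
  rw [finrank_euclideanSpace_fin]
  have : ((n : ℝ≥0∞) + 1) = ((n + 1 : ℕ) : ℝ≥0∞) := by push_cast; ring
  rw [this]
  exact_mod_cast Nat.lt_succ_self (n + 1)

/-- There exists a unit vector, in any given cap, avoiding a compact set of secant directions. -/
lemma exists_avoid (hcpt : IsCompact M) (hman : IsSmoothSubmanifold n M)
    {q : Eu n} {d : ℝ} (hd : 0 < d) (w₀ : Eu n) (hw₀ : ‖w₀‖ = 1) {ε : ℝ} (hε : 0 < ε) :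
    ∃ z : Eu n, ‖z‖ = 1 ∧ ‖z - w₀‖ < ε ∧
      z ∉ (fun y => sdir (y - q)) '' (M ∩ {y | d ≤ ‖y - q‖}) := by
  apply exists_unit_near_notMem (d := (n : ℝ≥0∞)) ?_ cast_lt_rank w₀ hw₀ hε
  calc dimH ((fun y => sdir (y - q)) '' (M ∩ {y | d ≤ ‖y - q‖}))
      ≤ dimH (M ∩ {y | d ≤ ‖y - q‖}) := dimH_secant_le hd (fun a ha => ha.2)
    _ ≤ dimH M := dimH_mono inter_subset_left
    _ ≤ (n : ℝ≥0∞) := dimH_M_le hcpt hman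

/-! ### The pointwise (away-from-`M`) estimate -/

lemma pointwise_good (hcpt : IsCompact M) (hne : M.Nonempty)
    (hman : IsSmoothSubmanifold n M) {q : Eu n} (hq : q ∉ M) :
    ∃ ρ : ℝ, 0 < ρ ∧ ∃ D : ℝ, D < 1 ∧ ∃ z : Eu n, ‖z‖ = 1 ∧
      ∀ x' ∈ ball q ρ, ∀ y ∈ M, y ≠ x' → (inner ℝ (sdir (y - x')) z : ℝ) < D := by
  have hMclosed : IsClosed M := hcpt.isClosed
  have hd : 0 < infDist q M := (hMclosed.notMem_iff_infDist_pos hne).1 hq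
  set d : ℝ := infDist q M with hddef
  have hdist : ∀ y ∈ M, d ≤ ‖y - q‖ := by
    intro y hy
    have := infDist_le_dist_of_mem (x := q) hy
    rwa [dist_comm, dist_eq_norm] at this
  have hMeq : M ∩ {y | d ≤ ‖y - q‖} = M := by
    apply inter_eq_left.2
    intro y hy
    exact hdist y hy
  obtain ⟨z, hz1, _, hzK⟩ := exists_avoid hcpt hman hd (EuclideanSpace.single (i₀ n) (1:ℝ))
    (by rw [EuclideanSpace.norm_single]; norm_num) (ε := 1) one_pos
  rw [hMeq] at hzK
  set K := (fun y => sdir (y - q)) '' M with hK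
  have hKne : K.Nonempty := hne.image _
  have hKcl : IsClosed K := by
    apply IsCompact.isClosed
    apply hcpt.image_of_continuousOn
    apply ContinuousOn.fun_smul
    · apply ContinuousOn.inv₀
      · exact (continuous_norm.comp (continuous_sub_right q)).continuousOn
      · intro y hy
        have := hdist y hy
        exact ne_of_gt (lt_of_lt_of_le hd this)
    · exact (continuous_sub_right q).continuousOn
  have hs : 0 < infDist z K := (hKcl.notMem_iff_infDist_pos hKne).1 hzK
  set s : ℝ := infDist z K with hsdef
  refine ⟨min (d/2) (s*d/8), lt_min (half_pos hd) (div_pos (mul_pos hs hd) (by norm_num)),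
    1 - s^2/16, by nlinarith, z, hz1, ?_⟩
  intro x' hx' y hy hyx
  have hbq : d ≤ ‖y - q‖ := hdist y hy
  have hxq : dist x' q < min (d/2) (s*d/8) := by rwa [mem_ball] at hx'
  have hab : ‖(y - x') - (y - q)‖ = dist x' q := by
    rw [dist_eq_norm']
    congr 1
    abel
  have hs2 : s ≤ 2 := by
    obtain ⟨w, hw⟩ := hKne
    have h2 : s ≤ dist z w := infDist_le_dist_of_mem hw
    obtain ⟨y', hy', rfl⟩ := hw
    have : ‖sdir (y' - q)‖ = 1 := norm_sdir (by
      intro h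
      have := hdist y' hy'
      rw [h, norm_zero] at this
      linarith)
    rw [dist_eq_norm] at h2
    calc s ≤ ‖z - sdir (y' - q)‖ := h2
      _ ≤ ‖z‖ + ‖sdir (y' - q)‖ := norm_sub_le _ _
      _ = 2 := by rw [hz1, this]; norm_num
  have hna : d/2 ≤ ‖y - x'‖ := by
    have h1 : ‖y - x'‖ ≥ ‖y - q‖ - ‖(y - x') - (y - q)‖ := by
      have := norm_sub_norm_le (y - x') (y - q)
      linarith [abs_le.1 (abs_norm_sub_norm_le (y - x') (y - q))]
    have h2 : ‖(y - x') - (y - q)‖ < d/2 := lt_of_lt_of_le (hab ▸ hxq) (min_le_left _ _)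
    linarith
  have hane : y - x' ≠ 0 := by
    intro h
    rw [h, norm_zero] at hna
    linarith
  have hbne : y - q ≠ 0 := by
    intro h
    rw [h, norm_zero] at hbq
    linarith
  have hdd := sdir_sub_sdir hane hbne
  have hsd : ‖sdir (y - x') - sdir (y - q)‖ ≤ s/2 := by
    calc ‖sdir (y - x') - sdir (y - q)‖ ≤ 2 * ‖(y - x') - (y - q)‖ / ‖y - x'‖ := hdd
      _ ≤ 2 * (s*d/8) / (d/2) := by
          apply div_le_div₀ (by nlinarith [mul_pos hs hd]) ?_ (by positivity) hna
          gcongr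
          exact le_of_lt (lt_of_lt_of_le (hab ▸ hxq) (min_le_right _ _))
      _ = s/2 := by field_simp; ring
  have hzb : s ≤ ‖sdir (y - q) - z‖ := by
    have : sdir (y - q) ∈ K := mem_image_of_mem _ hy
    have h2 := infDist_le_dist_of_mem (x := z) this
    rwa [dist_eq_norm, norm_sub_rev] at h2
  have hfinal : s/2 ≤ ‖sdir (y - x') - z‖ := by
    have h1 : ‖sdir (y - q) - z‖ ≤ ‖sdir (y - q) - sdir (y - x')‖ + ‖sdir (y - x') - z‖ :=
      norm_sub_le_norm_sub_add_norm_sub _ _ _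
    have h1' : ‖sdir (y - q) - sdir (y - x')‖ = ‖sdir (y - x') - sdir (y - q)‖ :=
      norm_sub_rev _ _
    linarith
  have := inner_le_of_dist_ge (norm_sdir hane) hz1 hfinal (by positivity)
  calc (inner ℝ (sdir (y - x')) z : ℝ) ≤ 1 - (s/2)^2/2 := this
    _ = 1 - s^2/8 := by ring
    _ < 1 - s^2/16 := by nlinarith

set_option maxHeartbeats 2000000 in
lemma near_good (hcpt : IsCompact M) (hman : IsSmoothSubmanifold n M)
    {p : Eu n} (hp : p ∈ M) :
    ∃ ρ : ℝ, 0 < ρ ∧ ∃ D : ℝ, D < 1 ∧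
      ∀ x, x ∈ ball p ρ → x ∉ M →
        ∃ U : Set (Eu n), IsOpen U ∧ x ∈ U ∧ ∃ z : Eu n, ‖z‖ = 1 ∧
          ∀ x' ∈ U, ∀ y ∈ M, y ≠ x' → (inner ℝ (sdir (y - x')) z : ℝ) < D := by
  classical
  obtain ⟨V, f, g, hV, hpV, hfV, hf, hg, hgf, hfg, himg⟩ := hman p hp
  have hone : (1 : WithTop ℕ∞) ≤ ((⊤ : ℕ∞) : WithTop ℕ∞) := by
    exact_mod_cast (le_top : (1:ℕ∞) ≤ ⊤)
  set c₀ : Eu n := f p with hc₀def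
  have hc₀ : c₀ ∈ f '' V := Set.mem_image_of_mem f hpV
  have hgdiff : ∀ ζ ∈ f '' V, DifferentiableAt ℝ g ζ := fun ζ hζ =>
    (hg.contDiffAt (hfV.mem_nhds hζ)).differentiableAt (by simp)
  have hfdiff : ∀ w ∈ V, DifferentiableAt ℝ f w := fun w hw =>
    (hf.contDiffAt (hV.mem_nhds hw)).differentiableAt (by simp)
  set A : Eu n →L[ℝ] Eu n := fderiv ℝ g c₀ with hAdef
  set B : Eu n →L[ℝ] Eu n := fderiv ℝ f p with hBdef
  have hgp : g c₀ = p := hgf p hpV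
  -- chain rule identities
  have hBAid : B.comp A = ContinuousLinearMap.id ℝ (Eu n) := by
    have hfgid : (f ∘ g) =ᶠ[nhds c₀] id := by
      filter_upwards [hfV.mem_nhds hc₀] with w hw
      exact hfg w (by exact hw)
    have h1 : fderiv ℝ (f ∘ g) c₀ = ContinuousLinearMap.id ℝ (Eu n) := by
      rw [hfgid.fderiv_eq, fderiv_id]
    rw [← h1, fderiv_comp c₀ (by rw [hgp]; exact hfdiff p hpV) (hgdiff c₀ hc₀), hgp]
  -- adjoints
  set A' : Eu n →L[ℝ] Eu n := ContinuousLinearMap.adjoint A with hA'def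
  set B' : Eu n →L[ℝ] Eu n := ContinuousLinearMap.adjoint B with hB'def
  have hadj : ∀ v : Eu n, A' (B' v) = v := by
    intro v
    have h3 := congrArg ContinuousLinearMap.adjoint hBAid
    rw [ContinuousLinearMap.adjoint_comp, ContinuousLinearMap.adjoint_id] at h3
    have h4 := congrArg (fun (T : Eu n →L[ℝ] Eu n) => T v) h3
    simpa using h4
  -- Lipschitz bound for f near p
  obtain ⟨ρ₀, hρ₀pos, hρ₀sub⟩ : ∃ ρ₀, 0 < ρ₀ ∧ closedBall p ρ₀ ⊆ V := by
    obtain ⟨r, hr, hsub⟩ := Metric.isOpen_iff.1 hV p hpV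
    exact ⟨r/2, by linarith, (closedBall_subset_ball (by linarith)).trans hsub⟩
  have hfc : ContinuousOn (fderiv ℝ f) V :=
    hf.continuousOn_fderiv_of_isOpen hV (by exact_mod_cast (le_top : (1:ℕ∞) ≤ ⊤))
  obtain ⟨Cf, hCf⟩ := (isCompact_closedBall p ρ₀).exists_bound_of_continuousOn
    (hfc.mono hρ₀sub)
  set Lf : ℝ := max Cf 1 with hLfdef
  have hLf1 : (1:ℝ) ≤ Lf := le_max_right _ _
  have hLfpos : (0:ℝ) < Lf := lt_of_lt_of_le one_pos hLf1
  have hflip : ∀ a ∈ closedBall p ρ₀, ∀ b ∈ closedBall p ρ₀, ‖f b - f a‖ ≤ Lf * ‖b - a‖ := by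
    intro a ha b hb
    exact (convex_closedBall p ρ₀).norm_image_sub_le_of_norm_hasFDerivWithin_le
      (fun w hw => ((hfdiff w (hρ₀sub hw)).hasFDerivAt).hasFDerivWithinAt)
      (fun w hw => le_trans (hCf w hw) (le_max_left _ _)) ha hb
  -- the two smallness constants
  set η : ℝ := 1 / (4 * (‖A'‖ + 1) * Lf) with hηdef
  have hηpos : 0 < η := by
    apply div_pos one_pos
    have := norm_nonneg A'
    nlinarith
  set ε₁ : ℝ := 1 / (4 * Lf) with hε₁def
  have hε₁pos : 0 < ε₁ := by positivity
  -- Taylor radius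
  have hgc : ContinuousOn (fderiv ℝ g) (f '' V) :=
    hg.continuousOn_fderiv_of_isOpen hfV (by exact_mod_cast (le_top : (1:ℕ∞) ≤ ⊤))
  have hgat : ContinuousAt (fderiv ℝ g) c₀ := hgc.continuousAt (hfV.mem_nhds hc₀)
  obtain ⟨δ₁, hδ₁, hδ₁prop⟩ := Metric.continuousAt_iff.1 hgat ε₁ hε₁pos
  obtain ⟨δ₂, hδ₂, hδ₂sub⟩ := Metric.isOpen_iff.1 hfV c₀ hc₀
  set r₃ : ℝ := min δ₁ δ₂ with hr₃def
  have hr₃pos : 0 < r₃ := lt_min hδ₁ hδ₂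
  have hball₃V : ball c₀ r₃ ⊆ f '' V :=
    (ball_subset_ball (min_le_right _ _)).trans hδ₂sub
  have hball₃d : ∀ ζ ∈ ball c₀ r₃, ‖fderiv ℝ g ζ - A‖ ≤ ε₁ := by
    intro ζ hζ
    have h1 : dist ζ c₀ < δ₁ := lt_of_lt_of_le hζ (min_le_left _ _)
    have h2 := hδ₁prop h1
    rw [dist_eq_norm] at h2
    exact le_of_lt h2
  have hTaylor : ∀ ξ ∈ ball c₀ r₃, ∀ q ∈ ball c₀ r₃,
      ‖g q - g ξ - A (q - ξ)‖ ≤ ε₁ * ‖q - ξ‖ := by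
    intro ξ hξ q hq
    exact (convex_ball c₀ r₃).norm_image_sub_le_of_norm_hasFDerivWithin_le'
      (fun w hw => ((hgdiff w (hball₃V hw)).hasFDerivAt).hasFDerivWithinAt)
      (fun w hw => hball₃d w hw) hξ hq
  -- inner ℝ radius r₂
  have hfp : ContinuousAt f p := hf.continuousOn.continuousAt (hV.mem_nhds hpV)
  obtain ⟨δ₃, hδ₃, hδ₃prop⟩ := Metric.continuousAt_iff.1 hfp r₃ hr₃pos
  set r₂ : ℝ := min (ρ₀/3) (δ₃/4) with hr₂def
  have hr₂pos : 0 < r₂ := lt_min (by linarith) (by linarith)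
  have hcbρ₀ : closedBall p (3*r₂) ⊆ closedBall p ρ₀ := by
    apply closedBall_subset_closedBall
    have := min_le_left (ρ₀/3) (δ₃/4)
    have h2 : r₂ ≤ ρ₀/3 := this
    linarith
  have hcbV : closedBall p (3*r₂) ⊆ V := hcbρ₀.trans hρ₀sub
  have hfcb : ∀ w ∈ closedBall p (3*r₂), f w ∈ ball c₀ r₃ := by
    intro w hw
    rw [mem_closedBall] at hw
    have h2 : r₂ ≤ δ₃/4 := min_le_right _ _
    have h3 : dist w p < δ₃ := by linarith
    have := hδ₃prop h3
    rwa [mem_ball]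
  -- the far secant set
  set K₀ : Set (Eu n) := (fun y => sdir (y - p)) '' (M ∩ {y | r₂ ≤ ‖y - p‖}) with hK₀def
  have hK₀cl : IsClosed K₀ := by
    apply IsCompact.isClosed
    apply IsCompact.image_of_continuousOn
    · exact hcpt.inter_right (isClosed_le continuous_const (continuous_norm.comp
        (continuous_sub_right p)))
    · apply ContinuousOn.fun_smul
      · apply ContinuousOn.inv₀
        · exact (continuous_norm.comp (continuous_sub_right p)).continuousOn
        · intro y hy
          have : r₂ ≤ ‖y - p‖ := hy.2
          exact ne_of_gt (lt_of_lt_of_le hr₂pos this)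
      · exact (continuous_sub_right p).continuousOn
  have hK₀norm : ∀ u ∈ K₀, ‖u‖ = 1 := by
    rintro _ ⟨y, hy, rfl⟩
    apply norm_sdir
    intro h
    have := hy.2
    rw [Set.mem_setOf_eq, h, norm_zero] at this
    linarith
  -- the circle of normal directions
  set C : Set (Eu n) := {ν : Eu n | ν ∈ (Psub n)ᗮ ∧ ‖ν‖ = 1} with hCdef
  have hCeq : C = (((Psub n)ᗮ : Submodule ℝ (Eu n)) : Set (Eu n)) ∩ sphere (0 : Eu n) 1 := by
    ext ν
    simp only [hCdef, Set.mem_setOf_eq, Set.mem_inter_iff, SetLike.mem_coe,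
      mem_sphere_iff_norm, sub_zero]
  have hCcpt : IsCompact C := by
    rw [hCeq]
    exact (isCompact_sphere (0 : Eu n) 1).of_isClosed_subset
      ((Submodule.closed_of_finiteDimensional _).inter isClosed_sphere)
      Set.inter_subset_right
  -- a finite 1/4-net of normal directions
  obtain ⟨T, hTC, hTfin, hTcov⟩ := hCcpt.elim_finite_subcover_image
    (fun ν _ => isOpen_ball (x := ν) (ε := (4:ℝ)⁻¹))
    (fun ν hν => Set.mem_biUnion hν (mem_ball_self (by norm_num)))
  -- construction of a good direction for each normal direction
  have hper : ∀ ν ∈ C, ∃ z : Eu n, ∃ s : ℝ, ‖z‖ = 1 ∧ 0 < s ∧ s ≤ 1 ∧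
      (∀ u ∈ K₀, s ≤ ‖z - u‖) ∧
      ‖(↑((Psub n).orthogonalProjectionOnto (A' z)) : Eu n)‖ < η * ‖A' z‖ ∧
      ‖A' z‖ / 2 < (inner ℝ (A' z) ν : ℝ) := by
    intro ν hν
    set O : Set (Eu n) := {ζ : Eu n |
      ‖(↑((Psub n).orthogonalProjectionOnto ζ) : Eu n)‖ < η * ‖ζ‖ ∧ ‖ζ‖/2 < (inner ℝ ζ ν : ℝ)}
      with hOdef
    have hOopen : IsOpen O := by
      rw [hOdef, Set.setOf_and]
      apply IsOpen.inter
      · apply isOpen_lt (f := fun ζ : Eu n => ‖(↑((Psub n).orthogonalProjectionOnto ζ) : Eu n)‖)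
          (g := fun ζ : Eu n => η * ‖ζ‖)
        · exact continuous_norm.comp
            (continuous_subtype_val.comp ((Psub n).orthogonalProjectionOnto).continuous)
        · exact continuous_const.mul continuous_norm
      · apply isOpen_lt (f := fun ζ : Eu n => ‖ζ‖/2)
          (g := fun ζ : Eu n => (inner ℝ ζ ν : ℝ))
        · exact continuous_norm.div_const 2
        · exact continuous_id.inner continuous_const
    set z₀ : Eu n := B' ν with hz₀def
    have hz₀A : A' z₀ = ν := hadj ν
    have hν0 : ν ≠ 0 := by
      intro h
      have := hν.2
      rw [h, norm_zero] at this
      norm_num at this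
    have hz₀mem : z₀ ∈ A' ⁻¹' O := by
      rw [Set.mem_preimage, hz₀A, hOdef, Set.mem_setOf_eq]
      constructor
      · have h1 : (Psub n).orthogonalProjectionOnto ν = 0 :=
          Submodule.orthogonalProjectionOnto_eq_zero_iff.2 hν.1
        rw [h1, hν.2]
        simp only [ZeroMemClass.coe_zero, norm_zero, mul_one]
        exact hηpos
      · rw [hν.2, real_inner_self_eq_norm_sq, hν.2]
        norm_num
    have hz₀0 : z₀ ≠ 0 := by
      intro h
      apply hν0
      rw [← hz₀A, h, map_zero]
    have hz₀n : (0:ℝ) < ‖z₀‖ := norm_pos_iff.2 hz₀0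
    obtain ⟨δz, hδz, hδzsub⟩ := Metric.isOpen_iff.1 (hOopen.preimage A'.continuous) z₀ hz₀mem
    -- find a unit vector near sdir z₀ avoiding the far secant set
    obtain ⟨z, hz1, hznear, hznot⟩ := exists_avoid hcpt hman (q := p) hr₂pos (sdir z₀)
      (norm_sdir hz₀0) (ε := δz / ‖z₀‖) (div_pos hδz hz₀n)
    have hscaled : ‖z₀‖ • z ∈ A' ⁻¹' O := by
      apply hδzsub
      rw [mem_ball]
      have hrw : ‖z₀‖ • z - z₀ = ‖z₀‖ • (z - sdir z₀) := by
        rw [smul_sub, sdir, smul_smul, mul_inv_cancel₀ (ne_of_gt hz₀n), one_smul]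
      rw [dist_eq_norm, hrw, norm_smul, Real.norm_eq_abs, abs_of_pos hz₀n]
      calc ‖z₀‖ * ‖z - sdir z₀‖ < ‖z₀‖ * (δz / ‖z₀‖) := by
            apply mul_lt_mul_of_pos_left hznear hz₀n
        _ = δz := by field_simp
    -- rescale the membership
    have hzO : A' z ∈ O := by
      rw [Set.mem_preimage, map_smul] at hscaled
      obtain ⟨hs1, hs2⟩ := hscaled
      constructor
      · have e1 : ((↑((Psub n).orthogonalProjectionOnto (‖z₀‖ • A' z)) : Eu n)) =
            ‖z₀‖ • (↑((Psub n).orthogonalProjectionOnto (A' z)) : Eu n) := by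
          rw [map_smul]
          rfl
        rw [e1, norm_smul, norm_smul, Real.norm_eq_abs, abs_of_pos hz₀n] at hs1
        by_contra hcon2
        push_neg at hcon2
        have h3 := mul_le_mul_of_nonneg_left hcon2 (le_of_lt hz₀n)
        ring_nf at hs1 h3
        linarith
      · rw [norm_smul, Real.norm_eq_abs, abs_of_pos hz₀n, real_inner_smul_left] at hs2
        by_contra hcon2
        push_neg at hcon2
        have h3 := mul_le_mul_of_nonneg_left hcon2 (le_of_lt hz₀n)
        ring_nf at hs2 h3
        linarith
    -- distance to the far secant set
    rcases Set.eq_empty_or_nonempty K₀ with hK₀e | hK₀ne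
    · refine ⟨z, 1, hz1, one_pos, le_refl 1, ?_, hzO.1, hzO.2⟩
      intro u hu
      rw [hK₀e] at hu
      exact absurd hu (Set.notMem_empty u)
    · have hsK : 0 < infDist z K₀ := (hK₀cl.notMem_iff_infDist_pos hK₀ne).1 hznot
      refine ⟨z, min 1 (infDist z K₀), hz1, lt_min one_pos hsK, min_le_left _ _, ?_, hzO.1, hzO.2⟩
      intro u hu
      have h2 := infDist_le_dist_of_mem (x := z) hu
      rw [dist_eq_norm] at h2
      exact le_trans (min_le_right _ _) h2
  -- choose data for each direction in the net
  choose! zfun sfun hzfun1 hsfun_pos hsfun_le hsfun_dist hOc1 hOc2 using hper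
  -- finite minimum radius and maximum bound
  set T' : Finset (Eu n) := hTfin.toFinset with hT'def
  have hT'C : ∀ ν ∈ T', ν ∈ C := fun ν hν => hTC (hTfin.mem_toFinset.1 hν)
  set Fs : Finset ℝ := insert r₂ (T'.image (fun ν => sfun ν * r₂ / 8)) with hFsdef
  have hFsne : Fs.Nonempty := ⟨r₂, Finset.mem_insert_self _ _⟩
  set ρ : ℝ := Fs.min' hFsne with hρdef
  have hρpos : 0 < ρ := by
    rw [hρdef, Finset.lt_min'_iff]
    intro b hb
    rw [hFsdef, Finset.mem_insert] at hb
    rcases hb with rfl | hb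
    · exact hr₂pos
    · obtain ⟨ν, hν, rfl⟩ := Finset.mem_image.1 hb
      have := hsfun_pos ν (hT'C ν hν)
      positivity
  have hρler₂ : ρ ≤ r₂ := Finset.min'_le _ _ (Finset.mem_insert_self _ _)
  set Ds : Finset ℝ := insert (3/4 : ℝ) (T'.image (fun ν => 1 - (sfun ν)^2/16)) with hDsdef
  have hDsne : Ds.Nonempty := ⟨3/4, Finset.mem_insert_self _ _⟩
  set D : ℝ := Ds.max' hDsne with hDdef
  have hD1 : D < 1 := by
    rw [hDdef, Finset.max'_lt_iff]
    intro b hb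
    rw [hDsdef, Finset.mem_insert] at hb
    rcases hb with rfl | hb
    · norm_num
    · obtain ⟨ν, hν, rfl⟩ := Finset.mem_image.1 hb
      have := hsfun_pos ν (hT'C ν hν)
      nlinarith
  have hD34 : (3/4 : ℝ) ≤ D := Finset.le_max' _ _ (Finset.mem_insert_self _ _)
  refine ⟨ρ, hρpos, D, hD1, ?_⟩
  intro x hxball hxM
  have hxcb : x ∈ closedBall p (3*r₂) := by
    rw [mem_closedBall]
    rw [mem_ball] at hxball
    have := hρler₂
    linarith [le_of_lt hxball]
  have hxV : x ∈ V := hcbV hxcb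
  set ξ : Eu n := f x with hξdef
  have hξball : ξ ∈ ball c₀ r₃ := hfcb x hxcb
  have hξfV : ξ ∈ f '' V := Set.mem_image_of_mem f hxV
  have hξP : ξ ∉ Psub n := by
    intro h
    have h1 : ξ ∈ (f '' V) ∩ {y | ∀ i : Fin (n + 2), n ≤ (i : ℕ) → y i = 0} :=
      ⟨hξfV, fun i hi => mem_Psub_iff.1 h i hi⟩
    rw [← himg] at h1
    obtain ⟨m, hm, hfm⟩ := h1
    have h2 : g (f m) = m := hgf m hm.2
    have h3 : g (f x) = x := hgf x hxV
    rw [hfm] at h2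
    rw [← hξdef] at h3
    exact hxM ((h3.symm.trans h2) ▸ hm.1)
  set ξN : Eu n := ξ - ↑((Psub n).orthogonalProjectionOnto ξ) with hξNdef
  have hξNmem : ξN ∈ (Psub n)ᗮ := Submodule.sub_starProjection_mem_orthogonal ξ
  have hξN0 : ξN ≠ 0 := by
    intro h
    apply hξP
    have : ξ = ↑((Psub n).orthogonalProjectionOnto ξ) := by
      rw [hξNdef] at h
      have := sub_eq_zero.1 h
      exact this
    rw [this]
    exact SetLike.coe_mem _
  set ν' : Eu n := sdir ξN with hν'def
  have hν'C : ν' ∈ C := ⟨by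
      rw [hν'def, sdir]
      exact Submodule.smul_mem _ _ hξNmem, norm_sdir hξN0⟩
  obtain ⟨ν, hνT, hν'ball⟩ := Set.mem_iUnion₂.1 (hTcov hν'C)
  have hνT' : ν ∈ T' := hTfin.mem_toFinset.2 hνT
  have hνC : ν ∈ C := hTC hνT
  set z : Eu n := zfun ν with hzdef
  set s : ℝ := sfun ν with hsdef2
  have hz1 : ‖z‖ = 1 := hzfun1 ν hνC
  have hspos : 0 < s := hsfun_pos ν hνC
  have hsle1 : s ≤ 1 := hsfun_le ν hνC
  have hsdist : ∀ u ∈ K₀, s ≤ ‖z - u‖ := hsfun_dist ν hνC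
  have hρs : ρ ≤ s * r₂ / 8 := Finset.min'_le _ _
    (Finset.mem_insert_of_mem (Finset.mem_image_of_mem _ hνT'))
  have hDν : 1 - s^2/16 ≤ D := by
    have hmem : 1 - s^2/16 ∈ Ds := by
      rw [hDsdef]
      exact Finset.mem_insert_of_mem (Finset.mem_image_of_mem _ hνT')
    exact Finset.le_max' Ds _ hmem
  -- continuity of the normal direction map at x
  set Fdir : Eu n → Eu n :=
    fun w => sdir ((f w) - ↑((Psub n).orthogonalProjectionOnto (f w))) with hFdirdef
  have hFx : Fdir x = ν' := rfl
  have hFcont : ContinuousAt Fdir x := by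
    have hfx : ContinuousAt f x := hf.continuousOn.continuousAt (hV.mem_nhds hxV)
    have hG : ContinuousAt (fun w => (f w) - ↑((Psub n).orthogonalProjectionOnto (f w))) x := by
      apply ContinuousAt.sub hfx
      exact (continuous_subtype_val.comp
        ((Psub n).orthogonalProjectionOnto).continuous).continuousAt.comp hfx
    have hsdir : ContinuousAt (fun v : Eu n => sdir v) ξN := by
      have h1 : ContinuousAt (fun v : Eu n => ‖v‖⁻¹) ξN :=
        (continuous_norm.continuousAt).inv₀ (norm_ne_zero_iff.2 hξN0)
      exact h1.smul continuousAt_id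
    have hc := hsdir.comp_of_eq hG rfl
    exact hc
  obtain ⟨t₀, ht₀, ht₀prop⟩ := Metric.continuousAt_iff.1 hFcont (4:ℝ)⁻¹ (by norm_num)
  set U : Set (Eu n) := ball x t₀ ∩ ball p ρ with hUdef
  refine ⟨U, isOpen_ball.inter isOpen_ball, ⟨mem_ball_self ht₀, hxball⟩, z, hz1, ?_⟩
  intro x' hx' y hy hyx
  have hx'p : x' ∈ ball p ρ := hx'.2
  have hx'cb : x' ∈ closedBall p (3*r₂) := by
    rw [mem_closedBall]
    rw [mem_ball] at hx'p
    linarith [le_of_lt hx'p, hρler₂, hr₂pos]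
  have hx'V : x' ∈ V := hcbV hx'cb
  have hyx0 : y - x' ≠ 0 := sub_ne_zero.2 hyx
  rcases le_or_gt r₂ ‖y - p‖ with hfar | hnear
  -- FAR CASE
  · have hw₀K : sdir (y - p) ∈ K₀ := ⟨y, ⟨hy, hfar⟩, rfl⟩
    have hypn0 : y - p ≠ 0 := by
      intro h
      rw [h, norm_zero] at hfar
      linarith
    have hdistx' : dist x' p < ρ := mem_ball.1 hx'p
    have hab : ‖(y - x') - (y - p)‖ = dist x' p := by
      rw [dist_eq_norm']
      congr 1
      abel
    have hna : r₂/2 ≤ ‖y - x'‖ := by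
      have h1 := norm_sub_norm_le (y - x') (y - p)
      have h1' : ‖y - p‖ - ‖(y - x') - (y - p)‖ ≤ ‖y - x'‖ := by
        have := abs_le.1 (abs_norm_sub_norm_le (y - x') (y - p))
        linarith [this.2]
      have h2 : ‖(y - x') - (y - p)‖ < ρ := hab ▸ hdistx'
      have h3 : ρ ≤ r₂ / 8 := le_trans hρs (by nlinarith)
      linarith
    have hdd := sdir_sub_sdir hyx0 hypn0
    have hsd : ‖sdir (y - x') - sdir (y - p)‖ ≤ s/2 := by
      have h2 : ‖(y - x') - (y - p)‖ < ρ := hab ▸ hdistx'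
      calc ‖sdir (y - x') - sdir (y - p)‖ ≤ 2 * ‖(y - x') - (y - p)‖ / ‖y - x'‖ := hdd
        _ ≤ 2 * (s * r₂ / 8) / (r₂/2) := by
            apply div_le_div₀ (by nlinarith) (by nlinarith [le_trans (le_of_lt h2) hρs])
              (by linarith) hna
        _ = s/2 := by field_simp; ring
    have hzw : s ≤ ‖z - sdir (y - p)‖ := hsdist _ hw₀K
    have hfinal : s/2 ≤ ‖sdir (y - x') - z‖ := by
      have h1 : ‖z - sdir (y - p)‖ ≤ ‖z - sdir (y - x')‖ + ‖sdir (y - x') - sdir (y - p)‖ :=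
        norm_sub_le_norm_sub_add_norm_sub _ _ _
      have h2 : ‖z - sdir (y - x')‖ = ‖sdir (y - x') - z‖ := norm_sub_rev _ _
      linarith
    have := inner_le_of_dist_ge (norm_sdir hyx0) hz1 hfinal (by positivity)
    calc (inner ℝ (sdir (y - x')) z : ℝ) ≤ 1 - (s/2)^2/2 := this
      _ = 1 - s^2/8 := by ring
      _ < 1 - s^2/16 := by nlinarith
      _ ≤ D := hDν
  -- NEAR CASE
  · have hycb : y ∈ closedBall p (3*r₂) := by
      rw [mem_closedBall, dist_eq_norm]
      linarith
    have hyV : y ∈ V := hcbV hycb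
    set q' : Eu n := f y with hq'def
    have hq'ball : q' ∈ ball c₀ r₃ := hfcb y hycb
    have hq'P : q' ∈ Psub n := by
      have h1 : q' ∈ f '' (M ∩ V) := Set.mem_image_of_mem f ⟨hy, hyV⟩
      rw [himg] at h1
      exact mem_Psub_iff.2 h1.2
    set ξ' : Eu n := f x' with hξ'def
    have hξ'ball : ξ' ∈ ball c₀ r₃ := hfcb x' hx'cb
    set u : Eu n := q' - ξ' with hudef
    have hgq' : g q' = y := hgf y hyV
    have hgξ' : g ξ' = x' := hgf x' hx'V
    have hu0 : u ≠ 0 := by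
      intro h
      apply hyx
      have h2 : q' = ξ' := by
        rw [hudef] at h
        exact sub_eq_zero.1 h
      rw [← hgq', ← hgξ', h2]
    have hTay : ‖(y - x') - A u‖ ≤ ε₁ * ‖u‖ := by
      have := hTaylor ξ' hξ'ball q' hq'ball
      rwa [hgq', hgξ'] at this
    set ζ : Eu n := A' z with hζdef
    have hζ1 : ‖(↑((Psub n).orthogonalProjectionOnto ζ) : Eu n)‖ < η * ‖ζ‖ := hOc1 ν hνC
    have hζ2 : ‖ζ‖ / 2 < (inner ℝ ζ ν : ℝ) := hOc2 ν hνC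
    have hζnorm : ‖ζ‖ ≤ ‖A'‖ := by
      calc ‖ζ‖ = ‖A' z‖ := rfl
        _ ≤ ‖A'‖ * ‖z‖ := A'.le_opNorm z
        _ = ‖A'‖ := by rw [hz1, mul_one]
    -- the normal direction at x'
    set ξ'N : Eu n := ξ' - ↑((Psub n).orthogonalProjectionOnto ξ') with hξ'Ndef
    have hξ'Nmem : ξ'N ∈ (Psub n)ᗮ := Submodule.sub_starProjection_mem_orthogonal ξ'
    set ν'' : Eu n := sdir ξ'N with hν''def
    have hν''F : Fdir x' = ν'' := rfl
    have hν''close : ‖ν'' - ν‖ < 1/2 := by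
      have h1 : dist (Fdir x') (Fdir x) < 4⁻¹ := ht₀prop (mem_ball.1 hx'.1)
      rw [hν''F, hFx] at h1
      have h2 : dist ν' ν < 4⁻¹ := mem_ball.1 hν'ball
      calc ‖ν'' - ν‖ ≤ ‖ν'' - ν'‖ + ‖ν' - ν‖ := norm_sub_le_norm_sub_add_norm_sub _ _ _
        _ = dist ν'' ν' + dist ν' ν := by rw [dist_eq_norm, dist_eq_norm]
        _ < 4⁻¹ + 4⁻¹ := by exact add_lt_add h1 h2
        _ = 1/2 := by norm_num
    have hξ'N0 : ξ'N ≠ 0 := by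
      intro h
      rw [hν''def, h] at hν''close
      have : sdir (0 : Eu n) = 0 := by rw [sdir, smul_zero]
      rw [this, zero_sub, norm_neg, hνC.2] at hν''close
      norm_num at hν''close
    have hν''unit : ‖ν''‖ = 1 := norm_sdir hξ'N0
    have hν''mem : ν'' ∈ (Psub n)ᗮ := by
      rw [hν''def, sdir]
      exact Submodule.smul_mem _ _ hξ'Nmem
    -- inner product estimates
    have hinner_u : (inner ℝ u ζ : ℝ) ≤ η * ‖A'‖ * ‖u‖ := by
      set ζP : Eu n := ↑((Psub n).orthogonalProjectionOnto ζ) with hζPdef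
      have hζPmem : ζP ∈ Psub n := SetLike.coe_mem _
      have hζNmem : ζ - ζP ∈ (Psub n)ᗮ := Submodule.sub_starProjection_mem_orthogonal ζ
      have hsplit : (inner ℝ u ζ : ℝ) = inner ℝ u ζP + inner ℝ u (ζ - ζP) := by
        rw [← inner_add_right]
        congr 1
        abel
      have h5 : (inner ℝ u ζP : ℝ) ≤ ‖u‖ * (η * ‖ζ‖) := by
        calc (inner ℝ u ζP : ℝ) ≤ ‖u‖ * ‖ζP‖ := real_inner_le_norm u ζP
          _ ≤ ‖u‖ * (η * ‖ζ‖) := by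
              apply mul_le_mul_of_nonneg_left (le_of_lt hζ1) (norm_nonneg u)
      have h6 : (inner ℝ u (ζ - ζP) : ℝ) ≤ 0 := by
        have husplit : u = (q' - ↑((Psub n).orthogonalProjectionOnto ξ')) - ξ'N := by
          rw [hudef, hξ'Ndef]
          abel
        have hfirst : (inner ℝ (q' - ↑((Psub n).orthogonalProjectionOnto ξ')) (ζ - ζP) : ℝ) = 0 := by
          apply Submodule.inner_right_of_mem_orthogonal (K := Psub n)
          · exact Submodule.sub_mem _ hq'P (SetLike.coe_mem _)
          · exact hζNmem
        have hξ'Neq : ξ'N = ‖ξ'N‖ • ν'' := by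
          rw [hν''def, sdir, smul_smul, mul_inv_cancel₀ (norm_ne_zero_iff.2 hξ'N0), one_smul]
        have hsecond : (inner ℝ ξ'N (ζ - ζP) : ℝ) = ‖ξ'N‖ * (inner ℝ ν'' (ζ - ζP) : ℝ) := by
          conv_lhs => rw [hξ'Neq]
          rw [real_inner_smul_left]
        have hν''ζP : (inner ℝ ν'' ζP : ℝ) = 0 :=
          Submodule.inner_left_of_mem_orthogonal hζPmem hν''mem
        have hν''ζ : (0:ℝ) ≤ inner ℝ ν'' ζ := by
          have h7 : (inner ℝ ν'' ζ : ℝ) = inner ℝ ν ζ + inner ℝ (ν'' - ν) ζ := by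
            rw [← inner_add_left]
            congr 1
            abel
          have h8 : |(inner ℝ (ν'' - ν) ζ : ℝ)| ≤ ‖ν'' - ν‖ * ‖ζ‖ := abs_real_inner_le_norm _ _
          have h9 : ‖ν'' - ν‖ * ‖ζ‖ ≤ (1/2) * ‖ζ‖ :=
            mul_le_mul_of_nonneg_right (le_of_lt hν''close) (norm_nonneg ζ)
          have h10 : (inner ℝ ν ζ : ℝ) = inner ℝ ζ ν := real_inner_comm ζ ν
          have h11 := abs_le.1 h8
          rw [h7, h10]
          linarith [h11.1, hζ2]
        have hν''ζN : (inner ℝ ν'' (ζ - ζP) : ℝ) = inner ℝ ν'' ζ := by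
          rw [inner_sub_right, hν''ζP, sub_zero]
        rw [husplit, inner_sub_left, hfirst, zero_sub, hsecond, hν''ζN]
        have : (0:ℝ) ≤ ‖ξ'N‖ * (inner ℝ ν'' ζ : ℝ) :=
          mul_nonneg (norm_nonneg _) hν''ζ
        linarith
      calc (inner ℝ u ζ : ℝ) = inner ℝ u ζP + inner ℝ u (ζ - ζP) := hsplit
        _ ≤ ‖u‖ * (η * ‖ζ‖) + 0 := add_le_add h5 h6
        _ = ‖u‖ * (η * ‖ζ‖) := by ring
        _ ≤ ‖u‖ * (η * ‖A'‖) := by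
            apply mul_le_mul_of_nonneg_left ?_ (norm_nonneg u)
            exact mul_le_mul_of_nonneg_left hζnorm (le_of_lt hηpos)
        _ = η * ‖A'‖ * ‖u‖ := by ring
    have huLf : ‖u‖ ≤ Lf * ‖y - x'‖ := by
      have := hflip x' (hcbρ₀ hx'cb) y (hcbρ₀ hycb)
      rwa [hudef, hq'def, hξ'def]
    have hAuz : (inner ℝ (A u) z : ℝ) = inner ℝ u ζ := by
      rw [hζdef]
      exact (ContinuousLinearMap.adjoint_inner_right A u z).symm
    have herr : (inner ℝ ((y - x') - A u) z : ℝ) ≤ ε₁ * ‖u‖ := by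
      calc (inner ℝ ((y - x') - A u) z : ℝ) ≤ ‖(y - x') - A u‖ * ‖z‖ := real_inner_le_norm _ _
        _ = ‖(y - x') - A u‖ := by rw [hz1, mul_one]
        _ ≤ ε₁ * ‖u‖ := hTay
    have htotal : (inner ℝ (y - x') z : ℝ) ≤ (1/2) * ‖y - x'‖ := by
      have hsplit2 : (inner ℝ (y - x') z : ℝ) = inner ℝ (A u) z + inner ℝ ((y - x') - A u) z := by
        rw [← inner_add_left]
        congr 1
        abel
      have hη2 : η * ‖A'‖ ≤ 1 / (4 * Lf) := by
        rw [hηdef]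
        rw [div_mul_eq_mul_div, div_le_div_iff₀ (by positivity) (by positivity)]
        have hA'nn := norm_nonneg A'
        nlinarith
      have hb1 : η * ‖A'‖ * ‖u‖ ≤ (1/(4*Lf)) * (Lf * ‖y - x'‖) := by
        apply mul_le_mul hη2 huLf (norm_nonneg u)
        positivity
      have hb2 : ε₁ * ‖u‖ ≤ (1/(4*Lf)) * (Lf * ‖y - x'‖) := by
        rw [hε₁def]
        apply mul_le_mul_of_nonneg_left huLf
        positivity
      have hc : (1/(4*Lf)) * (Lf * ‖y - x'‖) = ‖y - x'‖ / 4 := by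
        field_simp
      rw [hsplit2, hAuz]
      calc (inner ℝ u ζ : ℝ) + (inner ℝ ((y - x') - A u) z : ℝ)
          ≤ η * ‖A'‖ * ‖u‖ + ε₁ * ‖u‖ := add_le_add hinner_u herr
        _ ≤ ‖y - x'‖/4 + ‖y - x'‖/4 := by rw [← hc]; exact add_le_add hb1 hb2
        _ = (1/2) * ‖y - x'‖ := by ring
    have hynorm : (0:ℝ) < ‖y - x'‖ := norm_pos_iff.2 hyx0
    calc (inner ℝ (sdir (y - x')) z : ℝ) = ‖y - x'‖⁻¹ * inner ℝ (y - x') z := by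
          rw [sdir, real_inner_smul_left]
      _ ≤ ‖y - x'‖⁻¹ * ((1/2) * ‖y - x'‖) := by
          apply mul_le_mul_of_nonneg_left htotal (by positivity)
      _ = 1/2 := by field_simp
      _ < 3/4 := by norm_num
      _ ≤ D := hD34

end SepThm

open SepThm Set Module
open scoped ENNReal NNReal

/-- **Separation Theorem.** -/
theorem separation_theorem (n : ℕ) (hn : 1 ≤ n)
    (M : Set (EuclideanSpace ℝ (Fin (n + 2))))
    (hne : M.Nonempty) (hcpt : IsCompact M) (hman : IsSmoothSubmanifold n M) :
    ∃ D : ℝ, D < 1 ∧ ∀ x : EuclideanSpace ℝ (Fin (n + 2)), x ∉ M →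
      ∃ (U : Set (EuclideanSpace ℝ (Fin (n + 2)))) (z : EuclideanSpace ℝ (Fin (n + 2))),
        IsOpen U ∧ x ∈ U ∧ ‖z‖ = 1 ∧
        ∀ x' ∈ U, ∀ y ∈ M, y ≠ x' →
          (inner ℝ (‖y - x'‖⁻¹ • (y - x')) z : ℝ) < D := by
  classical
  have hnearall : ∀ p ∈ M, ∃ ρ : ℝ, 0 < ρ ∧ ∃ D : ℝ, D < 1 ∧
      ∀ x, x ∈ ball p ρ → x ∉ M →
        ∃ U : Set (Eu n), IsOpen U ∧ x ∈ U ∧ ∃ z : Eu n, ‖z‖ = 1 ∧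
          ∀ x' ∈ U, ∀ y ∈ M, y ≠ x' → (inner ℝ (sdir (y - x')) z : ℝ) < D :=
    fun p hp => near_good hcpt hman hp
  choose! ρfun hρfun Dfun hDfun hGood using hnearall
  obtain ⟨T, hTM, hTfin, hTcov⟩ := hcpt.elim_finite_subcover_image
    (fun p (_ : p ∈ M) => isOpen_ball (x := p) (ε := ρfun p))
    (fun p hp => Set.mem_biUnion hp (mem_ball_self (hρfun p hp)))
  set O : Set (Eu n) := ⋃ p ∈ T, ball p (ρfun p) with hOdef
  have hOopen : IsOpen O := isOpen_biUnion (fun _ _ => isOpen_ball)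
  obtain ⟨R, hR⟩ := hcpt.isBounded.subset_closedBall 0
  set R' : ℝ := max R 0 with hR'def
  have hRnorm : ∀ y ∈ M, ‖y‖ ≤ R' := by
    intro y hy
    have := hR hy
    rw [mem_closedBall, dist_zero_right] at this
    exact le_trans this (le_max_left _ _)
  set F : Set (Eu n) := closedBall (0 : Eu n) (R' + 2) \ O with hFdef
  have hFcpt : IsCompact F := (isCompact_closedBall _ _).diff hOopen
  have hFM : ∀ q ∈ F, q ∉ M := fun q hq hqM => hq.2 (hTcov hqM)
  have hFgood : ∀ q ∈ F, ∃ ρ : ℝ, 0 < ρ ∧ ∃ D : ℝ, D < 1 ∧ ∃ z : Eu n, ‖z‖ = 1 ∧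
      ∀ x' ∈ ball q ρ, ∀ y ∈ M, y ≠ x' → (inner ℝ (sdir (y - x')) z : ℝ) < D :=
    fun q hq => pointwise_good hcpt hne hman (hFM q hq)
  choose! σfun hσpos Efun hEfun zfun hzfun hFbound using hFgood
  obtain ⟨T₂, hT₂F, hT₂fin, hT₂cov⟩ := hFcpt.elim_finite_subcover_image
    (fun q (_ : q ∈ F) => isOpen_ball (x := q) (ε := σfun q))
    (fun q hq => Set.mem_biUnion hq (mem_ball_self (hσpos q hq)))
  set Ds : Finset ℝ :=
    insert (1/2 : ℝ) ((hTfin.toFinset.image Dfun) ∪ (hT₂fin.toFinset.image Efun)) with hDsdef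
  have hDsne : Ds.Nonempty := ⟨1/2, Finset.mem_insert_self _ _⟩
  set D : ℝ := Ds.max' hDsne with hDdef
  have hD1 : D < 1 := by
    rw [hDdef, Finset.max'_lt_iff]
    intro b hb
    rw [hDsdef, Finset.mem_insert, Finset.mem_union] at hb
    rcases hb with rfl | hb | hb
    · norm_num
    · obtain ⟨p, hp, rfl⟩ := Finset.mem_image.1 hb
      exact hDfun p (hTM (hTfin.mem_toFinset.1 hp))
    · obtain ⟨q, hq, rfl⟩ := Finset.mem_image.1 hb
      exact hEfun q (hT₂F (hT₂fin.mem_toFinset.1 hq))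
  have hDhalf : (1/2 : ℝ) ≤ D := Finset.le_max' _ _ (Finset.mem_insert_self _ _)
  refine ⟨D, hD1, ?_⟩
  intro x hx
  by_cases hxO : x ∈ O
  · obtain ⟨p, hpT, hxball⟩ := Set.mem_iUnion₂.1 hxO
    obtain ⟨U, hUopen, hxU, z, hz1, hbound⟩ := hGood p (hTM hpT) x hxball hx
    refine ⟨U, z, hUopen, hxU, hz1, ?_⟩
    intro x' hx' y hy hyx
    have h1 := hbound x' hx' y hy hyx
    have h2 : Dfun p ≤ D := by
      apply Finset.le_max'
      rw [hDsdef]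
      exact Finset.mem_insert_of_mem (Finset.mem_union_left _
        (Finset.mem_image_of_mem _ (hTfin.mem_toFinset.2 hpT)))
    exact lt_of_lt_of_le h1 h2
  · by_cases hxB : x ∈ closedBall (0 : Eu n) (R' + 2)
    · have hxF : x ∈ F := ⟨hxB, hxO⟩
      obtain ⟨q, hqT₂, hxball⟩ := Set.mem_iUnion₂.1 (hT₂cov hxF)
      have hqF : q ∈ F := hT₂F hqT₂
      refine ⟨ball q (σfun q), zfun q, isOpen_ball, hxball, hzfun q hqF, ?_⟩
      intro x' hx' y hy hyx
      have h1 := hFbound q hqF x' hx' y hy hyx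
      have h2 : Efun q ≤ D := by
        apply Finset.le_max'
        rw [hDsdef]
        exact Finset.mem_insert_of_mem (Finset.mem_union_right _
          (Finset.mem_image_of_mem _ (hT₂fin.mem_toFinset.2 hqT₂)))
      exact lt_of_lt_of_le h1 h2
    · -- far region
      have hxnorm : R' + 2 < ‖x‖ := by
        rw [mem_closedBall, dist_zero_right] at hxB
        linarith [not_le.1 hxB]
      have hR'0 : (0:ℝ) ≤ R' := le_max_right _ _
      have hx0 : x ≠ 0 := by
        intro h
        rw [h, norm_zero] at hxnorm
        linarith
      have hxpos : (0:ℝ) < ‖x‖ := norm_pos_iff.2 hx0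
      refine ⟨ball x 1, sdir x, isOpen_ball, mem_ball_self one_pos, norm_sdir hx0, ?_⟩
      intro x' hx' y hy hyx
      have hyx0 : y - x' ≠ 0 := sub_ne_zero.2 hyx
      have hax : (inner ℝ (y - x') x : ℝ) < 0 := by
        have h1 : (inner ℝ y x : ℝ) ≤ R' * ‖x‖ := by
          calc (inner ℝ y x : ℝ) ≤ ‖y‖ * ‖x‖ := real_inner_le_norm y x
            _ ≤ R' * ‖x‖ := mul_le_mul_of_nonneg_right (hRnorm y hy) (norm_nonneg x)
        have h2 : (inner ℝ x' x : ℝ) = inner ℝ x x + inner ℝ (x' - x) x := by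
          rw [← inner_add_left]
          congr 1
          abel
        have h3 : |(inner ℝ (x' - x) x : ℝ)| ≤ ‖x' - x‖ * ‖x‖ := abs_real_inner_le_norm _ _
        have h4 : ‖x' - x‖ < 1 := by
          rw [← dist_eq_norm]
          exact mem_ball.1 hx'
        have h5 : ‖x' - x‖ * ‖x‖ ≤ 1 * ‖x‖ :=
          mul_le_mul_of_nonneg_right (le_of_lt h4) (norm_nonneg x)
        have h6 := abs_le.1 h3
        have h7 : (inner ℝ x x : ℝ) = ‖x‖ ^ 2 := real_inner_self_eq_norm_sq x
        have h8 : (inner ℝ (y - x') x : ℝ) = inner ℝ y x - inner ℝ x' x := by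
          rw [← inner_sub_left]
        rw [h8, h2, h7]
        nlinarith [h6.1, hxnorm, hxpos]
      have hval : (inner ℝ (sdir (y - x')) (sdir x) : ℝ) ≤ 0 := by
        rw [sdir, sdir, real_inner_smul_left, real_inner_smul_right]
        have hnn : (0:ℝ) ≤ ‖y - x'‖⁻¹ * ‖x‖⁻¹ := by positivity
        calc ‖y - x'‖⁻¹ * (‖x‖⁻¹ * (inner ℝ (y - x') x : ℝ))
            = (‖y - x'‖⁻¹ * ‖x‖⁻¹) * (inner ℝ (y - x') x : ℝ) := by ring
          _ ≤ 0 := mul_nonpos_of_nonneg_of_nonpos hnn (le_of_lt hax)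
      calc (inner ℝ (‖y - x'‖⁻¹ • (y - x')) (sdir x) : ℝ)
          = (inner ℝ (sdir (y - x')) (sdir x) : ℝ) := rfl
        _ ≤ 0 := hval
        _ < 1/2 := by norm_num
        _ ≤ D := hDhalf
end
end

section
/- Let x ∈ M, let U ⊆ S^{n+1} be open with U = −U and S_x ⊆ U, let r > 0 be such that Sec_x(M ∩ B̄(x,r) \ {x}) ⊆ U, and let v ∈ S^{n+1} \ U. Then there exists an open neighborhood W ⊆ ℝ^{n+2} of x such that for every x′ ∈ W, either v ∉ Sec_{x′}(M ∩ B̄(x,r)) or −v ∉ Sec_{x′}(M ∩ B̄(x,r)) (i.e., either no y ∈ M ∩ B̄(x,r) with y ≠ x′ satisfies (y − x′)/‖y − x′‖ = v, or no such y satisfies (y − x′)/‖y − x′‖ = −v). -/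
open Metric

open Filter Asymptotics Set Topology in
/-- Auxiliary: the image under `fderiv ℝ g (f x)` of a vector in the coordinate plane
lies in the tangent cone of `M` at `x`. -/
lemma aux_tangent_mem (n : ℕ) (M : Set (EuclideanSpace ℝ (Fin (n + 2))))
    (x : EuclideanSpace ℝ (Fin (n + 2))) (hx : x ∈ M)
    (V : Set (EuclideanSpace ℝ (Fin (n + 2))))
    (f g : EuclideanSpace ℝ (Fin (n + 2)) → EuclideanSpace ℝ (Fin (n + 2)))
    (hVopen : IsOpen V) (hxV : x ∈ V) (hfVopen : IsOpen (f '' V))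
    (hg : ContDiffOn ℝ (⊤ : ℕ∞) g (f '' V))
    (hgf : ∀ y ∈ V, g (f y) = y)
    (himg : f '' (M ∩ V) = (f '' V) ∩ {y | ∀ i : Fin (n + 2), n ≤ (i : ℕ) → y i = 0})
    (w : EuclideanSpace ℝ (Fin (n + 2)))
    (hw : ∀ i : Fin (n + 2), n ≤ (i : ℕ) → w i = 0) :
    fderiv ℝ g (f x) w ∈ tangentConeAt ℝ M x := by
  have hpfV : f x ∈ f '' V := mem_image_of_mem f hxV
  have hgCD : ContDiffAt ℝ (⊤ : ℕ∞) g (f x) := hg.contDiffAt (hfVopen.mem_nhds hpfV)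
  have hgD : HasFDerivAt g (fderiv ℝ g (f x)) (f x) :=
    (hgCD.hasStrictFDerivAt (by simp)).hasFDerivAt
  have hpP : ∀ i : Fin (n + 2), n ≤ (i : ℕ) → f x i = 0 := by
    have h1 : f x ∈ f '' (M ∩ V) := mem_image_of_mem f ⟨hx, hxV⟩
    rw [himg] at h1
    exact h1.2
  have hcnorm : Tendsto (fun k : ℕ => ‖(k : ℝ) + 1‖) atTop atTop := by
    have h1 : Tendsto (fun k : ℕ => (k : ℝ) + 1) atTop atTop :=
      tendsto_atTop_add_const_right _ 1 tendsto_natCast_atTop_atTop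
    refine h1.congr fun k => ?_
    rw [Real.norm_eq_abs, abs_of_nonneg (by positivity)]
  have hlim0 : Tendsto (fun k : ℕ => f x + ((k : ℝ) + 1)⁻¹ • w) atTop (𝓝 (f x)) := by
    have h1 : Tendsto (fun k : ℕ => ((k : ℝ) + 1)⁻¹) atTop (𝓝 0) := by
      simpa [one_div] using (tendsto_one_div_add_atTop_nhds_zero_nat : Tendsto (fun k : ℕ => 1 / ((k : ℝ) + 1)) atTop (𝓝 0))
    have h2 : Tendsto (fun k : ℕ => ((k : ℝ) + 1)⁻¹ • w) atTop (𝓝 ((0 : ℝ) • w)) :=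
      h1.smul_const w
    rw [zero_smul] at h2
    simpa using tendsto_const_nhds.add h2
  have hmem : ∀ᶠ k : ℕ in atTop, f x + ((k : ℝ) + 1)⁻¹ • w ∈ f '' V :=
    hlim0.eventually (hfVopen.eventually_mem hpfV)
  refine mem_tangentConeAt_iff_exists_seq_norm_tendsto_atTop.mpr
    ⟨fun k : ℕ => (k : ℝ) + 1, fun k => g (f x + ((k : ℝ) + 1)⁻¹ • w) - x,
    hcnorm, ?_, ?_⟩
  · filter_upwards [hmem] with k hk
    have hP : ∀ i : Fin (n + 2), n ≤ (i : ℕ) →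
        (f x + ((k : ℝ) + 1)⁻¹ • w) i = 0 := by
      intro i hi
      rw [PiLp.add_apply, PiLp.smul_apply, hpP i hi, hw i hi, smul_zero, add_zero]
    have h2 : f x + ((k : ℝ) + 1)⁻¹ • w ∈ f '' (M ∩ V) := by
      rw [himg]; exact ⟨hk, hP⟩
    obtain ⟨m, hm, hfm⟩ := h2
    have h3 : g (f x + ((k : ℝ) + 1)⁻¹ • w) = m := by rw [← hfm, hgf m hm.2]
    rw [add_sub_cancel, h3]
    exact hm.1
  · have h1 := hgD.lim w hcnorm
    have hgp : g (f x) = x := hgf x hxV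
    simpa [hgp] using h1

open Filter Asymptotics Set Topology in
/-- Let `x ∈ M`, let `U ⊆ S^{n+1}` be open in the sphere, symmetric (`−U = U`) and
containing `S_x = T_xM ∩ S^{n+1}` (tangent space realized as the tangent cone), let
`r > 0` be such that `Sec_x(M ∩ B̄(x,r) \ {x}) ⊆ U`, and let `v ∈ S^{n+1} \ U`. Then
there is an open neighborhood `W` of `x` such that for every `x′ ∈ W`, either
`v ∉ Sec_{x′}(M ∩ B̄(x,r))` or `−v ∉ Sec_{x′}(M ∩ B̄(x,r))`. -/
theorem secant_avoids_v_or_neg_v (n : ℕ) (hn : 1 ≤ n)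
    (M : Set (EuclideanSpace ℝ (Fin (n + 2))))
    (hne : M.Nonempty) (hcpt : IsCompact M) (hman : IsSmoothSubmanifold n M)
    (x : EuclideanSpace ℝ (Fin (n + 2))) (hx : x ∈ M)
    (U : Set (EuclideanSpace ℝ (Fin (n + 2))))
    (hUsub : U ⊆ sphere (0 : EuclideanSpace ℝ (Fin (n + 2))) 1)
    (hUopen : IsOpen ((↑·) ⁻¹' U : Set (sphere (0 : EuclideanSpace ℝ (Fin (n + 2))) 1)))
    (hUsymm : -U = U)
    (hSx : tangentConeAt ℝ M x ∩ sphere (0 : EuclideanSpace ℝ (Fin (n + 2))) 1 ⊆ U)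
    (r : ℝ) (hr : 0 < r)
    (hsec : ∀ y ∈ M ∩ closedBall x r, y ≠ x → ‖y - x‖⁻¹ • (y - x) ∈ U)
    (v : EuclideanSpace ℝ (Fin (n + 2))) (hv : ‖v‖ = 1) (hvU : v ∉ U) :
    ∃ W : Set (EuclideanSpace ℝ (Fin (n + 2))), IsOpen W ∧ x ∈ W ∧
      ∀ x' ∈ W,
        (∀ y ∈ M ∩ closedBall x r, y ≠ x' → ‖y - x'‖⁻¹ • (y - x') ≠ v) ∨
        (∀ y ∈ M ∩ closedBall x r, y ≠ x' → ‖y - x'‖⁻¹ • (y - x') ≠ -v) := by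
  classical
  have hv0 : v ≠ 0 := by
    intro h; rw [h, norm_zero] at hv; exact one_ne_zero hv.symm
  by_contra hcon
  push_neg at hcon
  have key : ∀ k : ℕ, ∃ x' yy zz, x' ∈ ball x (1 / ((k : ℝ) + 1)) ∧
      (yy ∈ M ∩ closedBall x r) ∧ yy ≠ x' ∧ ‖yy - x'‖⁻¹ • (yy - x') = v ∧
      (zz ∈ M ∩ closedBall x r) ∧ zz ≠ x' ∧ ‖zz - x'‖⁻¹ • (zz - x') = -v := by
    intro k
    have hpos : (0 : ℝ) < 1 / ((k : ℝ) + 1) := by positivity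
    obtain ⟨x', hx', h1, h2⟩ := hcon (ball x (1 / ((k : ℝ) + 1))) isOpen_ball
      (mem_ball_self hpos)
    obtain ⟨y, hy1, hy2, hy3⟩ := h1
    obtain ⟨z, hz1, hz2, hz3⟩ := h2
    exact ⟨x', y, z, hx', hy1, hy2, hy3, hz1, hz2, hz3⟩
  choose x' y z hx'ball hyM hyx' hyv hzM hzx' hzv using key
  set a : ℕ → ℝ := fun k => ‖y k - x' k‖ with ha
  set b : ℕ → ℝ := fun k => ‖z k - x' k‖ with hb
  have hapos : ∀ k, 0 < a k := fun k =>
    norm_pos_iff.mpr (sub_ne_zero.mpr (hyx' k))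
  have hbpos : ∀ k, 0 < b k := fun k =>
    norm_pos_iff.mpr (sub_ne_zero.mpr (hzx' k))
  have hya : ∀ k, y k - x' k = a k • v := by
    intro k
    have h1 : a k • ((a k)⁻¹ • (y k - x' k)) = a k • v := by rw [hyv k]
    rwa [smul_inv_smul₀ (ne_of_gt (hapos k))] at h1
  have hzb : ∀ k, z k - x' k = -(b k • v) := by
    intro k
    have h1 : b k • ((b k)⁻¹ • (z k - x' k)) = b k • (-v) := by rw [hzv k]
    rwa [smul_inv_smul₀ (ne_of_gt (hbpos k)), smul_neg] at h1
  have hx'lim : Tendsto x' atTop (𝓝 x) := by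
    rw [tendsto_iff_dist_tendsto_zero]
    refine squeeze_zero (fun k => dist_nonneg) (fun k => le_of_lt (hx'ball k)) ?_
    exact tendsto_one_div_add_atTop_nhds_zero_nat
  have haIcc : ∀ k, a k ∈ Icc (0 : ℝ) (r + 1) := by
    intro k
    refine ⟨norm_nonneg _, ?_⟩
    have h1 : dist (y k) (x' k) ≤ dist (y k) x + dist x (x' k) := dist_triangle _ _ _
    have h2 : dist (y k) x ≤ r := (hyM k).2
    have h3 : dist x (x' k) ≤ 1 := by
      rw [dist_comm]
      refine le_trans (le_of_lt (hx'ball k)) ?_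
      rw [div_le_one (by positivity)]
      simp
    calc a k = dist (y k) (x' k) := (dist_eq_norm _ _).symm
      _ ≤ r + 1 := by linarith
  have hbIcc : ∀ k, b k ∈ Icc (0 : ℝ) (r + 1) := by
    intro k
    refine ⟨norm_nonneg _, ?_⟩
    have h1 : dist (z k) (x' k) ≤ dist (z k) x + dist x (x' k) := dist_triangle _ _ _
    have h2 : dist (z k) x ≤ r := (hzM k).2
    have h3 : dist x (x' k) ≤ 1 := by
      rw [dist_comm]
      refine le_trans (le_of_lt (hx'ball k)) ?_
      rw [div_le_one (by positivity)]
      simp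
    calc b k = dist (z k) (x' k) := (dist_eq_norm _ _).symm
      _ ≤ r + 1 := by linarith
  obtain ⟨aL, haLIcc, φ, hφ, haφ⟩ := isCompact_Icc.tendsto_subseq haIcc
  obtain ⟨bL, hbLIcc, ψ, hψ, hbψ⟩ :=
    isCompact_Icc.tendsto_subseq (x := b ∘ φ) (fun k => hbIcc (φ k))
  set σ : ℕ → ℕ := φ ∘ ψ with hσ
  have haσ : Tendsto (fun k => a (σ k)) atTop (𝓝 aL) := haφ.comp hψ.tendsto_atTop
  have hbσ : Tendsto (fun k => b (σ k)) atTop (𝓝 bL) := hbψ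
  have hx'σ : Tendsto (fun k => x' (σ k)) atTop (𝓝 x) :=
    hx'lim.comp (hφ.comp hψ).tendsto_atTop
  have hYlim2 : Tendsto (fun k => y (σ k)) atTop (𝓝 (aL • v + x)) := by
    have h1 : Tendsto (fun k => a (σ k) • v + x' (σ k)) atTop (𝓝 (aL • v + x)) :=
      (haσ.smul_const v).add hx'σ
    exact h1.congr fun k => (sub_eq_iff_eq_add.mp (hya (σ k))).symm
  have hZlim2 : Tendsto (fun k => z (σ k)) atTop (𝓝 (-(bL • v) + x)) := by
    have h1 : Tendsto (fun k => -(b (σ k) • v) + x' (σ k)) atTop (𝓝 (-(bL • v) + x)) :=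
      ((hbσ.smul_const v).neg).add hx'σ
    exact h1.congr fun k => (sub_eq_iff_eq_add.mp (hzb (σ k))).symm
  have hclosed : IsClosed (M ∩ closedBall x r) := hcpt.isClosed.inter isClosed_closedBall
  rcases (haLIcc.1).lt_or_eq with haposL | haz
  · -- aL > 0 : secant from x in direction v
    have hmem : aL • v + x ∈ M ∩ closedBall x r :=
      hclosed.mem_of_tendsto hYlim2 (Eventually.of_forall fun k => hyM (σ k))
    have hne' : aL • v + x ≠ x := by
      intro h
      rcases smul_eq_zero.mp (add_eq_right.mp h) with h' | h'
      · exact haposL.ne' h'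
      · exact hv0 h'
    have hU' := hsec _ hmem hne'
    rw [add_sub_cancel_right, norm_smul, Real.norm_eq_abs, abs_of_pos haposL, hv,
      mul_one, smul_smul, inv_mul_cancel₀ haposL.ne', one_smul] at hU'
    exact hvU hU'
  rcases (hbLIcc.1).lt_or_eq with hbposL | hbz
  · -- bL > 0 : secant from x in direction -v
    have hmem : -(bL • v) + x ∈ M ∩ closedBall x r :=
      hclosed.mem_of_tendsto hZlim2 (Eventually.of_forall fun k => hzM (σ k))
    have hne' : -(bL • v) + x ≠ x := by
      intro h
      have h1 : bL • v = 0 := by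
        have := add_eq_right.mp h
        simpa using this
      rcases smul_eq_zero.mp h1 with h' | h'
      · exact hbposL.ne' h'
      · exact hv0 h'
    have hU' := hsec _ hmem hne'
    rw [add_sub_cancel_right, norm_neg, norm_smul, Real.norm_eq_abs, abs_of_pos hbposL,
      hv, mul_one, smul_neg, smul_smul, inv_mul_cancel₀ hbposL.ne', one_smul] at hU'
    have : v ∈ -U := Set.mem_neg.mpr (by simpa using hU')
    rw [hUsymm] at this
    exact hvU this
  -- main case : aL = bL = 0, both sequences converge to x
  have hYlim' : Tendsto (fun k => y (σ k)) atTop (𝓝 x) := by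
    have := hYlim2
    rw [← haz, zero_smul, zero_add] at this
    exact this
  have hZlim' : Tendsto (fun k => z (σ k)) atTop (𝓝 x) := by
    have := hZlim2
    rw [← hbz, zero_smul, neg_zero, zero_add] at this
    exact this
  obtain ⟨V, f, g, hVopen, hxV, hfVopen, hfCD, hgCD, hgf, hfg, himg⟩ := hman x hx
  have hxnhds : V ∈ 𝓝 x := hVopen.mem_nhds hxV
  have hpfV : f x ∈ f '' V := mem_image_of_mem f hxV
  have hpnhds : f '' V ∈ 𝓝 (f x) := hfVopen.mem_nhds hpfV
  have hfAt : ContDiffAt ℝ (⊤ : ℕ∞) f x := hfCD.contDiffAt hxnhds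
  have hgAt : ContDiffAt ℝ (⊤ : ℕ∞) g (f x) := hgCD.contDiffAt hpnhds
  set F := fderiv ℝ f x with hFdef
  set D := fderiv ℝ g (f x) with hDdef
  have hgstrict : HasStrictFDerivAt g D (f x) := hgAt.hasStrictFDerivAt (by simp)
  have hfD : HasFDerivAt f F x := (hfAt.differentiableAt (by simp)).hasFDerivAt
  have hgp : g (f x) = x := hgf x hxV
  have hDF : D.comp F = ContinuousLinearMap.id ℝ _ := by
    have h1 : HasFDerivAt (g ∘ f) (D.comp F) x := hgstrict.hasFDerivAt.comp x hfD
    have heq : g ∘ f =ᶠ[𝓝 x] id := by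
      filter_upwards [hxnhds] with y' hy'
      exact hgf y' hy'
    have h2 : HasFDerivAt (g ∘ f) (ContinuousLinearMap.id ℝ _) x :=
      (hasFDerivAt_id x).congr_of_eventuallyEq heq
    exact h1.unique h2
  have hFD : F.comp D = ContinuousLinearMap.id ℝ _ := by
    have hfD' : HasFDerivAt f F (g (f x)) := by rw [hgp]; exact hfD
    have h1 : HasFDerivAt (f ∘ g) (F.comp D) (f x) := hfD'.comp (f x) hgstrict.hasFDerivAt
    have heq : f ∘ g =ᶠ[𝓝 (f x)] id := by
      filter_upwards [hpnhds] with y' hy'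
      exact hfg y' hy'
    have h2 : HasFDerivAt (f ∘ g) (ContinuousLinearMap.id ℝ _) (f x) :=
      (hasFDerivAt_id (f x)).congr_of_eventuallyEq heq
    exact h1.unique h2
  have hDFapp : ∀ t, D (F t) = t := fun t => by
    have := ContinuousLinearMap.ext_iff.mp hDF t
    simpa using this
  have hFDapp : ∀ t, F (D t) = t := fun t => by
    have := ContinuousLinearMap.ext_iff.mp hFD t
    simpa using this
  have hFv0 : F v ≠ 0 := by
    intro h
    have h1 := hDFapp v
    rw [h, map_zero] at h1
    rw [← h1, norm_zero] at hv
    exact one_ne_zero hv.symm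
  -- the two-point secant sequences
  set c' : ℕ → ℝ := fun k => a (σ k) + b (σ k) with hc'
  have hc'pos : ∀ k, 0 < c' k := fun k => add_pos (hapos _) (hbpos _)
  have hYZ : ∀ k, y (σ k) - z (σ k) = c' k • v := by
    intro k
    calc y (σ k) - z (σ k)
        = (y (σ k) - x' (σ k)) - (z (σ k) - x' (σ k)) := (sub_sub_sub_cancel_right _ _ _).symm
      _ = a (σ k) • v - -(b (σ k) • v) := by rw [hya (σ k), hzb (σ k)]
      _ = c' k • v := by rw [sub_neg_eq_add, ← add_smul]
  have hYV : ∀ᶠ k in atTop, y (σ k) ∈ V := hYlim'.eventually (hVopen.eventually_mem hxV)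
  have hZV : ∀ᶠ k in atTop, z (σ k) ∈ V := hZlim'.eventually (hVopen.eventually_mem hxV)
  set u : ℕ → EuclideanSpace ℝ (Fin (n + 2)) := fun k => f (y (σ k)) with hu'
  set w' : ℕ → EuclideanSpace ℝ (Fin (n + 2)) := fun k => f (z (σ k)) with hw''
  have hfc : ContinuousAt f x := hfAt.continuousAt
  have hulim : Tendsto u atTop (𝓝 (f x)) := hfc.tendsto.comp hYlim'
  have hwlim : Tendsto w' atTop (𝓝 (f x)) := hfc.tendsto.comp hZlim'
  have huw : Tendsto (fun k => (u k, w' k)) atTop (𝓝 (f x, f x)) :=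
    hulim.prodMk_nhds hwlim
  have hlo := hgstrict.isLittleO.comp_tendsto huw
  have hlo2 : (fun k => c' k • v - D (u k - w' k)) =o[atTop] fun k => u k - w' k := by
    refine hlo.congr' ?_ EventuallyEq.rfl
    filter_upwards [hYV, hZV] with k hY hZ
    show g (u k) - g (w' k) - D (u k - w' k) = c' k • v - D (u k - w' k)
    rw [show g (u k) = y (σ k) from hgf _ hY, show g (w' k) = z (σ k) from hgf _ hZ,
      hYZ k]
  have hlo3 : (fun k => F (c' k • v - D (u k - w' k))) =o[atTop] fun k => u k - w' k :=
    (F.isBigO_comp _ atTop).trans_isLittleO hlo2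
  have hlo4 : (fun k => c' k • F v - (u k - w' k)) =o[atTop] fun k => u k - w' k := by
    refine hlo3.congr (fun k => ?_) (fun k => rfl)
    rw [map_sub, map_smul, hFDapp]
  have hratio : Tendsto (fun k => ‖c' k • F v - (u k - w' k)‖ / ‖u k - w' k‖) atTop (𝓝 0) :=
    (isLittleO_norm_norm.mpr hlo4).tendsto_div_nhds_zero
  set t : ℕ → ℝ := fun k => ‖u k - w' k‖ with ht
  set q : ℕ → EuclideanSpace ℝ (Fin (n + 2)) := fun k => (t k)⁻¹ • (u k - w' k) with hq'
  set δ : ℕ → EuclideanSpace ℝ (Fin (n + 2)) :=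
    fun k => (t k)⁻¹ • (c' k • F v - (u k - w' k)) with hδ'
  set s : ℕ → ℝ := fun k => c' k / t k with hs'
  have hδ : Tendsto δ atTop (𝓝 0) := by
    refine squeeze_zero_norm (fun k => le_of_eq ?_) hratio
    simp only [hδ', ht]
    rw [norm_smul, norm_inv, norm_norm, div_eq_inv_mul]
  have htpos : ∀ᶠ k in atTop, 0 < t k := by
    filter_upwards [hYV, hZV] with k hY hZ
    simp only [ht]
    rw [norm_pos_iff, sub_ne_zero]
    intro h
    have heq : y (σ k) = z (σ k) := by
      rw [← hgf _ hY, ← hgf _ hZ]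
      exact congrArg g h
    have h2 := hYZ k
    rw [heq, sub_self] at h2
    rcases smul_eq_zero.mp h2.symm with h3 | h3
    · exact (hc'pos k).ne' h3
    · exact hv0 h3
  have hkeyδ : ∀ k, δ k = s k • F v - q k := by
    intro k
    simp only [hδ', hq', hs', smul_sub, smul_smul]
    congr 1
    rw [div_eq_mul_inv, mul_comm ((t k)⁻¹) (c' k)]
  have hkey : ∀ k, q k = s k • F v - δ k := by
    intro k
    rw [hkeyδ k, sub_sub_cancel]
  have hqnorm : ∀ᶠ k in atTop, ‖q k‖ = 1 := by
    filter_upwards [htpos] with k hk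
    simp only [hq', ht]
    simp only [ht] at hk
    rw [norm_smul, norm_inv, norm_norm, inv_mul_cancel₀ hk.ne']
  have hsnonneg : ∀ k, 0 ≤ s k := fun k =>
    div_nonneg (le_of_lt (hc'pos k)) (norm_nonneg _)
  have hδn : Tendsto (fun k => ‖δ k‖) atTop (𝓝 0) := by
    simpa using hδ.norm
  have hsFv : Tendsto (fun k => ‖s k • F v‖) atTop (𝓝 1) := by
    have hadd : ∀ k, s k • F v = q k + δ k := by
      intro k; rw [hkey k]; abel
    have hub : ∀ᶠ k in atTop, ‖s k • F v‖ ≤ 1 + ‖δ k‖ := by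
      filter_upwards [hqnorm] with k hk
      rw [hadd k]
      calc ‖q k + δ k‖ ≤ ‖q k‖ + ‖δ k‖ := norm_add_le _ _
        _ = 1 + ‖δ k‖ := by rw [hk]
    have hlb : ∀ᶠ k in atTop, 1 - ‖δ k‖ ≤ ‖s k • F v‖ := by
      filter_upwards [hqnorm] with k hk
      rw [hadd k]
      have h2 : |‖q k + δ k‖ - ‖q k‖| ≤ ‖δ k‖ := by
        have := abs_norm_sub_norm_le (q k + δ k) (q k)
        simpa using this
      have h3 := (abs_le.mp h2).1
      rw [hk] at h3
      linarith
    have h1 : Tendsto (fun k => 1 - ‖δ k‖) atTop (𝓝 1) := by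
      simpa using tendsto_const_nhds.sub hδn
    have h2 : Tendsto (fun k => 1 + ‖δ k‖) atTop (𝓝 1) := by
      simpa using tendsto_const_nhds.add hδn
    exact tendsto_of_tendsto_of_tendsto_of_le_of_le' h1 h2 hlb hub
  have hslim : Tendsto s atTop (𝓝 ‖F v‖⁻¹) := by
    have h1 : Tendsto (fun k => ‖s k • F v‖ * ‖F v‖⁻¹) atTop (𝓝 (1 * ‖F v‖⁻¹)) :=
      hsFv.mul_const _
    rw [one_mul] at h1
    refine h1.congr fun k => ?_
    rw [norm_smul, Real.norm_eq_abs, abs_of_nonneg (hsnonneg k), mul_assoc,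
      mul_inv_cancel₀ (norm_ne_zero_iff.mpr hFv0), mul_one]
  have hqlim : Tendsto q atTop (𝓝 (‖F v‖⁻¹ • F v)) := by
    have h1 : Tendsto (fun k => s k • F v - δ k) atTop (𝓝 (‖F v‖⁻¹ • F v - 0)) :=
      (hslim.smul_const _).sub hδ
    rw [sub_zero] at h1
    exact h1.congr fun k => (hkey k).symm
  have hPclosed : IsClosed {y₀ : EuclideanSpace ℝ (Fin (n + 2)) |
      ∀ i : Fin (n + 2), n ≤ (i : ℕ) → y₀ i = 0} := by
    have hPeq : {y₀ : EuclideanSpace ℝ (Fin (n + 2)) |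
        ∀ i : Fin (n + 2), n ≤ (i : ℕ) → y₀ i = 0} =
        ⋂ (i : Fin (n + 2)) (_ : n ≤ (i : ℕ)),
          {y₀ : EuclideanSpace ℝ (Fin (n + 2)) | y₀ i = 0} := by
      ext y₀; simp
    rw [hPeq]
    exact isClosed_iInter fun i => isClosed_iInter fun _ =>
      isClosed_eq (EuclideanSpace.proj (𝕜 := ℝ) i).continuous continuous_const
  have hqP : ∀ᶠ k in atTop, q k ∈ {y₀ : EuclideanSpace ℝ (Fin (n + 2)) |
      ∀ i : Fin (n + 2), n ≤ (i : ℕ) → y₀ i = 0} := by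
    filter_upwards [hYV, hZV] with k hY hZ
    have huP : ∀ i : Fin (n + 2), n ≤ (i : ℕ) → u k i = 0 := by
      have h1 : u k ∈ f '' (M ∩ V) := mem_image_of_mem f ⟨(hyM (σ k)).1, hY⟩
      rw [himg] at h1
      exact h1.2
    have hwP : ∀ i : Fin (n + 2), n ≤ (i : ℕ) → w' k i = 0 := by
      have h1 : w' k ∈ f '' (M ∩ V) := mem_image_of_mem f ⟨(hzM (σ k)).1, hZ⟩
      rw [himg] at h1
      exact h1.2
    intro i hi
    simp only [hq']
    rw [PiLp.smul_apply, PiLp.sub_apply, huP i hi, hwP i hi, sub_self, smul_zero]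
  have hlimP : ‖F v‖⁻¹ • F v ∈ {y₀ : EuclideanSpace ℝ (Fin (n + 2)) |
      ∀ i : Fin (n + 2), n ≤ (i : ℕ) → y₀ i = 0} :=
    hPclosed.mem_of_tendsto hqlim hqP
  have hFvP : ∀ i : Fin (n + 2), n ≤ (i : ℕ) → F v i = 0 := by
    intro i hi
    have h1 := hlimP i hi
    rw [PiLp.smul_apply] at h1
    exact (smul_eq_zero.mp h1).resolve_left (inv_ne_zero (norm_ne_zero_iff.mpr hFv0))
  have hvtc : v ∈ tangentConeAt ℝ M x := by
    have h1 := aux_tangent_mem n M x hx V f g hVopen hxV hfVopen hgCD hgf himg (F v) hFvP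
    rw [← hDFapp v]
    exact h1
  exact hvU (hSx ⟨hvtc, mem_sphere_zero_iff_norm.mpr hv⟩)
end

section
/- Let x ∈ M, let U ⊆ S^{n+1} be open with U = −U and S_x ⊆ U, let r > 0 be such that Sec_x(M ∩ B̄(x,r) \ {x}) ⊆ U, and let v ∈ S^{n+1} \ U. Then there exist an open set V ⊆ S^{n+1} containing v and an open ball B ⊆ B(x,r) containing x such that for every x′ ∈ B there is a sign η ∈ {+1, −1} (possibly depending on x′) with η·V disjoint from Sec_{x′}(M ∩ B̄(x,r)), i.e., for every v′ ∈ V and every y ∈ M ∩ B̄(x,r) with y ≠ x′ one has (y − x′)/‖y − x′‖ ≠ η v′. -/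
open Metric

open Filter Topology

/-- If `u` is close to `c • v` (relative error `δ ≤ 1/2`) with `c > 0` and `v` a unit vector,
then `u ≠ 0` and the normalization of `u` is `4δ`-close to `v`. -/
private lemma normalize_close {E : Type*} [NormedAddCommGroup E] [NormedSpace ℝ E]
    {u v : E} {c δ : ℝ} (hc : 0 < c) (hv : ‖v‖ = 1) (hδ0 : 0 ≤ δ) (hδ : δ ≤ 1/2)
    (h : ‖u - c • v‖ ≤ c * δ) : u ≠ 0 ∧ ‖‖u‖⁻¹ • u - v‖ ≤ 4 * δ := by
  have hcv : ‖c • v‖ = c := by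
    rw [norm_smul, hv, Real.norm_eq_abs, abs_of_pos hc, mul_one]
  have h1 : c - c * δ ≤ ‖u‖ := by
    have h2 : ‖c • v‖ - ‖u‖ ≤ ‖c • v - u‖ := norm_sub_norm_le _ _
    rw [norm_sub_rev] at h2
    rw [hcv] at h2
    linarith
  have hu2 : c / 2 ≤ ‖u‖ := by nlinarith
  have hupos : (0:ℝ) < ‖u‖ := by nlinarith
  have hune : u ≠ 0 := norm_pos_iff.1 hupos
  refine ⟨hune, ?_⟩
  have hsplit : ‖u‖⁻¹ • u - v = ‖u‖⁻¹ • (u - c • v) + ((‖u‖⁻¹ * c) - 1) • v := by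
    rw [smul_sub, sub_smul, one_smul, smul_smul]
    abel
  have hupper : |c - ‖u‖| ≤ c * δ := by
    have h3 : |‖c • v‖ - ‖u‖| ≤ ‖c • v - u‖ := abs_norm_sub_norm_le _ _
    rw [norm_sub_rev] at h3
    rw [hcv] at h3
    linarith
  have hterm2 : |‖u‖⁻¹ * c - 1| ≤ ‖u‖⁻¹ * (c * δ) := by
    have : ‖u‖⁻¹ * c - 1 = ‖u‖⁻¹ * (c - ‖u‖) := by
      field_simp
    rw [this, abs_mul, abs_of_pos (inv_pos.2 hupos)]
    exact mul_le_mul_of_nonneg_left hupper (le_of_lt (inv_pos.2 hupos))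
  have hinv : ‖u‖⁻¹ ≤ 2 / c := by
    rw [inv_le_comm₀ hupos (by positivity), inv_div]
    exact hu2
  calc ‖‖u‖⁻¹ • u - v‖ = ‖‖u‖⁻¹ • (u - c • v) + ((‖u‖⁻¹ * c) - 1) • v‖ := by rw [hsplit]
    _ ≤ ‖‖u‖⁻¹ • (u - c • v)‖ + ‖((‖u‖⁻¹ * c) - 1) • v‖ := norm_add_le _ _
    _ = ‖u‖⁻¹ * ‖u - c • v‖ + |‖u‖⁻¹ * c - 1| := by
        rw [norm_smul, norm_smul, hv, mul_one, Real.norm_eq_abs, Real.norm_eq_abs,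
          abs_of_pos (inv_pos.2 hupos)]
    _ ≤ ‖u‖⁻¹ * (c * δ) + ‖u‖⁻¹ * (c * δ) :=
        add_le_add (mul_le_mul_of_nonneg_left h (le_of_lt (inv_pos.2 hupos))) hterm2
    _ ≤ (2/c) * (c * δ) + (2/c) * (c * δ) :=
        add_le_add (mul_le_mul_of_nonneg_right hinv (by positivity))
          (mul_le_mul_of_nonneg_right hinv (by positivity))
    _ = 4 * δ := by field_simp; ring
  
/-- Key lemma: if two sequences of points of a smooth submanifold converge to `x ∈ M`
and the unit secants between them converge to a unit vector `v`, then `v` lies in the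
tangent cone of `M` at `x`. -/
private lemma mem_tangentCone_of_pair_secants (n : ℕ) (hn : 1 ≤ n)
    (M : Set (EuclideanSpace ℝ (Fin (n + 2)))) (hman : IsSmoothSubmanifold n M)
    (x : EuclideanSpace ℝ (Fin (n + 2))) (hx : x ∈ M)
    (y z : ℕ → EuclideanSpace ℝ (Fin (n + 2)))
    (hy : ∀ k, y k ∈ M) (hz : ∀ k, z k ∈ M)
    (hyz : ∀ᶠ k in atTop, y k ≠ z k)
    (hylim : Tendsto y atTop (𝓝 x))
    (hzlim : Tendsto z atTop (𝓝 x))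
    (v : EuclideanSpace ℝ (Fin (n + 2))) (hv : ‖v‖ = 1)
    (hdir : Tendsto (fun k => ‖y k - z k‖⁻¹ • (y k - z k)) atTop (𝓝 v)) :
    v ∈ tangentConeAt ℝ M x := by
  classical
  obtain ⟨V, f, g, hVopen, hxV, hfVopen, hf, hg, hgf, hfg, himg⟩ := hman x hx
  set P : Set (EuclideanSpace ℝ (Fin (n + 2))) :=
    {w | ∀ i : Fin (n + 2), n ≤ (i : ℕ) → w i = 0} with hPdef
  have hPclosed : IsClosed P := by
    have : P = ⋂ (i : Fin (n+2)) (_ : n ≤ (i:ℕ)), ((EuclideanSpace.proj (𝕜 := ℝ) i) ⁻¹' {0}) := by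
      ext w; simp [hPdef, Set.mem_iInter]
    rw [this]
    exact isClosed_iInter fun i => isClosed_iInter fun _ =>
      isClosed_singleton.preimage (EuclideanSpace.proj i).continuous
  have hPsub : ∀ {w w'}, w ∈ P → w' ∈ P → w - w' ∈ P := by
    intro w w' hw hw' i hi
    have : (w - w') i = w i - w' i := by simp
    rw [this, hw i hi, hw' i hi, sub_zero]
  have hPadd : ∀ {w w'}, w ∈ P → w' ∈ P → w + w' ∈ P := by
    intro w w' hw hw' i hi
    have : (w + w') i = w i + w' i := by simp
    rw [this, hw i hi, hw' i hi, add_zero]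
  have hPsmul : ∀ (c : ℝ) {w}, w ∈ P → c • w ∈ P := by
    intro c w hw i hi
    have : (c • w) i = c * w i := by simp
    rw [this, hw i hi, mul_zero]
  have hgfx : g (f x) = x := hgf x hxV
  have hpP : f x ∈ f '' V ∩ P := by
    rw [← himg]; exact Set.mem_image_of_mem f ⟨hx, hxV⟩
  obtain ⟨δ, hδpos, hδball⟩ := Metric.isOpen_iff.1 hfVopen (f x) hpP.1
  -- membership of chart-plane points in M
  have hMmem : ∀ q ∈ f '' V ∩ P, g q ∈ M ∧ f (g q) = q := by
    intro q hq
    rw [← himg] at hq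
    obtain ⟨m, hm, hfm⟩ := hq
    have hgq : g q = m := by rw [← hfm, hgf m hm.2]
    exact ⟨by rw [hgq]; exact hm.1, by rw [hgq, hfm]⟩
  -- differentiability of g
  have hgdiff : ∀ q ∈ f '' V, DifferentiableAt ℝ g q := fun q hq =>
    ((hg.contDiffAt (hfVopen.mem_nhds hq)).differentiableAt (by simp))
  set A := fderiv ℝ g (f x) with hA
  have hgA : HasFDerivAt g A (f x) := (hgdiff _ hpP.1).hasFDerivAt
  have hfdiff : DifferentiableAt ℝ f x :=
    (hf.contDiffAt (hVopen.mem_nhds hxV)).differentiableAt (by simp)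
  set B := fderiv ℝ f x with hB
  -- B ∘ A = id
  have hBA : ∀ w, B (A w) = w := by
    have hfB : HasFDerivAt f B (g (f x)) := by rw [hgfx]; exact hfdiff.hasFDerivAt
    have hcomp : HasFDerivAt (f ∘ g) (B.comp A) (f x) := hfB.comp (f x) hgA
    have hev : (id : EuclideanSpace ℝ (Fin (n+2)) → _) =ᶠ[𝓝 (f x)] (f ∘ g) := by
      filter_upwards [hfVopen.mem_nhds hpP.1] with q hq
      exact (hfg q hq).symm
    have h2 : HasFDerivAt (id : EuclideanSpace ℝ (Fin (n+2)) → _) (B.comp A) (f x) :=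
      hcomp.congr_of_eventuallyEq hev
    have h3 : B.comp A = ContinuousLinearMap.id ℝ _ := h2.unique (hasFDerivAt_id _)
    intro w
    have := congrArg (fun (L : EuclideanSpace ℝ (Fin (n+2)) →L[ℝ] EuclideanSpace ℝ (Fin (n+2))) => L w) h3
    simpa using this
  have hAnorm : ∀ w, ‖w‖ ≤ ‖B‖ * ‖A w‖ := by
    intro w
    conv_lhs => rw [← hBA w]
    exact B.le_opNorm _
  -- continuity of derivative of g
  have hDgcont : ContinuousAt (fderiv ℝ g) (f x) :=
    (hg.continuousOn_fderiv_of_isOpen hfVopen (by exact_mod_cast le_top)).continuousAt (hfVopen.mem_nhds hpP.1)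
  -- sequences in the chart
  set a : ℕ → EuclideanSpace ℝ (Fin (n+2)) := fun k => f (y k) with ha
  set b : ℕ → EuclideanSpace ℝ (Fin (n+2)) := fun k => f (z k) with hb
  have hfcontAt : ContinuousAt f x := hf.continuousOn.continuousAt (hVopen.mem_nhds hxV)
  have halim : Tendsto a atTop (𝓝 (f x)) := hfcontAt.tendsto.comp hylim
  have hblim : Tendsto b atTop (𝓝 (f x)) := hfcontAt.tendsto.comp hzlim
  have hyV : ∀ᶠ k in atTop, y k ∈ V := hylim.eventually (hVopen.eventually_mem hxV)
  have hzV : ∀ᶠ k in atTop, z k ∈ V := hzlim.eventually (hVopen.eventually_mem hxV)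
  have hgood : ∀ᶠ k in atTop, a k ∈ f '' V ∩ P ∧ b k ∈ f '' V ∩ P ∧ a k ≠ b k
      ∧ g (a k) = y k ∧ g (b k) = z k := by
    filter_upwards [hyV, hzV, hyz] with k h1 h2 h3
    have hak : a k ∈ f '' V ∩ P := by
      rw [← himg]; exact Set.mem_image_of_mem f ⟨hy k, h1⟩
    have hbk : b k ∈ f '' V ∩ P := by
      rw [← himg]; exact Set.mem_image_of_mem f ⟨hz k, h2⟩
    refine ⟨hak, hbk, ?_, hgf _ h1, hgf _ h2⟩
    intro hab
    apply h3
    have := congrArg g hab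
    rwa [hgf _ h1, hgf _ h2] at this
  -- normalized chart secants
  set u₀ : EuclideanSpace ℝ (Fin (n+2)) := EuclideanSpace.single (0 : Fin (n+2)) (1:ℝ) with hu₀
  have hu₀norm : ‖u₀‖ = 1 := by rw [hu₀, EuclideanSpace.norm_single]; norm_num
  have hu₀P : u₀ ∈ P := by
    intro i hi
    rw [hu₀, EuclideanSpace.single_apply]
    have : i ≠ 0 := by
      intro h; subst h; simp at hi; omega
    simp [this]
  set e : ℕ → EuclideanSpace ℝ (Fin (n+2)) := fun k =>
    if h : a k ∈ f '' V ∩ P ∧ b k ∈ f '' V ∩ P ∧ a k ≠ b k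
    then ‖a k - b k‖⁻¹ • (a k - b k) else u₀ with he
  set K : Set (EuclideanSpace ℝ (Fin (n+2))) := sphere 0 1 ∩ P with hK
  have hKcpt : IsCompact K := (isCompact_sphere 0 1).inter_right hPclosed
  have heK : ∀ k, e k ∈ K := by
    intro k
    simp only [he]
    by_cases h : a k ∈ f '' V ∩ P ∧ b k ∈ f '' V ∩ P ∧ a k ≠ b k
    · rw [dif_pos h]
      have hne : a k - b k ≠ 0 := sub_ne_zero.2 h.2.2
      constructor
      · rw [mem_sphere_zero_iff_norm, norm_smul, Real.norm_eq_abs,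
          abs_of_pos (inv_pos.2 (norm_pos_iff.2 hne)),
          inv_mul_cancel₀ (norm_ne_zero_iff.2 hne)]
      · exact hPsmul _ (hPsub h.1.2 h.2.1.2)
    · rw [dif_neg h]
      exact ⟨by rw [mem_sphere_zero_iff_norm]; exact hu₀norm, hu₀P⟩
  obtain ⟨eL, heLK, φ, hφ, heconv⟩ := hKcpt.tendsto_subseq heK
  have heLnorm : ‖eL‖ = 1 := mem_sphere_zero_iff_norm.1 heLK.1
  have hL : A eL ≠ 0 := by
    intro h0
    have := hAnorm eL
    rw [h0, norm_zero, mul_zero, heLnorm] at this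
    linarith
  set L := A eL with hLdef
  -- the key derivative estimate
  set R : ℕ → EuclideanSpace ℝ (Fin (n+2)) := fun k => ‖a k - b k‖⁻¹ • (g (a k) - g (b k))
    with hR
  have hkey : Tendsto (fun k => R k - A (e k)) atTop (𝓝 0) := by
    rw [NormedAddCommGroup.tendsto_nhds_zero]
    intro ε hε
    obtain ⟨δ₁, hδ₁pos, hδ₁⟩ := Metric.continuousAt_iff.1 hDgcont (ε/2) (half_pos hε)
    set δ₂ := min δ δ₁ with hδ₂def
    have hδ₂pos : 0 < δ₂ := lt_min hδpos hδ₁pos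
    have hballsub : ball (f x) δ₂ ⊆ f '' V := fun q hq =>
      hδball (ball_subset_ball (min_le_left _ _) hq)
    have hbound : ∀ q ∈ ball (f x) δ₂, ‖fderiv ℝ g q - A‖ ≤ ε/2 := by
      intro q hq
      have : dist q (f x) < δ₁ := lt_of_lt_of_le (mem_ball.1 hq) (min_le_right _ _)
      have := hδ₁ this
      rw [dist_eq_norm] at this
      exact this.le
    have haev : ∀ᶠ k in atTop, a k ∈ ball (f x) δ₂ :=
      halim.eventually ((isOpen_ball).eventually_mem (mem_ball_self hδ₂pos))
    have hbev : ∀ᶠ k in atTop, b k ∈ ball (f x) δ₂ :=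
      hblim.eventually ((isOpen_ball).eventually_mem (mem_ball_self hδ₂pos))
    filter_upwards [haev, hbev, hgood] with k hak hbk hgd
    have hed : e k = ‖a k - b k‖⁻¹ • (a k - b k) := by
      simp only [he]; exact dif_pos ⟨hgd.1, hgd.2.1, hgd.2.2.1⟩
    have hmvt : ‖g (a k) - g (b k) - A (a k - b k)‖ ≤ ε/2 * ‖a k - b k‖ :=
      (convex_ball (f x) δ₂).norm_image_sub_le_of_norm_fderiv_le'
        (fun q hq => hgdiff q (hballsub hq)) hbound hbk hak
    have hmpos : (0:ℝ) < ‖a k - b k‖ := norm_pos_iff.2 (sub_ne_zero.2 hgd.2.2.1)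
    have heq : R k - A (e k) = ‖a k - b k‖⁻¹ • (g (a k) - g (b k) - A (a k - b k)) := by
      simp only [hR, hed, map_sub, map_smul, smul_sub]
    rw [heq, norm_smul, Real.norm_eq_abs, abs_of_pos (inv_pos.2 hmpos)]
    calc ‖a k - b k‖⁻¹ * ‖g (a k) - g (b k) - A (a k - b k)‖
        ≤ ‖a k - b k‖⁻¹ * (ε/2 * ‖a k - b k‖) := by
          exact mul_le_mul_of_nonneg_left hmvt (le_of_lt (inv_pos.2 hmpos))
      _ = ε/2 := by field_simp
      _ < ε := by linarith
  -- limit of R along the subsequence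
  have hRe : Tendsto (fun k => R (φ k)) atTop (𝓝 L) := by
    have h1 : Tendsto (fun k => R (φ k) - A (e (φ k))) atTop (𝓝 0) :=
      hkey.comp hφ.tendsto_atTop
    have h2 : Tendsto (fun k => A (e (φ k))) atTop (𝓝 L) :=
      (A.continuous.tendsto eL).comp heconv
    have := h1.add h2
    rw [zero_add] at this
    exact this.congr (fun k => by abel)
  -- normalized R equals the pair secant direction eventually
  have hRdir : ∀ᶠ k in atTop, ‖R k‖⁻¹ • R k = ‖y k - z k‖⁻¹ • (y k - z k) := by
    filter_upwards [hgood, hyz] with k hgd hyzk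
    have hmpos : (0:ℝ) < ‖a k - b k‖ := norm_pos_iff.2 (sub_ne_zero.2 hgd.2.2.1)
    have hwpos : (0:ℝ) < ‖y k - z k‖ := norm_pos_iff.2 (sub_ne_zero.2 hyzk)
    simp only [hR]
    rw [hgd.2.2.2.1, hgd.2.2.2.2]
    rw [norm_smul, Real.norm_eq_abs, abs_of_pos (inv_pos.2 hmpos), smul_smul]
    congr 1
    field_simp
  have hcontnorm : ContinuousAt (fun w : EuclideanSpace ℝ (Fin (n+2)) => ‖w‖⁻¹ • w) L :=
    (continuousAt_id.norm.inv₀ (norm_ne_zero_iff.2 hL)).smul continuousAt_id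
  have hRn : Tendsto (fun k => ‖R (φ k)‖⁻¹ • R (φ k)) atTop (𝓝 (‖L‖⁻¹ • L)) :=
    hcontnorm.tendsto.comp hRe
  have hdirφ : Tendsto (fun k => ‖R (φ k)‖⁻¹ • R (φ k)) atTop (𝓝 v) := by
    have h1 : Tendsto (fun k => ‖y (φ k) - z (φ k)‖⁻¹ • (y (φ k) - z (φ k))) atTop (𝓝 v) :=
      hdir.comp hφ.tendsto_atTop
    exact h1.congr' ((hφ.tendsto_atTop.eventually hRdir).mono fun k hk => hk.symm)
  have hveq : v = ‖L‖⁻¹ • L := tendsto_nhds_unique hdirφ hRn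
  -- now show ‖L‖⁻¹ • L ∈ tangentConeAt
  rw [hveq]
  set t : ℕ → ℝ := fun j => 1 / ((j : ℝ) + 1) with ht
  have htpos : ∀ j, 0 < t j := fun j => by positivity
  have htlim : Tendsto t atTop (𝓝 0) := tendsto_one_div_add_atTop_nhds_zero_nat
  set d : ℕ → EuclideanSpace ℝ (Fin (n+2)) := fun j => g (f x + t j • eL) - x with hd
  set c : ℕ → ℝ := fun j => ‖L‖⁻¹ * ((j:ℝ) + 1) with hc
  refine mem_tangentConeAt_iff_exists_seq_norm_tendsto_atTop.2 ⟨c, d, ?_, ?_, ?_⟩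
  swap
  · -- eventual membership
    have : ∀ᶠ j in atTop, t j < δ := htlim.eventually (eventually_lt_nhds hδpos)
    filter_upwards [this] with j hj
    have hq : f x + t j • eL ∈ f '' V ∩ P := by
      constructor
      · apply hδball
        rw [mem_ball, dist_eq_norm, add_sub_cancel_left, norm_smul, Real.norm_eq_abs,
          abs_of_pos (htpos j), heLnorm, mul_one]
        exact hj
      · exact hPadd hpP.2 (hPsmul _ heLK.2)
    have := (hMmem _ hq).1
    simp only [hd]
    simpa using this
  · -- norms tend to infinity
    have h1 : Tendsto c atTop atTop := by
      rw [hc]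
      exact (tendsto_atTop_add_const_right atTop (1:ℝ)
        tendsto_natCast_atTop_atTop).const_mul_atTop (inv_pos.2 (norm_pos_iff.2 hL))
    have h2 : ∀ j, ‖c j‖ = c j := fun j => by
      have hpos : 0 < c j := by
        simp only [hc]
        exact mul_pos (inv_pos.2 (norm_pos_iff.2 hL)) (by positivity)
      rw [Real.norm_eq_abs, abs_of_pos hpos]
    exact Tendsto.congr (fun j => (h2 j).symm) h1
  · -- c j • d j → ‖L‖⁻¹ • L
    have hψderiv : HasDerivAt (fun s : ℝ => f x + s • eL) eL 0 := by
      have := ((hasDerivAt_id (0:ℝ)).smul_const eL).const_add (f x)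
      simpa using this
    have hφt : HasDerivAt (fun s : ℝ => g (f x + s • eL)) L 0 := by
      have := hgA.comp_hasDerivAt_of_eq 0 hψderiv (by simp)
      exact this
      
    have hslope := hasDerivAt_iff_tendsto_slope.1 hφt
    have htne : Tendsto t atTop (𝓝[≠] (0:ℝ)) := by
      rw [tendsto_nhdsWithin_iff]
      exact ⟨htlim, Eventually.of_forall fun j => (htpos j).ne'⟩
    have hslopelim : Tendsto (fun j => slope (fun s : ℝ => g (f x + s • eL)) 0 (t j))
        atTop (𝓝 L) := hslope.comp htne
    have hslopeeq : ∀ j, slope (fun s : ℝ => g (f x + s • eL)) 0 (t j)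
        = ((j:ℝ) + 1) • d j := by
      intro j
      rw [slope_def_module]
      have h0 : f x + (0:ℝ) • eL = f x := by simp
      have h1 : (t j - 0)⁻¹ = ((j:ℝ)+1) := by
        simp only [ht, sub_zero]
        rw [one_div, inv_inv]
      simp only [h0, hgfx, hd, h1]
    have h1 : Tendsto (fun j : ℕ => ((j:ℝ) + 1) • d j) atTop (𝓝 L) :=
      hslopelim.congr hslopeeq
    have h2 := h1.const_smul (‖L‖⁻¹)
    refine h2.congr fun j => ?_
    rw [smul_smul, hc]
  
/-- Let `x ∈ M`, let `U ⊆ S^{n+1}` be open in the sphere, symmetric (`−U = U`) and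
containing `S_x = T_xM ∩ S^{n+1}` (tangent space realized as the tangent cone), let
`r > 0` be such that `Sec_x(M ∩ B̄(x,r) \ {x}) ⊆ U`, and let `v ∈ S^{n+1} \ U`. Then
there are an open subset `V` of the sphere containing `v` and an open ball
`B(x,ρ) ⊆ B(x,r)` about `x` such that for every `x′ ∈ B(x,ρ)` there is a sign
`η ∈ {±1}` with `η·V` disjoint from `Sec_{x′}(M ∩ B̄(x,r))`. -/
theorem secant_avoids_neighborhood (n : ℕ) (hn : 1 ≤ n)
    (M : Set (EuclideanSpace ℝ (Fin (n + 2))))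
    (hne : M.Nonempty) (hcpt : IsCompact M) (hman : IsSmoothSubmanifold n M)
    (x : EuclideanSpace ℝ (Fin (n + 2))) (hx : x ∈ M)
    (U : Set (EuclideanSpace ℝ (Fin (n + 2))))
    (hUsub : U ⊆ sphere (0 : EuclideanSpace ℝ (Fin (n + 2))) 1)
    (hUopen : IsOpen ((↑·) ⁻¹' U : Set (sphere (0 : EuclideanSpace ℝ (Fin (n + 2))) 1)))
    (hUsymm : -U = U)
    (hSx : tangentConeAt ℝ M x ∩ sphere (0 : EuclideanSpace ℝ (Fin (n + 2))) 1 ⊆ U)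
    (r : ℝ) (hr : 0 < r)
    (hsec : ∀ y ∈ M ∩ closedBall x r, y ≠ x → ‖y - x‖⁻¹ • (y - x) ∈ U)
    (v : EuclideanSpace ℝ (Fin (n + 2))) (hv : ‖v‖ = 1) (hvU : v ∉ U) :
    ∃ (V : Set (EuclideanSpace ℝ (Fin (n + 2)))) (ρ : ℝ),
      v ∈ V ∧ V ⊆ sphere (0 : EuclideanSpace ℝ (Fin (n + 2))) 1 ∧
      IsOpen ((↑·) ⁻¹' V : Set (sphere (0 : EuclideanSpace ℝ (Fin (n + 2))) 1)) ∧
      0 < ρ ∧ ball x ρ ⊆ ball x r ∧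
      ∀ x' ∈ ball x ρ, ∃ η : ℝ, (η = 1 ∨ η = -1) ∧
        ∀ v' ∈ V, ∀ y ∈ M ∩ closedBall x r, y ≠ x' →
          ‖y - x'‖⁻¹ • (y - x') ≠ η • v' := by
  by_contra hcon
  push_neg at hcon
  -- shrinking neighborhoods and radii
  set Vk : ℕ → Set (EuclideanSpace ℝ (Fin (n+2))) :=
    fun k => sphere (0 : EuclideanSpace ℝ (Fin (n + 2))) 1 ∩ ball v (1/((k:ℝ)+1)) with hVk
  set ρk : ℕ → ℝ := fun k => min r (1/((k:ℝ)+1)) with hρk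
  have hεpos : ∀ k : ℕ, (0:ℝ) < 1/((k:ℝ)+1) := fun k => by positivity
  have hmain : ∀ k : ℕ, ∃ x' ∈ ball x (ρk k), ∀ η : ℝ, (η = 1 ∨ η = -1) →
      ∃ v' ∈ Vk k, ∃ yy ∈ M ∩ closedBall x r, yy ≠ x' ∧
        ‖yy - x'‖⁻¹ • (yy - x') = η • v' := by
    intro k
    refine hcon (Vk k) (ρk k) ?_ ?_ ?_ ?_ ?_
    · exact ⟨mem_sphere_zero_iff_norm.2 hv, mem_ball_self (hεpos k)⟩
    · exact Set.inter_subset_left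
    · have heq : ((↑·) ⁻¹' (Vk k) : Set (sphere (0 : EuclideanSpace ℝ (Fin (n + 2))) 1))
          = ((↑·) ⁻¹' (ball v (1/((k:ℝ)+1)))
            : Set (sphere (0 : EuclideanSpace ℝ (Fin (n + 2))) 1)) := by
        ext w
        show (w : EuclideanSpace ℝ (Fin (n + 2))) ∈ _ ∩ ball v _ ↔ _
        exact ⟨fun h => h.2, fun h => ⟨w.2, h⟩⟩
      rw [heq]
      exact isOpen_ball.preimage continuous_subtype_val
    · exact lt_min hr (hεpos k)
    · exact ball_subset_ball (min_le_left _ _)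
  choose xp hxp hsign using hmain
  have h1 := fun k => hsign k 1 (Or.inl rfl)
  choose vp hvp yy hyy hyne hyeq using h1
  have h2 := fun k => hsign k (-1) (Or.inr rfl)
  choose wp hwp zz hzz hzne hzeq using h2
  have hseq0 : Tendsto (fun k : ℕ => 1/((k:ℝ)+1)) atTop (𝓝 0) :=
    tendsto_one_div_add_atTop_nhds_zero_nat
  -- limits of the chosen sequences
  have hxplim : Tendsto xp atTop (𝓝 x) := by
    rw [tendsto_iff_dist_tendsto_zero]
    refine squeeze_zero (fun k => dist_nonneg) (fun k => ?_) hseq0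
    exact le_trans (le_of_lt (mem_ball.1 (hxp k))) (min_le_right _ _)
  have hvplim : Tendsto vp atTop (𝓝 v) := by
    rw [tendsto_iff_dist_tendsto_zero]
    refine squeeze_zero (fun k => dist_nonneg) (fun k => ?_) hseq0
    exact le_of_lt (mem_ball.1 (hvp k).2)
  have hwplim : Tendsto wp atTop (𝓝 v) := by
    rw [tendsto_iff_dist_tendsto_zero]
    refine squeeze_zero (fun k => dist_nonneg) (fun k => ?_) hseq0
    exact le_of_lt (mem_ball.1 (hwp k).2)
  -- compactness: extract convergent subsequences
  have hMBcpt : IsCompact (M ∩ closedBall x r) := hcpt.inter_right isClosed_closedBall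
  obtain ⟨yL, hyL, φ, hφ, hyconv⟩ := hMBcpt.tendsto_subseq hyy
  obtain ⟨zL, hzL, ψ, hψ, hzconv⟩ := hMBcpt.tendsto_subseq (fun k => hzz (φ k))
  set χ : ℕ → ℕ := φ ∘ ψ with hχdef
  have hχ : Tendsto χ atTop atTop := (hφ.comp hψ).tendsto_atTop
  have hyχ : Tendsto (fun k => yy (χ k)) atTop (𝓝 yL) := hyconv.comp hψ.tendsto_atTop
  have hzχ : Tendsto (fun k => zz (χ k)) atTop (𝓝 zL) := hzconv
  have hxpχ : Tendsto (fun k => xp (χ k)) atTop (𝓝 x) := hxplim.comp hχ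
  have hvpχ : Tendsto (fun k => vp (χ k)) atTop (𝓝 v) := hvplim.comp hχ
  have hwpχ : Tendsto (fun k => wp (χ k)) atTop (𝓝 v) := hwplim.comp hχ
  -- a helper for the far cases
  have hfar : ∀ (w : EuclideanSpace ℝ (Fin (n+2))) (s : ℕ → EuclideanSpace ℝ (Fin (n+2))),
      w ∈ M ∩ closedBall x r → w ≠ x →
      Tendsto s atTop (𝓝 w) → (∀ k, s k ≠ xp (χ k)) →
      Tendsto (fun k => ‖s k - xp (χ k)‖⁻¹ • (s k - xp (χ k))) atTop
        (𝓝 (‖w - x‖⁻¹ • (w - x))) := by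
    intro w s hwmem hwne hslim hsne
    have hsub : Tendsto (fun k => s k - xp (χ k)) atTop (𝓝 (w - x)) := hslim.sub hxpχ
    have hcontn : ContinuousAt (fun u : EuclideanSpace ℝ (Fin (n+2)) => ‖u‖⁻¹ • u) (w - x) :=
      (continuousAt_id.norm.inv₀ (norm_ne_zero_iff.2 (sub_ne_zero.2 hwne))).smul continuousAt_id
    exact hcontn.tendsto.comp hsub
  by_cases hyx : yL = x
  · by_cases hzx : zL = x
    · -- both target sequences converge to x : use the pair-secant lemma
      set Y : ℕ → EuclideanSpace ℝ (Fin (n+2)) := fun k => yy (χ k) with hY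
      set Z : ℕ → EuclideanSpace ℝ (Fin (n+2)) := fun k => zz (χ k) with hZ
      have hYeq : ∀ k, Y k - xp (χ k) = ‖Y k - xp (χ k)‖ • vp (χ k) := by
        intro k
        have h := hyeq (χ k)
        rw [one_smul] at h
        rw [← h, smul_smul, mul_inv_cancel₀
          (norm_ne_zero_iff.2 (sub_ne_zero.2 (hyne (χ k)))), one_smul]
      have hZeq : ∀ k, Z k - xp (χ k) = -(‖Z k - xp (χ k)‖ • wp (χ k)) := by
        intro k
        have h := hzeq (χ k)
        rw [neg_one_smul] at h
        have h3 := congrArg (fun u : EuclideanSpace ℝ (Fin (n+2)) =>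
          ‖Z k - xp (χ k)‖ • u) h
        simp only [smul_smul, mul_inv_cancel₀
          (norm_ne_zero_iff.2 (sub_ne_zero.2 (hzne (χ k)))), one_smul, smul_neg] at h3
        rwa [show ‖Z k - xp (χ k)‖ * ‖zz (χ k) - xp (χ k)‖⁻¹ = 1 from mul_inv_cancel₀
          (norm_ne_zero_iff.2 (sub_ne_zero.2 (hzne (χ k)))), one_smul] at h3
      set α : ℕ → ℝ := fun k => ‖Y k - xp (χ k)‖ with hα
      set β : ℕ → ℝ := fun k => ‖Z k - xp (χ k)‖ with hβ
      have hαpos : ∀ k, 0 < α k := fun k =>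
        norm_pos_iff.2 (sub_ne_zero.2 (hyne (χ k)))
      have hβpos : ∀ k, 0 < β k := fun k =>
        norm_pos_iff.2 (sub_ne_zero.2 (hzne (χ k)))
      have hYZ : ∀ k, Y k - Z k = α k • vp (χ k) + β k • wp (χ k) := by
        intro k
        have : Y k - Z k = (Y k - xp (χ k)) - (Z k - xp (χ k)) := by abel
        rw [this, hYeq k, hZeq k, hα, hβ]
        abel
      set δs : ℕ → ℝ := fun k => ‖vp (χ k) - v‖ + ‖wp (χ k) - v‖ with hδs
      have hδslim : Tendsto δs atTop (𝓝 0) := by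
        have h1 : Tendsto (fun k => vp (χ k) - v) atTop (𝓝 0) := by
          simpa using hvpχ.sub (tendsto_const_nhds :
            Tendsto (fun _ : ℕ => v) atTop (𝓝 v))
        have h2 : Tendsto (fun k => wp (χ k) - v) atTop (𝓝 0) := by
          simpa using hwpχ.sub (tendsto_const_nhds :
            Tendsto (fun _ : ℕ => v) atTop (𝓝 v))
        simpa using (h1.norm.add h2.norm)
      have hbound : ∀ k, ‖(Y k - Z k) - (α k + β k) • v‖ ≤ (α k + β k) * δs k := by
        intro k
        have hsplit : (Y k - Z k) - (α k + β k) • v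
            = α k • (vp (χ k) - v) + β k • (wp (χ k) - v) := by
          rw [hYZ k, add_smul, smul_sub, smul_sub]
          abel
        rw [hsplit]
        calc ‖α k • (vp (χ k) - v) + β k • (wp (χ k) - v)‖
            ≤ ‖α k • (vp (χ k) - v)‖ + ‖β k • (wp (χ k) - v)‖ := norm_add_le _ _
          _ = α k * ‖vp (χ k) - v‖ + β k * ‖wp (χ k) - v‖ := by
              rw [norm_smul, norm_smul, Real.norm_eq_abs, Real.norm_eq_abs,
                abs_of_pos (hαpos k), abs_of_pos (hβpos k)]
          _ ≤ (α k + β k) * δs k := by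
              have h1 := (hαpos k).le
              have h2 := (hβpos k).le
              have h3 : (0:ℝ) ≤ ‖vp (χ k) - v‖ := norm_nonneg _
              have h4 : (0:ℝ) ≤ ‖wp (χ k) - v‖ := norm_nonneg _
              simp only [hδs]
              nlinarith
      have hδsev : ∀ᶠ k in atTop, δs k ≤ 1/2 ∧ 0 ≤ δs k := by
        filter_upwards [hδslim.eventually (eventually_le_nhds (by norm_num : (0:ℝ) < 1/2))]
          with k hk
        exact ⟨hk, add_nonneg (norm_nonneg _) (norm_nonneg _)⟩
      have hkey : ∀ᶠ k in atTop, Y k ≠ Z k ∧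
          ‖‖Y k - Z k‖⁻¹ • (Y k - Z k) - v‖ ≤ 4 * δs k := by
        filter_upwards [hδsev] with k hk
        have := normalize_close (u := Y k - Z k) (v := v) (c := α k + β k) (δ := δs k)
          (add_pos (hαpos k) (hβpos k)) hv hk.2 hk.1 (hbound k)
        exact ⟨fun h => this.1 (by rw [h]; simp), this.2⟩
      have hYZne : ∀ᶠ k in atTop, Y k ≠ Z k := hkey.mono fun k hk => hk.1
      have hdir : Tendsto (fun k => ‖Y k - Z k‖⁻¹ • (Y k - Z k)) atTop (𝓝 v) := by
        rw [← tendsto_sub_nhds_zero_iff]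
        refine squeeze_zero_norm' (hkey.mono fun k hk => hk.2) ?_
        simpa using hδslim.const_mul 4
      have hvtc : v ∈ tangentConeAt ℝ M x :=
        mem_tangentCone_of_pair_secants n hn M hman x hx Y Z
          (fun k => (hyy (χ k)).1) (fun k => (hzz (χ k)).1) hYZne
          (by rw [hY]; exact hyx ▸ hyχ) (by rw [hZ]; exact hzx ▸ hzχ) v hv hdir
      exact hvU (hSx ⟨hvtc, mem_sphere_zero_iff_norm.2 hv⟩)
    · -- zL ≠ x : the secants to zz converge to a secant from x, giving -v ∈ U
      have hlim1 : Tendsto (fun k => ‖zz (χ k) - xp (χ k)‖⁻¹ • (zz (χ k) - xp (χ k)))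
          atTop (𝓝 (‖zL - x‖⁻¹ • (zL - x))) :=
        hfar zL _ hzL hzx hzχ (fun k => hzne (χ k))
      have hlim2 : Tendsto (fun k => ‖zz (χ k) - xp (χ k)‖⁻¹ • (zz (χ k) - xp (χ k)))
          atTop (𝓝 (-v)) := by
        have : ∀ k, ‖zz (χ k) - xp (χ k)‖⁻¹ • (zz (χ k) - xp (χ k)) = -(wp (χ k)) := by
          intro k
          have h := hzeq (χ k)
          rw [neg_one_smul] at h
          exact h
        rw [show (fun k => ‖zz (χ k) - xp (χ k)‖⁻¹ • (zz (χ k) - xp (χ k)))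
          = fun k => -(wp (χ k)) from funext this]
        exact hwpχ.neg
      have heq : -v = ‖zL - x‖⁻¹ • (zL - x) := tendsto_nhds_unique hlim2 hlim1
      have hmem : -v ∈ U := heq ▸ hsec zL hzL hzx
      rw [← hUsymm, Set.mem_neg, neg_neg] at hmem
      exact hvU hmem
  · -- yL ≠ x : the secants to yy converge to a secant from x, giving v ∈ U
    have hlim1 : Tendsto (fun k => ‖yy (χ k) - xp (χ k)‖⁻¹ • (yy (χ k) - xp (χ k)))
        atTop (𝓝 (‖yL - x‖⁻¹ • (yL - x))) :=
      hfar yL _ hyL hyx hyχ (fun k => hyne (χ k))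
    have hlim2 : Tendsto (fun k => ‖yy (χ k) - xp (χ k)‖⁻¹ • (yy (χ k) - xp (χ k)))
        atTop (𝓝 v) := by
      have : ∀ k, ‖yy (χ k) - xp (χ k)‖⁻¹ • (yy (χ k) - xp (χ k)) = vp (χ k) := by
        intro k
        have h := hyeq (χ k)
        rw [one_smul] at h
        exact h
      rw [show (fun k => ‖yy (χ k) - xp (χ k)‖⁻¹ • (yy (χ k) - xp (χ k)))
        = fun k => vp (χ k) from funext this]
      exact hvpχ
    have heq : v = ‖yL - x‖⁻¹ • (yL - x) := tendsto_nhds_unique hlim2 hlim1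
    exact hvU (heq ▸ hsec yL hyL hyx)
end

section
/- For every integer n ≥ 1, every integer m ≥ 0, and every D < 1, there exists a constant C > 0 such that for every i ∈ {1,…,n+1}, every multi-index α in the variables x₁,…,x_{n+2} with |α| = m, and all points x ≠ y in ℝ^{n+2} satisfying y_{n+2} − x_{n+2} ≤ D·‖y − x‖, the partial derivative with respect to x satisfies |∂_x^α F_i(x,y)| ≤ C · ‖y − x‖^{−(n+m)}. -/
open Real

/-- For `i ∈ {1,…,n+1}` (0-indexed: `i ≠ n+1`) and `x ≠ y` in `ℝ^{n+2}`, the coefficient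
function of the pulled-back form `Sec_x^*η`:
`F_i(x,y) = f_n((y_{n+2} − x_{n+2})/‖y − x‖)·(y_i − x_i)/‖y − x‖^{n+1}`. -/
noncomputable def secPullbackCoeff (n : ℕ) (i : Fin (n + 2))
    (x y : EuclideanSpace ℝ (Fin (n + 2))) : ℝ :=
  solidAngleF n ((y (Fin.last (n + 1)) - x (Fin.last (n + 1))) / ‖y - x‖) *
    (y i - x i) / ‖y - x‖ ^ (n + 1)


lemma continuous_rpow_const' {c : ℝ} (hc : 0 ≤ c) : Continuous fun x : ℝ => x ^ c :=
  continuous_iff_continuousAt.2 fun x => Real.continuousAt_rpow_const x c (Or.inr hc)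

lemma rpow_le_max {β M c z : ℝ} (hβ : 0 < β) (h1 : β ≤ z) (h2 : z ≤ M) :
    z ^ c ≤ max (β ^ c) (M ^ c) := by
  rcases le_or_gt 0 c with h | h
  · exact le_max_of_le_right (Real.rpow_le_rpow (hβ.le.trans h1) h2 h)
  · exact le_max_of_le_left (Real.rpow_le_rpow_of_nonpos hβ h1 h.le)

lemma base_pos {h t : ℝ} (hh : h < 2) (ht0 : 0 ≤ t) (ht1 : t ≤ 1) : 0 < 2 - h * t := by
  rcases le_or_gt h 0 with h' | h' <;> nlinarith

lemma aux_base_contOn (b h : ℝ) (hh : h < 2) :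
    ContinuousOn (fun t : ℝ => (2 - h * t) ^ b) (Set.Icc 0 1) := by
  intro t ht
  have hpos : 0 < 2 - h * t := base_pos hh ht.1 ht.2
  have h1 : ContinuousAt (fun z : ℝ => z ^ b) (2 - h * t) :=
    Real.continuousAt_rpow_const _ b (Or.inl hpos.ne')
  have h2 : ContinuousAt (fun t : ℝ => 2 - h * t) t := by fun_prop
  exact (ContinuousAt.comp (x := t) h1 h2).continuousWithinAt

lemma auxPhi_integrand_continuousOn (a b h : ℝ) (ha : 0 ≤ a) (hh : h < 2) :
    ContinuousOn (fun t : ℝ => t ^ a * (2 - h * t) ^ b) (Set.Icc 0 1) :=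
  (continuous_rpow_const' ha).continuousOn.mul (aux_base_contOn b h hh)

noncomputable def auxPhi (a b h : ℝ) : ℝ := ∫ t in (0:ℝ)..1, t ^ a * (2 - h * t) ^ b

lemma auxPhi_hasDerivAt (a b : ℝ) (ha : 0 ≤ a) {h₀ : ℝ} (hh : h₀ < 2) :
    HasDerivAt (auxPhi a b) (-b * auxPhi (a+1) (b-1) h₀) h₀ := by
  set ε : ℝ := (2 - h₀) / 2 with hε_def
  have hε : 0 < ε := by simp only [hε_def]; linarith
  set β : ℝ := min ε 2 with hβ_def
  have hβpos : 0 < β := lt_min hε two_pos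
  set M : ℝ := 2 + |h₀| + ε with hM_def
  -- lower/upper bounds on the base
  have hlb : ∀ x ∈ Metric.ball h₀ ε, ∀ t ∈ Set.Ioc (0:ℝ) 1, β ≤ 2 - x * t := by
    intro x hx t ht
    rw [Metric.mem_ball, Real.dist_eq, abs_sub_lt_iff] at hx
    rcases le_or_gt x 0 with h' | h'
    · have : x * t ≤ 0 := mul_nonpos_iff.2 (Or.inr ⟨h', ht.1.le⟩)
      have : β ≤ 2 := min_le_right _ _
      nlinarith
    · have hxt : x * t ≤ x := by nlinarith [ht.1.le, ht.2]
      have : β ≤ ε := min_le_left _ _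
      nlinarith [hx.1]
  have hub : ∀ x ∈ Metric.ball h₀ ε, ∀ t ∈ Set.Ioc (0:ℝ) 1, 2 - x * t ≤ M := by
    intro x hx t ht
    rw [Metric.mem_ball, Real.dist_eq, abs_sub_lt_iff] at hx
    rcases le_or_gt 0 x with h' | h'
    · have : 0 ≤ x * t := mul_nonneg h' ht.1.le
      nlinarith [abs_nonneg h₀]
    · have hxt : x ≤ x * t := by nlinarith [ht.1.le, ht.2]
      nlinarith [neg_abs_le h₀, hx.2]
  -- pointwise differentiability
  have hdiff : ∀ t ∈ Set.Ioc (0:ℝ) 1, ∀ x ∈ Metric.ball h₀ ε,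
      HasDerivAt (fun x : ℝ => t ^ a * (2 - x * t) ^ b)
        (t ^ a * (b * (2 - x * t) ^ (b-1) * -t)) x := by
    intro t ht x hx
    have hb : 0 < 2 - x * t := hβpos.trans_le (hlb x hx t ht)
    have hinner : HasDerivAt (fun x : ℝ => 2 - x * t) (-t) x := by
      simpa using ((hasDerivAt_id x).mul_const t).const_sub 2
    have houter : HasDerivAt (fun z : ℝ => z ^ b) (b * (2 - x * t) ^ (b-1)) (2 - x * t) :=
      Real.hasDerivAt_rpow_const (Or.inl hb.ne')
    simpa [mul_comm, mul_assoc] using (houter.comp x hinner).const_mul (t ^ a)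
  have huIoc : Set.uIoc (0:ℝ) 1 = Set.Ioc (0:ℝ) 1 := Set.uIoc_of_le zero_le_one
  have hsub : Set.uIoc (0:ℝ) 1 ⊆ Set.Icc 0 1 := by rw [huIoc]; exact Set.Ioc_subset_Icc_self
  have hmeas : MeasurableSet (Set.uIoc (0:ℝ) 1) := measurableSet_uIoc
  have key := intervalIntegral.hasDerivAt_integral_of_dominated_loc_of_deriv_le
    (F := fun x t => t ^ a * (2 - x * t) ^ b)
    (F' := fun x t => t ^ a * (b * (2 - x * t) ^ (b-1) * -t))
    (bound := fun _ => |b| * max (β ^ (b-1)) (M ^ (b-1))) (μ := MeasureTheory.volume)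
    (a := 0) (b := 1) (Metric.ball_mem_nhds h₀ hε)
    (by filter_upwards [Iio_mem_nhds hh] with x hx
        exact ((auxPhi_integrand_continuousOn a b x ha hx).mono hsub).aestronglyMeasurable hmeas)
    ((auxPhi_integrand_continuousOn a b h₀ ha hh).intervalIntegrable_of_Icc zero_le_one)
    (by refine ContinuousOn.aestronglyMeasurable (ContinuousOn.mono ?_ hsub) hmeas
        exact (continuous_rpow_const' ha).continuousOn.mul
          ((continuousOn_const.mul (aux_base_contOn (b-1) h₀ hh)).mul
            (continuous_neg.continuousOn)))
    (by refine MeasureTheory.ae_of_all _ fun t ht x hx => ?_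
        rw [huIoc] at ht
        have hbase : 0 < 2 - x * t := hβpos.trans_le (hlb x hx t ht)
        have h1 : t ^ a ≤ 1 := Real.rpow_le_one ht.1.le ht.2 ha
        have h2 : (2 - x * t) ^ (b-1) ≤ max (β ^ (b-1)) (M ^ (b-1)) :=
          rpow_le_max hβpos (hlb x hx t ht) (hub x hx t ht)
        have e : ‖t ^ a * (b * (2 - x * t) ^ (b-1) * -t)‖
            = t ^ a * (|b| * (2 - x * t) ^ (b-1) * t) := by
          rw [Real.norm_eq_abs, abs_mul, abs_mul, abs_mul, abs_neg,
            abs_of_nonneg (Real.rpow_nonneg ht.1.le a),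
            abs_of_nonneg (Real.rpow_nonneg hbase.le (b-1)), abs_of_pos ht.1]
        rw [e]
        calc t ^ a * (|b| * (2 - x * t) ^ (b-1) * t)
            ≤ 1 * (|b| * max (β ^ (b-1)) (M ^ (b-1)) * 1) := by
              gcongr <;>
                first
                  | assumption
                  | exact Real.rpow_nonneg hbase.le _
                  | exact ht.2
                  | exact ht.1.le
                  | exact mul_nonneg (mul_nonneg (abs_nonneg b) (Real.rpow_nonneg hbase.le _)) ht.1.le
                  | positivity
          _ = |b| * max (β ^ (b-1)) (M ^ (b-1)) := by ring)
    intervalIntegrable_const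
    (by refine MeasureTheory.ae_of_all _ fun t ht x hx => ?_
        rw [huIoc] at ht
        exact hdiff t ht x hx)
  have hint_eq : (∫ t in (0:ℝ)..1, t ^ a * (b * (2 - h₀ * t) ^ (b-1) * -t))
      = -b * auxPhi (a+1) (b-1) h₀ := by
    rw [auxPhi, ← intervalIntegral.integral_const_mul]
    apply intervalIntegral.integral_congr
    intro t ht
    have ht' : 0 ≤ t ∧ t ≤ 1 := by
      rw [Set.uIcc_of_le zero_le_one, Set.mem_Icc] at ht; exact ht
    rcases eq_or_lt_of_le ht'.1 with h0 | h0
    · simp [← h0, Real.zero_rpow (by positivity : a + (1:ℝ) ≠ 0)]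
    · show t ^ a * (b * (2 - h₀ * t) ^ (b-1) * -t) = -b * (t ^ (a+1) * (2 - h₀ * t) ^ (b-1))
      rw [Real.rpow_add_one h0.ne' a]; ring
  rw [← hint_eq]
  exact key.2

lemma auxPhi_contDiffOn (m : ℕ) : ∀ (a b : ℝ), 0 ≤ a →
    ContDiffOn ℝ m (auxPhi a b) (Set.Iio 2) := by
  induction m with
  | zero =>
    intro a b ha
    rw [show ((0:ℕ) : WithTop ℕ∞) = 0 from rfl, contDiffOn_zero]
    exact fun h hh => (auxPhi_hasDerivAt a b ha hh).continuousAt.continuousWithinAt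
  | succ m ih =>
    intro a b ha
    have hcast : ((m + 1 : ℕ) : WithTop ℕ∞) = (m : WithTop ℕ∞) + 1 := by push_cast; rfl
    rw [hcast, contDiffOn_succ_iff_derivWithin (isOpen_Iio.uniqueDiffOn)]
    refine ⟨fun h hh => (auxPhi_hasDerivAt a b ha hh).differentiableAt.differentiableWithinAt,
      ?_, ?_⟩
    · intro hω; exact absurd hω (by simp)
    · refine ContDiffOn.congr ((ih (a+1) (b-1) (by linarith)).const_smul (-b)) ?_
      intro h hh
      rw [derivWithin_of_isOpen isOpen_Iio hh, (auxPhi_hasDerivAt a b ha hh).deriv]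
      simp [smul_eq_mul]

lemma integral_eq_auxPhi {q u : ℝ} (hq : 0 ≤ q) (hu : u ∈ Set.Ioo (-1:ℝ) 1) :
    (∫ s in (-1:ℝ)..u, (1 - s ^ 2) ^ q) = (1+u) ^ (q+1) * auxPhi q q (1+u) := by
  obtain ⟨hu1, hu2⟩ := hu
  have h1u : 0 < 1 + u := by linarith
  have hg : Continuous fun s : ℝ => (1 - s ^ 2) ^ q :=
    (continuous_rpow_const' hq).comp (continuous_const.sub (continuous_pow 2))
  have hsub := intervalIntegral.integral_comp_smul_deriv
    (f := fun t : ℝ => (1+u) * t - 1) (f' := fun _ => 1 + u)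
    (g := fun s : ℝ => (1 - s ^ 2) ^ q) (a := 0) (b := 1)
    (fun t _ => by simpa using ((hasDerivAt_id t).const_mul (1+u)).sub_const 1)
    continuousOn_const hg
  have hf0 : (1+u) * 0 - 1 = -1 := by ring
  have hf1 : (1+u) * 1 - 1 = u := by ring
  simp only [hf0, hf1] at hsub
  rw [← hsub, auxPhi, ← intervalIntegral.integral_const_mul]
  apply intervalIntegral.integral_congr
  intro t ht
  have ht' : 0 ≤ t ∧ t ≤ 1 := by
    rw [Set.uIcc_of_le zero_le_one, Set.mem_Icc] at ht; exact ht
  have hb1 : (0:ℝ) ≤ (1+u) * t := mul_nonneg h1u.le ht'.1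
  have hb2 : (0:ℝ) ≤ 2 - (1+u) * t := by nlinarith [ht'.2]
  show (1+u) • ((1 - ((1+u) * t - 1) ^ 2) ^ q) = (1+u) ^ (q+1) * (t ^ q * (2 - (1+u) * t) ^ q)
  have e1 : 1 - ((1+u) * t - 1) ^ 2 = ((1+u) * t) * (2 - (1+u) * t) := by ring
  rw [smul_eq_mul, e1, Real.mul_rpow hb1 hb2, Real.mul_rpow h1u.le ht'.1,
    Real.rpow_add_one h1u.ne' q]
  ring


lemma solidAngleF_eq (n : ℕ) (hn : 1 ≤ n) {u : ℝ} (hu : u ∈ Set.Ioo (-1:ℝ) 1) :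
    solidAngleF n u
      = (-1)^n * auxPhi (((n:ℝ)-1)/2) (((n:ℝ)-1)/2) (1+u) * (1-u) ^ (-(((n:ℝ)+1)/2)) := by
  obtain ⟨hu1, hu2⟩ := hu
  have h1u : 0 < 1 + u := by linarith
  have h1u' : 0 < 1 - u := by linarith
  set q : ℝ := ((n:ℝ)-1)/2 with hq_def
  have hq : 0 ≤ q := by
    have : (1:ℝ) ≤ (n:ℝ) := by exact_mod_cast hn
    simp only [hq_def]; linarith
  have hqe : ((n:ℝ)+1)/2 = q + 1 := by simp only [hq_def]; ring
  rw [solidAngleF, integral_eq_auxPhi hq ⟨hu1, hu2⟩, hqe]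
  have e1 : (1:ℝ) - u ^ 2 = (1-u) * (1+u) := by ring
  rw [e1, Real.mul_rpow h1u'.le h1u.le]
  have e2 : (1+u) ^ (-(q+1)) * (1+u) ^ (q+1) = 1 := by
    rw [← Real.rpow_add h1u, neg_add_cancel, Real.rpow_zero]
  have e3 : (1-u) ^ (-(q+1)) * ((1+u) ^ (-(q+1)) * (1+u) ^ (q+1)) = (1-u) ^ (-(q+1)) := by
    rw [e2, mul_one]
  calc (-1:ℝ) ^ n * ((1-u) ^ (-(q+1)) * (1+u) ^ (-(q+1))) * ((1+u) ^ (q+1) * auxPhi q q (1+u))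
      = (-1:ℝ) ^ n * auxPhi q q (1+u) * ((1-u) ^ (-(q+1)) * ((1+u) ^ (-(q+1)) * (1+u) ^ (q+1))) := by
        ring
    _ = (-1:ℝ) ^ n * auxPhi q q (1+u) * (1-u) ^ (-(q+1)) := by rw [e3]

noncomputable def gtil (n : ℕ) (i : Fin (n + 2)) (w : EuclideanSpace ℝ (Fin (n + 2))) : ℝ :=
  (-1)^n * auxPhi (((n:ℝ)-1)/2) (((n:ℝ)-1)/2) (1 + w (Fin.last (n+1)) / ‖w‖) *
    (1 - w (Fin.last (n+1)) / ‖w‖) ^ (-(((n:ℝ)+1)/2)) * w i / ‖w‖ ^ (n+1)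

def Vset (n : ℕ) : Set (EuclideanSpace ℝ (Fin (n + 2))) :=
  {w | w (Fin.last (n+1)) < ‖w‖}

lemma isOpen_Vset (n : ℕ) : IsOpen (Vset n) :=
  isOpen_lt (EuclideanSpace.proj (Fin.last (n+1)) : EuclideanSpace ℝ (Fin (n+2)) →L[ℝ] ℝ).continuous
    continuous_norm

lemma norm_pos_of_mem_Vset {n : ℕ} {w : EuclideanSpace ℝ (Fin (n + 2))} (hw : w ∈ Vset n) :
    0 < ‖w‖ := by
  rcases eq_or_ne w 0 with rfl | h
  · simp only [Vset, Set.mem_setOf_eq, norm_zero] at hw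
    exact absurd hw (by simp)
  · exact norm_pos_iff.mpr h

lemma abs_coord_le_norm {n : ℕ} (w : EuclideanSpace ℝ (Fin (n + 2))) (j : Fin (n+2)) :
    |w j| ≤ ‖w‖ := by
  have h := abs_real_inner_le_norm (EuclideanSpace.single j (1:ℝ)) w
  simpa [EuclideanSpace.inner_single_left, EuclideanSpace.norm_single] using h

lemma coord_eq_zero_of_last {n : ℕ} {w : EuclideanSpace ℝ (Fin (n + 2))}
    (h : w (Fin.last (n+1)) = -‖w‖) {j : Fin (n+2)} (hj : j ≠ Fin.last (n+1)) : w j = 0 := by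
  have hsum : ∑ k, w k ^ 2 = ‖w‖ ^ 2 := by
    rw [EuclideanSpace.norm_eq, Real.sq_sqrt (by positivity)]
    congr 1; funext k; rw [Real.norm_eq_abs, sq_abs]
  have hlast : w (Fin.last (n+1)) ^ 2 = ‖w‖ ^ 2 := by rw [h, neg_pow]; ring
  have herase : ∑ k ∈ Finset.univ.erase (Fin.last (n+1)), w k ^ 2 = 0 := by
    have h2 := Finset.sum_erase_add Finset.univ (fun k => w k ^ 2)
      (Finset.mem_univ (Fin.last (n+1)))
    simp only [] at h2
    rw [hlast, hsum] at h2
    linarith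
  have := (Finset.sum_eq_zero_iff_of_nonneg (fun k _ => sq_nonneg (w k))).1 herase j
    (Finset.mem_erase.2 ⟨hj, Finset.mem_univ j⟩)
  exact pow_eq_zero_iff (n := 2) (by norm_num) |>.1 this

lemma gfun_eq_gtil {n : ℕ} (hn : 1 ≤ n) {i : Fin (n+2)} (hi : i ≠ Fin.last (n+1))
    {w : EuclideanSpace ℝ (Fin (n + 2))} (hw : w ∈ Vset n) :
    solidAngleF n (w (Fin.last (n+1)) / ‖w‖) * w i / ‖w‖ ^ (n+1) = gtil n i w := by
  have hr : 0 < ‖w‖ := norm_pos_of_mem_Vset hw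
  set u : ℝ := w (Fin.last (n+1)) / ‖w‖ with hu_def
  have hu1 : -1 ≤ u := by
    rw [hu_def, le_div_iff₀ hr]
    nlinarith [abs_coord_le_norm w (Fin.last (n+1)), neg_abs_le (w (Fin.last (n+1)))]
  have hu2 : u < 1 := (div_lt_one hr).2 hw
  rcases eq_or_lt_of_le hu1 with he | hlt
  · have hwl : w (Fin.last (n+1)) = -‖w‖ := by
      have := he.symm
      rw [hu_def, div_eq_iff hr.ne'] at this
      rw [this]; ring
    have hwi : w i = 0 := coord_eq_zero_of_last hwl hi
    rw [gtil, hwi]; ring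
  · rw [solidAngleF_eq n hn ⟨hlt, hu2⟩, gtil]

lemma gtil_contDiffOn (n m : ℕ) (hn : 1 ≤ n) (i : Fin (n+2)) :
    ContDiffOn ℝ m (gtil n i) (Vset n) := by
  intro w hw
  have hr : 0 < ‖w‖ := norm_pos_of_mem_Vset hw
  have hq : (0:ℝ) ≤ ((n:ℝ)-1)/2 := by
    have : (1:ℝ) ≤ (n:ℝ) := by exact_mod_cast hn
    linarith
  have hnorm : ContDiffAt ℝ m (fun w : EuclideanSpace ℝ (Fin (n+2)) => ‖w‖) w :=
    contDiffAt_norm ℝ (norm_pos_iff.1 hr)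
  have hlast : ContDiffAt ℝ m (fun w : EuclideanSpace ℝ (Fin (n+2)) => w (Fin.last (n+1))) w :=
    (EuclideanSpace.proj (Fin.last (n+1)) :
      EuclideanSpace ℝ (Fin (n+2)) →L[ℝ] ℝ).contDiff.contDiffAt
  have hcoord : ContDiffAt ℝ m (fun w : EuclideanSpace ℝ (Fin (n+2)) => w i) w :=
    (EuclideanSpace.proj i : EuclideanSpace ℝ (Fin (n+2)) →L[ℝ] ℝ).contDiff.contDiffAt
  have hu : ContDiffAt ℝ m
      (fun w : EuclideanSpace ℝ (Fin (n+2)) => w (Fin.last (n+1)) / ‖w‖) w :=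
    hlast.div hnorm hr.ne'
  have huval1 : w (Fin.last (n+1)) / ‖w‖ < 1 := (div_lt_one hr).2 hw
  have hPhi : ContDiffAt ℝ m
      (fun w : EuclideanSpace ℝ (Fin (n+2)) =>
        auxPhi (((n:ℝ)-1)/2) (((n:ℝ)-1)/2) (1 + w (Fin.last (n+1)) / ‖w‖)) w := by
    have hA : ContDiffAt ℝ m (auxPhi (((n:ℝ)-1)/2) (((n:ℝ)-1)/2))
        (1 + w (Fin.last (n+1)) / ‖w‖) :=
      (auxPhi_contDiffOn m (((n:ℝ)-1)/2) (((n:ℝ)-1)/2) hq).contDiffAt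
        (Iio_mem_nhds (by linarith))
    exact hA.comp w (contDiffAt_const.add hu)
  have hrpow : ContDiffAt ℝ m
      (fun w : EuclideanSpace ℝ (Fin (n+2)) =>
        (1 - w (Fin.last (n+1)) / ‖w‖) ^ (-(((n:ℝ)+1)/2))) w := by
    have hne : (1 - w (Fin.last (n+1)) / ‖w‖) ≠ 0 := ne_of_gt (by linarith)
    have h1 : ContDiffAt ℝ m (fun x : ℝ => x ^ (-(((n:ℝ)+1)/2)))
        (1 - w (Fin.last (n+1)) / ‖w‖) := Real.contDiffAt_rpow_const_of_ne hne
    exact h1.comp w (contDiffAt_const.sub hu)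
  have hpow : ContDiffAt ℝ m
      (fun w : EuclideanSpace ℝ (Fin (n+2)) => ‖w‖ ^ (n+1)) w := hnorm.pow (n+1)
  exact ((((contDiffAt_const.mul hPhi).mul hrpow).mul hcoord).div hpow
    (by positivity)).contDiffWithinAt

lemma gtil_zero {n : ℕ} (i : Fin (n+2)) : gtil n i 0 = 0 := by
  simp [gtil]

lemma gtil_smul {n : ℕ} (i : Fin (n+2)) {c : ℝ} (hc : 0 < c)
    (w : EuclideanSpace ℝ (Fin (n + 2))) :
    gtil n i (c • w) = (c ^ n)⁻¹ * gtil n i w := by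
  rcases eq_or_ne w 0 with rfl | h0
  · rw [smul_zero]; simp [gtil_zero]
  have hr : 0 < ‖w‖ := norm_pos_iff.mpr h0
  have hnorm : ‖c • w‖ = c * ‖w‖ := by
    rw [norm_smul, Real.norm_eq_abs, abs_of_pos hc]
  have happ : ∀ j, (c • w) j = c * w j := fun j => rfl
  rw [gtil, gtil, hnorm, happ, happ,
    mul_div_mul_left _ _ hc.ne']
  field_simp
  ring

lemma smul_mem_Vset_iff {n : ℕ} {c : ℝ} (hc : 0 < c) (w : EuclideanSpace ℝ (Fin (n + 2))) :
    c • w ∈ Vset n ↔ w ∈ Vset n := by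
  have hnorm : ‖c • w‖ = c * ‖w‖ := by rw [norm_smul, Real.norm_eq_abs, abs_of_pos hc]
  have happ : (c • w) (Fin.last (n+1)) = c * w (Fin.last (n+1)) := rfl
  simp only [Vset, Set.mem_setOf_eq, happ, hnorm]
  exact mul_lt_mul_iff_right₀ hc

lemma iter_gtil_smul {n m : ℕ} (hn : 1 ≤ n) (i : Fin (n+2)) {c : ℝ} (hc : 0 < c)
    {w : EuclideanSpace ℝ (Fin (n + 2))} (hw : w ∈ Vset n)
    (v : Fin m → EuclideanSpace ℝ (Fin (n + 2))) :
    iteratedFDeriv ℝ m (gtil n i) (c • w) (fun j => c • v j)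
      = (c ^ n)⁻¹ • iteratedFDeriv ℝ m (gtil n i) w v := by
  let A : EuclideanSpace ℝ (Fin (n + 2)) ≃L[ℝ] EuclideanSpace ℝ (Fin (n + 2)) :=
    (LinearEquiv.smulOfNeZero ℝ (EuclideanSpace ℝ (Fin (n + 2))) c hc.ne').toContinuousLinearEquiv
  have hA : ∀ z : EuclideanSpace ℝ (Fin (n + 2)), A z = c • z := fun z => rfl
  have hpre : A ⁻¹' (Vset n) = Vset n := by
    ext z
    simp only [Set.mem_preimage, hA]
    exact smul_mem_Vset_iff hc z
  have hAw : A w ∈ Vset n := by rw [hA]; exact (smul_mem_Vset_iff hc w).2 hw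
  have hUD : UniqueDiffOn ℝ (Vset n) := (isOpen_Vset n).uniqueDiffOn
  have hkey := ContinuousLinearEquiv.iteratedFDerivWithin_comp_right A (gtil n i) hUD hAw m
  rw [hpre] at hkey
  have hcomp : gtil n i ∘ A = (c ^ n)⁻¹ • gtil n i := by
    funext z
    simp only [Function.comp_apply, hA, Pi.smul_apply, smul_eq_mul]
    exact gtil_smul i hc z
  rw [hcomp] at hkey
  have hsmul := iteratedFDerivWithin_const_smul_apply (a := (c ^ n)⁻¹)
    (gtil_contDiffOn n m hn i w hw) hUD hw
  have happ := congrArg (fun T => T v) (hkey.symm.trans hsmul)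
  simp only [ContinuousMultilinearMap.compContinuousLinearMap_apply,
    ContinuousMultilinearMap.smul_apply] at happ
  have hopen := iteratedFDerivWithin_of_isOpen (𝕜 := ℝ) (f := gtil n i) m (isOpen_Vset n)
  rw [hopen hAw, hopen hw] at happ
  have hAv : (fun j => A (v j)) = fun j => c • v j := by funext j; exact hA (v j)
  rw [hA] at happ
  rw [← hAv]
  exact happ

lemma norm_iter_gtil_smul {n m : ℕ} (hn : 1 ≤ n) (i : Fin (n+2)) {c : ℝ} (hc : 0 < c)
    {w : EuclideanSpace ℝ (Fin (n + 2))} (hw : w ∈ Vset n) :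
    ‖iteratedFDeriv ℝ m (gtil n i) (c • w)‖
      ≤ (c ^ (n+m))⁻¹ * ‖iteratedFDeriv ℝ m (gtil n i) w‖ := by
  apply ContinuousMultilinearMap.opNorm_le_bound (by positivity)
  intro v
  have hv : (fun j => c • (c⁻¹ • v j)) = v := by
    funext j; rw [smul_inv_smul₀ hc.ne']
  calc ‖iteratedFDeriv ℝ m (gtil n i) (c • w) v‖
      = ‖iteratedFDeriv ℝ m (gtil n i) (c • w) (fun j => c • (c⁻¹ • v j))‖ := by rw [hv]
    _ = ‖(c ^ n)⁻¹ • iteratedFDeriv ℝ m (gtil n i) w (fun j => c⁻¹ • v j)‖ := by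
        rw [iter_gtil_smul hn i hc hw]
    _ = (c ^ n)⁻¹ * ‖iteratedFDeriv ℝ m (gtil n i) w (fun j => c⁻¹ • v j)‖ := by
        rw [norm_smul, Real.norm_eq_abs, abs_of_pos (by positivity)]
    _ ≤ (c ^ n)⁻¹ * (‖iteratedFDeriv ℝ m (gtil n i) w‖ * ∏ j, ‖c⁻¹ • v j‖) :=
        mul_le_mul_of_nonneg_left
          ((iteratedFDeriv ℝ m (gtil n i) w).le_opNorm _) (by positivity)
    _ = (c ^ (n+m))⁻¹ * ‖iteratedFDeriv ℝ m (gtil n i) w‖ * ∏ j, ‖v j‖ := by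
        have : ∀ j : Fin m, ‖c⁻¹ • v j‖ = c⁻¹ * ‖v j‖ := fun j => by
          rw [norm_smul, Real.norm_eq_abs, abs_of_pos (by positivity)]
        simp only [this]
        rw [Finset.prod_mul_distrib, Finset.prod_const]
        simp only [Finset.card_univ, Fintype.card_fin]
        rw [pow_add]
        field_simp
        have hcm : (1 / c) ^ m * c ^ m = 1 := by rw [← mul_pow, one_div, inv_mul_cancel₀ hc.ne', one_pow]
        linear_combination (‖iteratedFDeriv ℝ m (gtil n i) w‖ * ∏ x, ‖v x‖) * hcm

lemma cone_bound (n m : ℕ) (hn : 1 ≤ n) (D : ℝ) (hD : D < 1) (i : Fin (n+2)) :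
    ∃ C : ℝ, 0 < C ∧ ∀ w : EuclideanSpace ℝ (Fin (n + 2)), w ≠ 0 →
      w (Fin.last (n+1)) ≤ D * ‖w‖ →
      ‖iteratedFDeriv ℝ m (gtil n i) w‖ ≤ C / ‖w‖ ^ (n+m) := by
  classical
  set K : Set (EuclideanSpace ℝ (Fin (n + 2))) :=
    Metric.sphere (0 : EuclideanSpace ℝ (Fin (n + 2))) 1 ∩
      {w | w (Fin.last (n+1)) ≤ D} with hK_def
  have hKc : IsCompact K :=
    (isCompact_sphere (0 : EuclideanSpace ℝ (Fin (n + 2))) 1).inter_right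
    (isClosed_le (EuclideanSpace.proj (Fin.last (n+1)) :
      EuclideanSpace ℝ (Fin (n+2)) →L[ℝ] ℝ).continuous continuous_const)
  have hKV : K ⊆ Vset n := by
    rintro w ⟨hw1, hw2⟩
    have : ‖w‖ = 1 := by rwa [mem_sphere_zero_iff_norm] at hw1
    simp only [Vset, Set.mem_setOf_eq, this]
    exact lt_of_le_of_lt hw2 hD
  have hcont : ContinuousOn (iteratedFDeriv ℝ m (gtil n i)) (Vset n) := by
    have h1 := (gtil_contDiffOn n m hn i).continuousOn_iteratedFDerivWithin
      (le_refl (m : WithTop ℕ∞)) (isOpen_Vset n).uniqueDiffOn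
    exact h1.congr fun w hw =>
      (iteratedFDerivWithin_of_isOpen (𝕜 := ℝ) (f := gtil n i) m (isOpen_Vset n) hw).symm
  obtain ⟨C, hC⟩ := hKc.exists_bound_of_continuousOn (hcont.mono hKV)
  refine ⟨max C 1, lt_of_lt_of_le one_pos (le_max_right _ _), ?_⟩
  intro w hw0 hwD
  have hr : 0 < ‖w‖ := norm_pos_iff.mpr hw0
  set what : EuclideanSpace ℝ (Fin (n + 2)) := ‖w‖⁻¹ • w with hwhat_def
  have hwhatnorm : ‖what‖ = 1 := norm_smul_inv_norm hw0
  have hwhatK : what ∈ K := by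
    constructor
    · rwa [mem_sphere_zero_iff_norm]
    · show what (Fin.last (n+1)) ≤ D
      have happ : what (Fin.last (n+1)) = ‖w‖⁻¹ * w (Fin.last (n+1)) := rfl
      rw [happ]
      calc ‖w‖⁻¹ * w (Fin.last (n+1)) ≤ ‖w‖⁻¹ * (D * ‖w‖) :=
            mul_le_mul_of_nonneg_left hwD (by positivity)
          _ = D := by field_simp
  have hwhatV : what ∈ Vset n := hKV hwhatK
  have hw_eq : w = ‖w‖ • what := (smul_inv_smul₀ hr.ne' w).symm
  calc ‖iteratedFDeriv ℝ m (gtil n i) w‖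
      = ‖iteratedFDeriv ℝ m (gtil n i) (‖w‖ • what)‖ := by rw [← hw_eq]
    _ ≤ (‖w‖ ^ (n+m))⁻¹ * ‖iteratedFDeriv ℝ m (gtil n i) what‖ :=
        norm_iter_gtil_smul hn i hr hwhatV
    _ ≤ (‖w‖ ^ (n+m))⁻¹ * (max C 1) :=
        mul_le_mul_of_nonneg_left ((hC what hwhatK).trans (le_max_left _ _)) (by positivity)
    _ = max C 1 / ‖w‖ ^ (n+m) := by rw [inv_mul_eq_div]

section Translation
variable {E F : Type*} [NormedAddCommGroup E] [NormedSpace ℝ E]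
  [NormedAddCommGroup F] [NormedSpace ℝ F]

lemma fderiv_comp_add_right' (f : E → F) (a x : E) :
    fderiv ℝ (fun z => f (z + a)) x = fderiv ℝ f (x + a) := by
  by_cases hd : DifferentiableAt ℝ f (x + a)
  · have h1 : HasFDerivAt (fun z => f (z + a)) (fderiv ℝ f (x + a)) x := by
      have := hd.hasFDerivAt.comp x ((hasFDerivAt_id x).add_const a)
      simpa [Function.comp_def] using this
    exact h1.fderiv
  · rw [fderiv_zero_of_not_differentiableAt hd, fderiv_zero_of_not_differentiableAt]
    intro hd'
    apply hd
    have hd'' : DifferentiableAt ℝ (fun z => f (z + a)) (x + a - a) := by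
      rwa [add_sub_cancel_right]
    have h2 : DifferentiableAt ℝ (fun z => f (z - a + a)) (x + a) :=
      hd''.comp (x + a) (f := fun z : E => z - a) ((differentiable_id.sub_const a).differentiableAt)
    have h3 : (fun z => f (z - a + a)) = f := by funext z; rw [sub_add_cancel]
    rwa [h3] at h2

lemma iteratedFDeriv_comp_add_right'' (k : ℕ) (f : E → F) (a : E) : ∀ x : E,
    iteratedFDeriv ℝ k (fun z => f (z + a)) x = iteratedFDeriv ℝ k f (x + a) := by
  induction k with
  | zero => intro x; ext v; simp
  | succ k ih =>
    intro x
    ext v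
    rw [iteratedFDeriv_succ_apply_left, iteratedFDeriv_succ_apply_left]
    have hfun : (iteratedFDeriv ℝ k fun z => f (z + a))
        = fun z => iteratedFDeriv ℝ k f (z + a) := funext ih
    rw [hfun, fderiv_comp_add_right' (iteratedFDeriv ℝ k f) a x]

end Translation

theorem secPullbackCoeff_deriv_bound' (n m : ℕ) (hn : 1 ≤ n) (D : ℝ) (hD : D < 1) :
    ∃ C : ℝ, 0 < C ∧ ∀ i : Fin (n + 2), (i : ℕ) < n + 1 →
      ∀ x y : EuclideanSpace ℝ (Fin (n + 2)), x ≠ y →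
        y (Fin.last (n + 1)) - x (Fin.last (n + 1)) ≤ D * ‖y - x‖ →
        ∀ v : Fin m → Fin (n + 2),
          |iteratedFDeriv ℝ m (fun x' =>
              (solidAngleF n ((y (Fin.last (n + 1)) - x' (Fin.last (n + 1))) / ‖y - x'‖) *
              (y i - x' i) / ‖y - x'‖ ^ (n + 1))) x
              (fun j => EuclideanSpace.single (v j) (1 : ℝ))| ≤
            C / ‖y - x‖ ^ (n + m) := by
  classical
  have hCs : ∀ i : Fin (n+2), ∃ C : ℝ, 0 < C ∧
      ∀ w : EuclideanSpace ℝ (Fin (n + 2)), w ≠ 0 →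
      w (Fin.last (n+1)) ≤ D * ‖w‖ →
      ‖iteratedFDeriv ℝ m (gtil n i) w‖ ≤ C / ‖w‖ ^ (n+m) :=
    fun i => cone_bound n m hn D hD i
  choose Cf hCf0 hCf using hCs
  refine ⟨∑ i, Cf i, Finset.sum_pos (fun i _ => hCf0 i) Finset.univ_nonempty, ?_⟩
  intro i hi x y hxy hcone v
  set w : EuclideanSpace ℝ (Fin (n + 2)) := y - x with hw_def
  have hw0 : w ≠ 0 := sub_ne_zero.mpr (Ne.symm hxy)
  have hr : 0 < ‖w‖ := norm_pos_iff.mpr hw0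
  have hwl : w (Fin.last (n+1)) = y (Fin.last (n+1)) - x (Fin.last (n+1)) := rfl
  have hwD : w (Fin.last (n+1)) ≤ D * ‖w‖ := by rw [hwl]; exact hcone
  have hwV : w ∈ Vset n := by
    simp only [Vset, Set.mem_setOf_eq]
    calc w (Fin.last (n+1)) ≤ D * ‖w‖ := hwD
      _ < 1 * ‖w‖ := by exact mul_lt_mul_of_pos_right hD hr
      _ = ‖w‖ := one_mul _
  have hilast : i ≠ Fin.last (n+1) := by
    intro h
    rw [h] at hi
    simp at hi
  -- step A: replace by gtil ∘ (y - ·) near x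
  have hO : IsOpen {x' : EuclideanSpace ℝ (Fin (n + 2)) | y - x' ∈ Vset n} :=
    (isOpen_Vset n).preimage (continuous_const.sub continuous_id)
  have hmemO : x ∈ {x' : EuclideanSpace ℝ (Fin (n + 2)) | y - x' ∈ Vset n} := hwV
  have hEq : (fun x' => (solidAngleF n
        ((y (Fin.last (n + 1)) - x' (Fin.last (n + 1))) / ‖y - x'‖) *
        (y i - x' i) / ‖y - x'‖ ^ (n + 1)))
      =ᶠ[nhds x] (fun x' => gtil n i (y - x')) := by
    filter_upwards [hO.mem_nhds hmemO] with x' hx'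
    have e1 : (y - x') (Fin.last (n+1)) = y (Fin.last (n+1)) - x' (Fin.last (n+1)) := rfl
    have e2 : (y - x') i = y i - x' i := rfl
    rw [← e1, ← e2, gfun_eq_gtil hn hilast hx']
  have hiter_eq : iteratedFDeriv ℝ m (fun x' => (solidAngleF n
        ((y (Fin.last (n + 1)) - x' (Fin.last (n + 1))) / ‖y - x'‖) *
        (y i - x' i) / ‖y - x'‖ ^ (n + 1))) x
      = iteratedFDeriv ℝ m (fun x' => gtil n i (y - x')) x := by
    rw [← iteratedFDerivWithin_univ, ← iteratedFDerivWithin_univ]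
    apply Filter.EventuallyEq.iteratedFDerivWithin_eq
    · rw [nhdsWithin_univ]; exact hEq
    · exact hEq.self_of_nhds
  -- step B: translation and negation
  have hB : (fun x' : EuclideanSpace ℝ (Fin (n + 2)) => gtil n i (y - x'))
      = fun x' => (gtil n i ∘ (LinearIsometryEquiv.neg ℝ
          (E := EuclideanSpace ℝ (Fin (n + 2))))) (x' + (-y)) := by
    funext x'
    simp only [Function.comp_apply, LinearIsometryEquiv.coe_neg]
    congr 1
    abel
  have hnormeq : ‖iteratedFDeriv ℝ m (fun x' => gtil n i (y - x')) x‖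
      = ‖iteratedFDeriv ℝ m (gtil n i) w‖ := by
    rw [hB, iteratedFDeriv_comp_add_right'' m _ (-y) x,
      LinearIsometryEquiv.norm_iteratedFDeriv_comp_right]
    congr 2
    show -(x + -y) = w
    rw [hw_def]
    abel
  have hprod : (∏ j : Fin m, ‖EuclideanSpace.single (v j) (1:ℝ)‖) = 1 := by
    apply Finset.prod_eq_one
    intro j _
    rw [EuclideanSpace.norm_single]
    exact norm_one
  calc |iteratedFDeriv ℝ m (fun x' => (solidAngleF n
        ((y (Fin.last (n + 1)) - x' (Fin.last (n + 1))) / ‖y - x'‖) *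
        (y i - x' i) / ‖y - x'‖ ^ (n + 1))) x (fun j => EuclideanSpace.single (v j) (1:ℝ))|
      = ‖iteratedFDeriv ℝ m (fun x' => gtil n i (y - x')) x
          (fun j => EuclideanSpace.single (v j) (1:ℝ))‖ := by
        rw [← Real.norm_eq_abs, hiter_eq]
    _ ≤ ‖iteratedFDeriv ℝ m (fun x' => gtil n i (y - x')) x‖ *
          ∏ j : Fin m, ‖EuclideanSpace.single (v j) (1:ℝ)‖ :=
        ContinuousMultilinearMap.le_opNorm _ _
    _ = ‖iteratedFDeriv ℝ m (gtil n i) w‖ := by rw [hprod, mul_one, hnormeq]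
    _ ≤ Cf i / ‖w‖ ^ (n+m) := hCf i w hw0 hwD
    _ ≤ (∑ i, Cf i) / ‖w‖ ^ (n+m) := by
        apply div_le_div_of_nonneg_right ?_ (by positivity)
        · exact Finset.single_le_sum (fun j _ => (hCf0 j).le) (Finset.mem_univ i)
    _ = (∑ i, Cf i) / ‖y - x‖ ^ (n+m) := rfl


/-- For every `n ≥ 1`, `m ≥ 0` and `D < 1` there is `C > 0` such that for every
`i ∈ {1,…,n+1}`, every order-`m` partial derivative in the `x`-variables (encoded by
the `m`-th iterated Fréchet derivative in `x` applied to an arbitrary tuple of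
standard basis vectors), and all `x ≠ y` with `y_{n+2} − x_{n+2} ≤ D·‖y − x‖`, one has
`|∂_x^α F_i(x,y)| ≤ C·‖y − x‖^{−(n+m)}`. -/
theorem secPullbackCoeff_deriv_bound (n m : ℕ) (hn : 1 ≤ n) (D : ℝ) (hD : D < 1) :
    ∃ C : ℝ, 0 < C ∧ ∀ i : Fin (n + 2), (i : ℕ) < n + 1 →
      ∀ x y : EuclideanSpace ℝ (Fin (n + 2)), x ≠ y →
        y (Fin.last (n + 1)) - x (Fin.last (n + 1)) ≤ D * ‖y - x‖ →
        ∀ v : Fin m → Fin (n + 2),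
          |iteratedFDeriv ℝ m (fun x' => secPullbackCoeff n i x' y) x
              (fun j => EuclideanSpace.single (v j) (1 : ℝ))| ≤
            C / ‖y - x‖ ^ (n + m) := by
  obtain ⟨C, hC0, hC⟩ := secPullbackCoeff_deriv_bound' n m hn D hD
  exact ⟨C, hC0, fun i hi x y hxy hc v => hC i hi x y hxy hc v⟩
end

section
/- Let n ≥ 1, α ∈ (1/2, 1), C₂ > 0, and let ε > 0 satisfy ε^α ≤ 1/(4C₂), 2ε ≤ ε^α, and ε^{2α−1} ≤ 1/(32 C₂). Let B′ ⊆ ℝⁿ be an open set containing 0 which is star-shaped about 0, and let Ψ : B′ → ℝ^{n+2} be twice continuously differentiable with Ψ(0) = 0, with DΨ(0) equal to the canonical isometric inclusion w ↦ (w, 0, 0) of ℝⁿ into ℝ^{n+2}, and with ‖D²Ψ(w)‖ ≤ C₂ for every w ∈ B′. Let x ∈ ℝ^{n+2} satisfy ‖x‖ = ε and ‖Ψ(w) − x‖ ≤ ε^α for every w ∈ B′. Then every w ∈ B′ satisfies ‖w‖ < 2ε^α; in particular B′ is contained in the ball of radius 2ε^α about the origin. -/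
open Metric

/-- **(Lemma on the size of the parametrizing domain.)**
Let `α ∈ (1/2, 1)`, `C₂ > 0`, and `ε > 0` with `ε^α ≤ 1/(4C₂)`, `2ε ≤ ε^α` and
`ε^{2α−1} ≤ 1/(32C₂)`. Let `B′ ⊆ ℝⁿ` be open, containing `0`, star-shaped about `0`,
and let `Ψ : ℝⁿ → ℝ^{n+2}` be `C²` on `B′` with `Ψ(0) = 0`, `DΨ(0)` the canonical
inclusion `w ↦ (w,0,0)`, and `‖D²Ψ(w)‖ ≤ C₂` on `B′`. If `‖x‖ = ε` and
`‖Ψ(w) − x‖ ≤ ε^α` for all `w ∈ B′`, then every `w ∈ B′` satisfies `‖w‖ < 2ε^α`. -/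
theorem starShaped_domain_small (n : ℕ) (hn : 1 ≤ n) (α C₂ ε : ℝ)
    (hα : α ∈ Set.Ioo (1 / 2 : ℝ) 1) (hC₂ : 0 < C₂) (hε : 0 < ε)
    (hε1 : ε ^ α ≤ 1 / (4 * C₂)) (hε2 : 2 * ε ≤ ε ^ α)
    (hε3 : ε ^ (2 * α - 1) ≤ 1 / (32 * C₂))
    (B' : Set (EuclideanSpace ℝ (Fin n))) (hB'open : IsOpen B') (h0B : (0 : _) ∈ B')
    (hstar : ∀ w ∈ B', ∀ t : ℝ, t ∈ Set.Icc (0 : ℝ) 1 → t • w ∈ B')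
    (Ψ : EuclideanSpace ℝ (Fin n) → EuclideanSpace ℝ (Fin (n + 2)))
    (hΨ : ContDiffOn ℝ 2 Ψ B') (hΨ0 : Ψ 0 = 0)
    (hDΨ0 : ∀ (w : EuclideanSpace ℝ (Fin n)) (i : Fin (n + 2)),
      fderivWithin ℝ Ψ B' 0 w i = if h : (i : ℕ) < n then w ⟨(i : ℕ), h⟩ else 0)
    (hD2Ψ : ∀ w ∈ B', ‖iteratedFDerivWithin ℝ 2 Ψ B' w‖ ≤ C₂)
    (x : EuclideanSpace ℝ (Fin (n + 2))) (hx : ‖x‖ = ε)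
    (hΨB : ∀ w ∈ B', ‖Ψ w - x‖ ≤ ε ^ α) :
    ∀ w ∈ B', ‖w‖ < 2 * ε ^ α := by
  by_contra hcon
  push_neg at hcon
  obtain ⟨w, hwB, hw⟩ := hcon
  have hεα : 0 < ε ^ α := Real.rpow_pos_of_pos hε α
  have hwpos : 0 < ‖w‖ := lt_of_lt_of_le (by positivity) hw
  set t : ℝ := 2 * ε ^ α / ‖w‖ with ht
  have ht0 : 0 ≤ t := by positivity
  have ht1 : t ≤ 1 := by rw [ht, div_le_one hwpos]; exact hw
  set u := t • w with hu
  have huB : u ∈ B' := hstar w hwB t ⟨ht0, ht1⟩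
  have hnu : ‖u‖ = 2 * ε ^ α := by
    rw [hu, norm_smul, Real.norm_eq_abs, abs_of_nonneg ht0, ht,
      div_mul_cancel₀ _ hwpos.ne']
  -- the segment from 0 to u lies in B'
  have hseg : segment ℝ (0 : EuclideanSpace ℝ (Fin n)) u ⊆ B' := by
    rw [segment_eq_image]
    rintro v ⟨θ, hθ, rfl⟩
    simp only [smul_zero, zero_add]
    rw [hu, smul_smul]
    refine hstar w hwB (θ * t) ⟨mul_nonneg hθ.1 ht0, mul_le_one₀ hθ.2 ht0 ht1⟩
  -- norms on the segment
  have hnorm_seg : ∀ a : EuclideanSpace ℝ (Fin n), ∀ z ∈ segment ℝ (0 : EuclideanSpace ℝ (Fin n)) a, ‖z‖ ≤ ‖a‖ := by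
    intro a z hz
    have h1 : segment ℝ (0 : EuclideanSpace ℝ (Fin n)) a ⊆ closedBall 0 ‖a‖ :=
      (convex_closedBall (0 : EuclideanSpace ℝ (Fin n)) ‖a‖).segment_subset
        (mem_closedBall_self (norm_nonneg a)) (mem_closedBall_zero_iff.mpr le_rfl)
    exact mem_closedBall_zero_iff.mp (h1 hz)
  -- differentiability facts
  have hΨdiff : ∀ v ∈ B', HasFDerivAt Ψ (fderiv ℝ Ψ v) v := by
    intro v hv
    exact ((hΨ.differentiableOn (by norm_num)).differentiableAt
      (hB'open.mem_nhds hv)).hasFDerivAt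
  have hFdiff : ∀ v ∈ B', HasFDerivAt (fderiv ℝ Ψ) (fderiv ℝ (fderiv ℝ Ψ) v) v := by
    intro v hv
    have h1 : ContDiffOn ℝ 1 (fderiv ℝ Ψ) B' := hΨ.fderiv_of_isOpen hB'open (by norm_num)
    exact ((h1.differentiableOn (by norm_num)).differentiableAt (hB'open.mem_nhds hv)).hasFDerivAt
  -- bound on the second derivative
  have hbound : ∀ v ∈ B', ‖fderiv ℝ (fderiv ℝ Ψ) v‖ ≤ C₂ := by
    intro v hv
    have h0 : ‖iteratedFDeriv ℝ 0 (fderiv ℝ (fderiv ℝ Ψ)) v‖ =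
        ‖fderiv ℝ (fderiv ℝ Ψ) v‖ := norm_iteratedFDeriv_zero
    have h1 : ‖fderiv ℝ (fderiv ℝ Ψ) v‖ = ‖iteratedFDeriv ℝ 2 Ψ v‖ := by
      rw [← h0, norm_iteratedFDeriv_fderiv, norm_iteratedFDeriv_fderiv]
    rw [h1, ← iteratedFDerivWithin_of_isOpen 2 hB'open hv]
    exact hD2Ψ v hv
  -- Lipschitz bound for the derivative on the segment
  have key1 : ∀ v ∈ segment ℝ (0 : EuclideanSpace ℝ (Fin n)) u,
      ‖fderiv ℝ Ψ v - fderiv ℝ Ψ 0‖ ≤ C₂ * ‖v‖ := by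
    intro v hv
    have hsub : segment ℝ (0 : EuclideanSpace ℝ (Fin n)) v ⊆
        segment ℝ (0 : EuclideanSpace ℝ (Fin n)) u :=
      (convex_segment _ _).segment_subset (left_mem_segment ℝ 0 u) hv
    have := Convex.norm_image_sub_le_of_norm_hasFDerivWithin_le
      (f := fderiv ℝ Ψ) (f' := fun z => fderiv ℝ (fderiv ℝ Ψ) z)
      (s := segment ℝ (0 : EuclideanSpace ℝ (Fin n)) v) (C := C₂)
      (fun z hz => (hFdiff z (hseg (hsub hz))).hasFDerivWithinAt)
      (fun z hz => hbound z (hseg (hsub hz)))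
      (convex_segment _ _) (left_mem_segment ℝ 0 v) (right_mem_segment ℝ 0 v)
    simpa using this
  -- Taylor estimate
  have key2 : ‖Ψ u - fderiv ℝ Ψ 0 u‖ ≤ C₂ * ‖u‖ * ‖u‖ := by
    have := Convex.norm_image_sub_le_of_norm_hasFDerivWithin_le
      (f := fun z => Ψ z - fderiv ℝ Ψ 0 z)
      (f' := fun z => fderiv ℝ Ψ z - fderiv ℝ Ψ 0)
      (s := segment ℝ (0 : EuclideanSpace ℝ (Fin n)) u) (C := C₂ * ‖u‖)
      (fun z hz => ((hΨdiff z (hseg hz)).sub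
        ((fderiv ℝ Ψ 0).hasFDerivAt)).hasFDerivWithinAt)
      (fun z hz => le_trans (key1 z hz)
        (by have := hnorm_seg u z hz; nlinarith [norm_nonneg z]))
      (convex_segment _ _) (left_mem_segment ℝ 0 u) (right_mem_segment ℝ 0 u)
    simpa [hΨ0] using this
  -- the derivative at 0 is an isometric inclusion
  have hnormL : ‖fderiv ℝ Ψ 0 u‖ = ‖u‖ := by
    have hL : ∀ i : Fin (n + 2), fderiv ℝ Ψ 0 u i =
        if h : (i : ℕ) < n then u ⟨(i : ℕ), h⟩ else 0 := by
      intro i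
      rw [← fderivWithin_of_isOpen hB'open h0B]
      exact hDΨ0 u i
    rw [EuclideanSpace.norm_eq, EuclideanSpace.norm_eq]
    congr 1
    have h1 : ∀ i : Fin (n + 2), ‖fderiv ℝ Ψ 0 u i‖ ^ 2 =
        (fun j : ℕ => if h : j < n then ‖u ⟨j, h⟩‖ ^ 2 else 0) (i : ℕ) := by
      intro i
      by_cases h : (i : ℕ) < n <;> simp [h, hL i]
    rw [Finset.sum_congr rfl (fun i _ => h1 i),
      Fin.sum_univ_eq_sum_range (fun j => if h : j < n then ‖u ⟨j, h⟩‖ ^ 2 else 0) (n + 2),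
      Finset.sum_range_succ, Finset.sum_range_succ, dif_neg (by omega), dif_neg (by omega),
      add_zero, add_zero,
      ← Fin.sum_univ_eq_sum_range (fun j => if h : j < n then ‖u ⟨j, h⟩‖ ^ 2 else 0) n]
    exact Finset.sum_congr rfl (fun i _ => by rw [dif_pos i.isLt])
  -- put everything together
  have hmain : ‖u‖ ≤ C₂ * ‖u‖ * ‖u‖ + ε ^ α + ε := by
    calc ‖u‖ = ‖fderiv ℝ Ψ 0 u‖ := hnormL.symm
      _ = ‖(fderiv ℝ Ψ 0 u - Ψ u) + (Ψ u - x) + x‖ := by congr 1; abel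
      _ ≤ ‖fderiv ℝ Ψ 0 u - Ψ u‖ + ‖Ψ u - x‖ + ‖x‖ := norm_add₃_le
      _ = ‖Ψ u - fderiv ℝ Ψ 0 u‖ + ‖Ψ u - x‖ + ‖x‖ := by rw [norm_sub_rev]
      _ ≤ C₂ * ‖u‖ * ‖u‖ + ε ^ α + ε := by
          rw [hx]; gcongr <;> first | exact key2 | exact hΨB u huB
  -- final arithmetic
  have hpow : ε ^ α * ε ^ α = ε ^ (2 * α - 1) * ε := by
    calc ε ^ α * ε ^ α = ε ^ (α + α) := (Real.rpow_add hε α α).symm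
      _ = ε ^ (2 * α - 1 + 1) := by ring_nf
      _ = ε ^ (2 * α - 1) * ε ^ (1 : ℝ) := Real.rpow_add hε _ _
      _ = ε ^ (2 * α - 1) * ε := by rw [Real.rpow_one]
  have h8 : C₂ * (ε ^ (2 * α - 1) * ε) ≤ ε / 32 := by
    calc C₂ * (ε ^ (2 * α - 1) * ε) ≤ C₂ * (1 / (32 * C₂) * ε) := by
          gcongr
      _ = ε / 32 := by field_simp
  rw [hnu] at hmain
  have h9 : C₂ * (2 * ε ^ α) * (2 * ε ^ α) = 4 * (C₂ * (ε ^ (2 * α - 1) * ε)) := by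
    rw [← hpow]; ring
  have h10 : C₂ * (2 * ε ^ α) * (2 * ε ^ α) ≤ ε / 8 := by
    rw [h9]; linarith
  linarith
end
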